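/- arXiv:0901.1389 — 3 statements merged into one kernel-verified Lean document; each statement's English description precedes it below -/
import Mathlib

section
/- Let Γ be a finite connected graph without separating edges, equipped with an orientation. The following are equivalent: (a) the orientation is totally cyclic; (b) for any two distinct vertices v, w there is a directed path from w to v; (c) H₁(Γ,ℤ) has a basis consisting of classes of cyclically oriented cycles; (d) every edge of Γ is contained in a cyclically oriented cycle (i.e. a directed cycle). -/
/-! Basic theory of finite multigraphs (loops and multiple edges allowed),
following Caporaso–Viviani, "Torelli theorem for graphs and tropical curves". -/

noncomputable section

open scoped Classical

/-- A finite multigraph: finite types of vertices and edges, each edge having two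
(possibly equal) endpoints `fst e` and `snd e`. -/
structure Multigraph where
  V : Type
  E : Type
  [fintV : Fintype V]
  [fintE : Fintype E]
  fst : E → V
  snd : E → V

namespace Multigraph

attribute [instance] Multigraph.fintV Multigraph.fintE

variable (G : Multigraph)

/-- Two vertices are adjacent if some edge joins them. -/
def Adj (v w : G.V) : Prop :=
  ∃ e : G.E, (G.fst e = v ∧ G.snd e = w) ∨ (G.fst e = w ∧ G.snd e = v)

/-- Reachability by walks. -/
def Reachable (v w : G.V) : Prop := Relation.ReflTransGen G.Adj v w

def Preconnected : Prop := ∀ v w : G.V, G.Reachable v w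

def Connected : Prop := Nonempty G.V ∧ G.Preconnected

/-- The number of connected components. -/
def numComponents : ℕ := Nat.card (Quot G.Adj)

/-- The first Betti number `b₁ = c - #V + #E`. -/
def b1 : ℤ := (G.numComponents : ℤ) + (Nat.card G.E : ℤ) - (Nat.card G.V : ℤ)

/-- The spanning subgraph `Γ∖S` obtained by deleting the edges in `S`. -/
def deleteEdges (S : Set G.E) : Multigraph :=
  { V := G.V
    E := {e : G.E // e ∉ S}
    fst := fun e => G.fst e.1
    snd := fun e => G.snd e.1
    fintV := G.fintV
    fintE := Fintype.ofFinite _ }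

/-- The subgraph spanned by a set of edges: its vertices are the incident vertices. -/
def restrict (S : Set G.E) : Multigraph :=
  { V := {v : G.V // ∃ e ∈ S, G.fst e = v ∨ G.snd e = v}
    E := ↥S
    fst := fun e => ⟨G.fst e.1, e.1, e.2, Or.inl rfl⟩
    snd := fun e => ⟨G.snd e.1, e.1, e.2, Or.inr rfl⟩
    fintV := Fintype.ofFinite _
    fintE := Fintype.ofFinite _ }

/-- The graph `Γ(S)` obtained by contracting all the edges *not* in `S`; its vertices
are the connected components of `Γ∖S` and its edges are the elements of `S`. -/
def contractCompl (S : Set G.E) : Multigraph :=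
  { V := Quot (G.deleteEdges S).Adj
    E := ↥S
    fst := fun e => Quot.mk _ (G.fst e.1)
    snd := fun e => Quot.mk _ (G.snd e.1)
    fintV := Fintype.ofFinite _
    fintE := Fintype.ofFinite _ }

/-- An edge is separating if its endpoints are no longer joined after deleting it. -/
def IsSeparating (e : G.E) : Prop :=
  ¬ (G.deleteEdges {e}).Reachable (G.fst e) (G.snd e)

/-- The set of separating edges. -/
def sepEdges : Set G.E := {e | G.IsSeparating e}

/-- The graph with its isolated vertices removed. -/
def core : Multigraph := G.restrict Set.univ

/-- A cycle: a connected graph, free from separating edges, with `b₁ = 1`. -/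
def IsCycleGraph : Prop := G.Connected ∧ G.sepEdges = ∅ ∧ G.b1 = 1

/-- `S` is (the edge set of) a cycle subgraph of `G`. -/
def IsCycleSet (S : Set G.E) : Prop := (G.restrict S).IsCycleGraph

/-- `S` is a C1-set of `G`: writing `Γ̃ = Γ∖E(Γ)_sep`, the set `S` consists of
non-separating edges, the contraction `Γ̃(S)` (with isolated vertices removed) is a
cycle, and `Γ̃∖S` has no separating edges.  (Equivalently, `S` is a C1-set of the
connected component of `Γ̃` containing it.) -/
def IsC1 (S : Set G.E) : Prop :=
  (∀ e ∈ S, ¬ G.IsSeparating e) ∧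
  (((G.deleteEdges G.sepEdges).contractCompl {e | e.1 ∈ S}).core).IsCycleGraph ∧
  ((G.deleteEdges G.sepEdges).deleteEdges {e | e.1 ∈ S}).sepEdges = ∅

/-! ### Orientations -/

/-- An orientation is encoded by a map `E → Bool`; `src` is the source of an edge. -/
def src (o : G.E → Bool) (e : G.E) : G.V := if o e then G.fst e else G.snd e

/-- The target of an edge under the orientation `o`. -/
def tgt (o : G.E → Bool) (e : G.E) : G.V := if o e then G.snd e else G.fst e

/-- An orientation is totally cyclic if there is no nonempty set of vertices `W`,
whose complement meets the component of a vertex of `W`, such that all edges between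
`W` and its complement go in the same direction. -/
def IsTotallyCyclic (o : G.E → Bool) : Prop :=
  ∀ W : Set G.V, W.Nonempty →
    (∃ v ∈ W, ∃ w, w ∉ W ∧ G.Reachable v w) →
    (∃ e, G.src o e ∈ W ∧ G.tgt o e ∉ W) ∧ (∃ e, G.tgt o e ∈ W ∧ G.src o e ∉ W)

/-- Directed reachability with respect to an orientation. -/
def DReachable (o : G.E → Bool) (v w : G.V) : Prop :=
  Relation.ReflTransGen (fun a b => ∃ e, G.src o e = a ∧ G.tgt o e = b) v w

/-! ### Homology -/

/-- Incidence of an oriented edge on a vertex: `(tgt e = v) - (src e = v)`. -/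
def inc (o : G.E → Bool) (e : G.E) (v : G.V) : ℤ :=
  (if G.tgt o e = v then 1 else 0) - (if G.src o e = v then 1 else 0)

/-- `H₁(Γ,ℤ)`: the kernel of the boundary map `C₁(Γ,ℤ) → C₀(Γ,ℤ)`. -/
def cycleSpace (o : G.E → Bool) : Submodule ℤ (G.E → ℤ) where
  carrier := {f | ∀ v, ∑ e, f e * G.inc o e v = 0}
  zero_mem' := by intro v; simp
  add_mem' := by
    intro f g hf hg v
    simp only [Set.mem_setOf_eq] at hf hg
    simp [add_mul, Finset.sum_add_distrib, hf v, hg v]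
  smul_mem' := by
    intro c f hf v
    simp only [Set.mem_setOf_eq] at hf
    simp [smul_eq_mul, mul_assoc, ← Finset.mul_sum, hf v]

/-- Real incidence. -/
def incR (o : G.E → Bool) (e : G.E) (v : G.V) : ℝ := (G.inc o e v : ℝ)

/-- `H₁(Γ,ℝ)`: the kernel of the boundary map `C₁(Γ,ℝ) → C₀(Γ,ℝ)`. -/
def cycleSpaceR (o : G.E → Bool) : Submodule ℝ (G.E → ℝ) where
  carrier := {f | ∀ v, ∑ e, f e * G.incR o e v = 0}
  zero_mem' := by intro v; simp
  add_mem' := by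
    intro f g hf hg v
    simp only [Set.mem_setOf_eq] at hf hg
    simp [add_mul, Finset.sum_add_distrib, hf v, hg v]
  smul_mem' := by
    intro c f hf v
    simp only [Set.mem_setOf_eq] at hf
    simp [smul_eq_mul, mul_assoc, ← Finset.mul_sum, hf v]

/-- The indicator chain of a set of edges. -/
def indicator (S : Set G.E) : G.E → ℤ := fun e => if e ∈ S then 1 else 0

/-- `S` is a cyclically oriented cycle of `G` for the orientation `o`: `S` is a cycle
and its indicator chain is a homology class (each vertex of the cycle has one ingoing
and one outgoing edge of `S`). -/
def IsCyclicallyOriented (o : G.E → Bool) (S : Set G.E) : Prop :=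
  G.IsCycleSet S ∧ G.indicator S ∈ G.cycleSpace o

/-- The coordinate functional `e*` restricted to `H₁(Γ,ℝ)`. -/
def edgeFunR (o : G.E → Bool) (e : G.E) : Module.Dual ℝ ↥(G.cycleSpaceR o) :=
  (LinearMap.proj e).comp (G.cycleSpaceR o).subtype

/-! ### Connectivity and regularity -/

/-- The degree (valence) of a vertex; loops count twice. -/
def degree (v : G.V) : ℕ :=
  Nat.card {e : G.E // G.fst e = v} + Nat.card {e : G.E // G.snd e = v}

/-- A graph is 3-regular if every vertex has valence 3. -/
def ThreeRegular : Prop := ∀ v : G.V, G.degree v = 3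

/-- Deletion of a set of vertices, together with all incident edges. -/
def deleteVerts (W : Set G.V) : Multigraph :=
  { V := {v : G.V // v ∉ W}
    E := {e : G.E // G.fst e ∉ W ∧ G.snd e ∉ W}
    fst := fun e => ⟨G.fst e.1, e.2.1⟩
    snd := fun e => ⟨G.snd e.1, e.2.2⟩
    fintV := Fintype.ofFinite _
    fintE := Fintype.ofFinite _ }

/-- 3-edge connectivity: removing any 2 edges leaves the graph connected. -/
def EdgeConnected3 : Prop :=
  Nonempty G.V ∧ ∀ F : Set G.E, Nat.card F ≤ 2 → (G.deleteEdges F).Preconnected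

/-- 3-connectivity: removing any 2 vertices (with incident edges) leaves the graph
connected. -/
def Connected3 : Prop :=
  Nonempty G.V ∧ ∀ W : Set G.V, Nat.card W ≤ 2 → (G.deleteVerts W).Preconnected

/-- Isomorphism of multigraphs. -/
def IsIsoTo (G H : Multigraph) : Prop :=
  ∃ (fV : G.V ≃ H.V) (fE : G.E ≃ H.E), ∀ e : G.E,
    (H.fst (fE e) = fV (G.fst e) ∧ H.snd (fE e) = fV (G.snd e)) ∨
    (H.fst (fE e) = fV (G.snd e) ∧ H.snd (fE e) = fV (G.fst e))

/-- A bijection of edge sets is cyclic if it induces a bijection between cycles. -/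
def IsCyclicBijection (G G' : Multigraph) (ε : G.E ≃ G'.E) : Prop :=
  ∀ S : Set G.E, G.IsCycleSet S ↔ G'.IsCycleSet (⇑ε '' S)

/-- Two orientations are equal as orientations (encodings may differ on loops). -/
def OrientEq (o₁ o₂ : G.E → Bool) : Prop :=
  ∀ e : G.E, G.src o₁ e = G.src o₂ e ∧ G.tgt o₁ e = G.tgt o₂ e

/-- `o` is an orientation of `G` extending the orientation `φ` of `Γ∖T`. -/
def ExtendsOrient (T : Set G.E) (φ : (G.deleteEdges T).E → Bool) (o : G.E → Bool) : Prop :=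
  ∀ e : (G.deleteEdges T).E,
    G.src o e.1 = (G.deleteEdges T).src φ e ∧ G.tgt o e.1 = (G.deleteEdges T).tgt φ e

end Multigraph

/-! ### Auxiliary machinery for the proof -/

namespace Multigraph

/-- Directed walks: `DWalk o v l w` means `l` is a list of edges forming a directed
walk from `v` to `w`. -/
def DWalk (G : Multigraph) (o : G.E → Bool) : G.V → List G.E → G.V → Prop
  | v, [], w => v = w
  | v, e :: l, w => G.src o e = v ∧ DWalk G o (G.tgt o e) l w

variable {G : Multigraph} {o : G.E → Bool}

theorem DWalk.append {v w x : G.V} {l₁ l₂ : List G.E} (h₁ : G.DWalk o v l₁ w)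
    (h₂ : G.DWalk o w l₂ x) : G.DWalk o v (l₁ ++ l₂) x := by
  induction l₁ generalizing v with
  | nil => cases h₁; simpa using h₂
  | cons e l ih => exact ⟨h₁.1, ih h₁.2⟩

theorem DWalk.split {v x : G.V} {l₁ l₂ : List G.E} (h : G.DWalk o v (l₁ ++ l₂) x) :
    ∃ w, G.DWalk o v l₁ w ∧ G.DWalk o w l₂ x := by
  induction l₁ generalizing v with
  | nil => exact ⟨v, rfl, h⟩
  | cons e l ih =>
    obtain ⟨w, hw1, hw2⟩ := ih h.2
    exact ⟨w, ⟨h.1, hw1⟩, hw2⟩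

theorem dReachable_iff_dwalk {v w : G.V} :
    G.DReachable o v w ↔ ∃ l, G.DWalk o v l w := by
  constructor
  · intro h
    induction h with
    | refl => exact ⟨[], rfl⟩
    | tail _ hstep ih =>
      obtain ⟨l, hl⟩ := ih
      obtain ⟨e, he1, he2⟩ := hstep
      refine ⟨l ++ [e], hl.append ?_⟩
      exact ⟨he1, he2⟩
  · rintro ⟨l, hl⟩
    induction l generalizing v with
    | nil => cases hl; exact Relation.ReflTransGen.refl
    | cons e l ih =>
      exact Relation.ReflTransGen.head ⟨e, hl.1, rfl⟩ (ih hl.2)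

/-- The sources of a walk, together with the final vertex, are the initial vertex
together with the targets. -/
theorem DWalk.srcs_append {v w : G.V} {l : List G.E} (h : G.DWalk o v l w) :
    l.map (G.src o) ++ [w] = v :: l.map (G.tgt o) := by
  induction l generalizing v with
  | nil => cases h; rfl
  | cons e l ih => simpa using And.intro h.1 (ih h.2)

/-- In a closed walk, the multiset of sources equals the multiset of targets. -/
theorem DWalk.srcs_perm {v : G.V} {l : List G.E} (h : G.DWalk o v l v) :
    (l.map (G.src o)).Perm (l.map (G.tgt o)) := by
  have h1 := h.srcs_append
  have h2 : (v :: l.map (G.src o)).Perm (v :: l.map (G.tgt o)) := by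
    rw [← h1]
    exact List.perm_append_comm (l₁ := [v])
  exact h2.cons_inv

/-- Crossing lemma: a directed walk from inside `W` to outside `W` uses an edge
crossing outwards. -/
theorem DWalk.crossing {W : Set G.V} {v w : G.V} {l : List G.E} (h : G.DWalk o v l w)
    (hv : v ∈ W) (hw : w ∉ W) : ∃ e ∈ l, G.src o e ∈ W ∧ G.tgt o e ∉ W := by
  induction l generalizing v with
  | nil => cases h; exact absurd hv hw
  | cons e l ih =>
    by_cases ht : G.tgt o e ∈ W
    · obtain ⟨e', he', h1, h2⟩ := ih h.2 ht
      exact ⟨e', List.mem_cons_of_mem _ he', h1, h2⟩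
    · exact ⟨e, List.mem_cons_self, h.1 ▸ hv, ht⟩

/-- Undirected crossing lemma. -/
theorem crossing_of_reachable {W : Set G.V} {v w : G.V} (h : G.Reachable v w)
    (hv : v ∈ W) (hw : w ∉ W) :
    ∃ e, (G.fst e ∈ W ∧ G.snd e ∉ W) ∨ (G.snd e ∈ W ∧ G.fst e ∉ W) := by
  revert hw
  induction h with
  | refl => exact fun hw => absurd hv hw
  | @tail b c _ hadj ih =>
    intro hw
    by_cases hb : b ∈ W
    · obtain ⟨e, he⟩ := hadj
      rcases he with ⟨h1, h2⟩ | ⟨h1, h2⟩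
      · exact ⟨e, Or.inl ⟨by rw [h1]; exact hb, by rw [h2]; exact hw⟩⟩
      · exact ⟨e, Or.inr ⟨by rw [h2]; exact hb, by rw [h1]; exact hw⟩⟩
    · exact ih hb

/-- Extract a vertex-simple walk from a walk. -/
theorem exists_simple_dwalk_aux :
    ∀ (n : ℕ) (l : List G.E) (v w : G.V), l.length ≤ n → G.DWalk o v l w →
    ∃ r, G.DWalk o v r w ∧ (∀ e ∈ r, e ∈ l) ∧ (v :: r.map (G.tgt o)).Nodup ∧
      r.length ≤ l.length := by
  intro n
  induction n with
  | zero =>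
    intro l v w hlen h
    obtain rfl : l = [] := List.eq_nil_of_length_eq_zero (Nat.le_zero.mp hlen)
    cases h
    exact ⟨[], rfl, by simp, by simp, by simp⟩
  | succ n ih =>
    intro l v w hlen h
    match l with
    | [] =>
      cases h
      exact ⟨[], rfl, by simp, by simp, by simp⟩
    | e :: l' =>
      simp only [List.length_cons, Nat.succ_le_succ_iff] at hlen
      obtain ⟨r', hr'w, hr'sub, hr'nd, hr'len⟩ := ih l' (G.tgt o e) w hlen h.2
      by_cases hv : v ∈ G.tgt o e :: r'.map (G.tgt o)
      · rcases List.mem_cons.mp hv with hv1 | hv2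
        · refine ⟨r', hv1 ▸ hr'w, fun e' he' => List.mem_cons_of_mem _ (hr'sub e' he'),
            ?_, by simpa using Nat.le_succ_of_le hr'len⟩
          rw [hv1]; exact hr'nd
        · obtain ⟨e'', he''r, he''tgt⟩ := List.mem_map.mp hv2
          obtain ⟨r₁, r₂, hsplit⟩ := List.append_of_mem he''r
          subst hsplit
          obtain ⟨m, _, hm2⟩ := hr'w.split
          have hwalk : G.DWalk o v r₂ w := he''tgt ▸ hm2.2
          obtain ⟨r, h1, h2, h3, h4⟩ := ih r₂ v w
            (by have := hr'len; simp at this ⊢; omega) hwalk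
          refine ⟨r, h1, fun e' he' => ?_, h3, ?_⟩
          · exact List.mem_cons_of_mem _ (hr'sub e' (by simp [h2 e' he']))
          · have : r₂.length ≤ l'.length := by
              have := hr'len; simp at this; omega
            simp; omega
      · exact ⟨e :: r', ⟨h.1, hr'w⟩,
          by intro e' he'; rcases List.mem_cons.mp he' with h1 | h1
             · simp [h1]
             · exact List.mem_cons_of_mem _ (hr'sub e' h1),
          by rw [List.map_cons]; exact List.nodup_cons.mpr ⟨hv, hr'nd⟩,
          by simpa using hr'len⟩

theorem exists_simple_dwalk {v w : G.V} {l : List G.E} (h : G.DWalk o v l w) :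
    ∃ r, G.DWalk o v r w ∧ (∀ e ∈ r, e ∈ l) ∧ (v :: r.map (G.tgt o)).Nodup :=
  let ⟨r, h1, h2, h3, _⟩ := exists_simple_dwalk_aux l.length l v w le_rfl h
  ⟨r, h1, h2, h3⟩

/-- Extract, from a walk ending in `VS`, an initial "fresh" segment reaching `VS`
for the first time, with pairwise-distinct sources outside `VS`. -/
theorem exists_fresh_dwalk_aux (VS : Set G.V) :
    ∀ (n : ℕ) (l : List G.E) (v w : G.V), l.length ≤ n → G.DWalk o v l w → w ∈ VS →
    ∃ r w', G.DWalk o v r w' ∧ w' ∈ VS ∧ (∀ e ∈ r, e ∈ l) ∧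
      (∀ e ∈ r, G.src o e ∉ VS) ∧ (r.map (G.src o)).Nodup ∧ r.length ≤ l.length := by
  intro n
  induction n with
  | zero =>
    intro l v w hlen h hw
    obtain rfl : l = [] := List.eq_nil_of_length_eq_zero (Nat.le_zero.mp hlen)
    cases h
    exact ⟨[], v, rfl, hw, by simp, by simp, by simp, by simp⟩
  | succ n ih =>
    intro l v w hlen h hw
    by_cases hvVS : v ∈ VS
    · exact ⟨[], v, rfl, hvVS, by simp, by simp, by simp, by simp⟩
    match l with
    | [] => cases h; exact absurd hw hvVS
    | e :: l' =>
      simp only [List.length_cons, Nat.succ_le_succ_iff] at hlen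
      obtain ⟨r', w', hr'w, hw', hr'sub, hr'fresh, hr'nd, hr'len⟩ := ih l' (G.tgt o e) w hlen h.2 hw
      by_cases hvmem : v ∈ r'.map (G.src o)
      · obtain ⟨e'', he''r, he''src⟩ := List.mem_map.mp hvmem
        obtain ⟨r₁, r₂, hsplit⟩ := List.append_of_mem he''r
        subst hsplit
        obtain ⟨m, _, hm2⟩ := hr'w.split
        have hwalk : G.DWalk o v (e'' :: r₂) w' := ⟨he''src, hm2.2⟩
        have hlen2 : (e'' :: r₂).length ≤ n := by
          have := hr'len; simp [List.length_append] at this; simp; omega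
        obtain ⟨r, w'', h1, h2, h3, h4, h5, h6⟩ := ih (e'' :: r₂) v w' hlen2 hwalk hw'
        refine ⟨r, w'', h1, h2, fun e' he' => List.mem_cons_of_mem _
          (hr'sub e' (by have := h3 e' he'; simp at this ⊢; tauto)), h4, h5, ?_⟩
        have ha := hr'len
        simp [List.length_append] at ha h6 ⊢
        omega
      · refine ⟨e :: r', w', ⟨h.1, hr'w⟩, hw', ?_, ?_, ?_, ?_⟩
        · intro e' he'; rcases List.mem_cons.mp he' with h1 | h1
          · simp [h1]
          · exact List.mem_cons_of_mem _ (hr'sub e' h1)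
        · intro e' he'; rcases List.mem_cons.mp he' with h1 | h1
          · rw [h1, h.1]; exact hvVS
          · exact hr'fresh e' h1
        · rw [List.map_cons, h.1]
          exact List.nodup_cons.mpr ⟨hvmem, hr'nd⟩
        · simpa using hr'len

theorem adj_symm' {H : Multigraph} {a b : H.V} (h : H.Adj a b) : H.Adj b a :=
  let ⟨e, h⟩ := h; ⟨e, h.symm⟩

theorem reachable_symm' {H : Multigraph} {a b : H.V} (h : H.Reachable a b) :
    H.Reachable b a := by
  induction h with
  | refl => exact Relation.ReflTransGen.refl
  | tail _ hadj ih => exact Relation.ReflTransGen.head (adj_symm' hadj) ih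

theorem quot_eq_of_reachable {H : Multigraph} {a b : H.V} (h : H.Reachable a b) :
    Quot.mk H.Adj a = Quot.mk H.Adj b := by
  induction h with
  | refl => rfl
  | tail _ hadj ih => exact ih.trans (Quot.sound hadj)

theorem fst_snd_pair (e : G.E) :
    (G.fst e = G.src o e ∧ G.snd e = G.tgt o e) ∨
    (G.fst e = G.tgt o e ∧ G.snd e = G.src o e) := by
  by_cases h : o e
  · left; constructor <;> simp [Multigraph.src, Multigraph.tgt, h]
  · right; constructor <;> simp [Multigraph.src, Multigraph.tgt, h]

theorem src_incident {S : Set G.E} {e : G.E} (hS : e ∈ S) :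
    ∃ e' ∈ S, G.fst e' = G.src o e ∨ G.snd e' = G.src o e := by
  rcases fst_snd_pair (o := o) e with ⟨h1, h2⟩ | ⟨h1, h2⟩
  · exact ⟨e, hS, Or.inl h1⟩
  · exact ⟨e, hS, Or.inr h2⟩

theorem tgt_incident {S : Set G.E} {e : G.E} (hS : e ∈ S) :
    ∃ e' ∈ S, G.fst e' = G.tgt o e ∨ G.snd e' = G.tgt o e := by
  rcases fst_snd_pair (o := o) e with ⟨h1, h2⟩ | ⟨h1, h2⟩
  · exact ⟨e, hS, Or.inr h2⟩
  · exact ⟨e, hS, Or.inl h1⟩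

theorem reachable_restrict_of_dwalk {S : Set G.E} :
    ∀ (l : List G.E) (v w : G.V), G.DWalk o v l w → (∀ e ∈ l, e ∈ S) →
    ∀ (hv : ∃ e ∈ S, G.fst e = v ∨ G.snd e = v) (hw : ∃ e ∈ S, G.fst e = w ∨ G.snd e = w),
    (G.restrict S).Reachable ⟨v, hv⟩ ⟨w, hw⟩ := by
  intro l
  induction l with
  | nil =>
    intro v w h _ hv hw
    cases h
    exact Relation.ReflTransGen.refl
  | cons e l ih =>
    intro v w h hsub hv hw
    have heS : e ∈ S := hsub e (List.mem_cons_self)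
    have htv : ∃ e' ∈ S, G.fst e' = G.tgt o e ∨ G.snd e' = G.tgt o e := tgt_incident heS
    refine Relation.ReflTransGen.head ?_
      (ih (G.tgt o e) w h.2 (fun e' he' => hsub e' (List.mem_cons_of_mem _ he')) htv hw)
    refine ⟨⟨e, heS⟩, ?_⟩
    rcases fst_snd_pair (o := o) e with ⟨h1, h2⟩ | ⟨h1, h2⟩
    · exact Or.inl ⟨Subtype.ext (h1.trans h.1), Subtype.ext h2⟩
    · exact Or.inr ⟨Subtype.ext h1, Subtype.ext (h2.trans h.1)⟩

theorem reachable_restrict_delete_of_dwalk {S : Set G.E} (ed : ↥S) :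
    ∀ (l : List G.E) (v w : G.V), G.DWalk o v l w → (∀ e ∈ l, e ∈ S ∧ e ≠ ed.1) →
    ∀ (hv : ∃ e ∈ S, G.fst e = v ∨ G.snd e = v) (hw : ∃ e ∈ S, G.fst e = w ∨ G.snd e = w),
    ((G.restrict S).deleteEdges {ed}).Reachable ⟨v, hv⟩ ⟨w, hw⟩ := by
  intro l
  induction l with
  | nil =>
    intro v w h _ hv hw
    cases h
    exact Relation.ReflTransGen.refl
  | cons e l ih =>
    intro v w h hsub hv hw
    obtain ⟨heS, hene⟩ := hsub e (List.mem_cons_self)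
    have htv : ∃ e' ∈ S, G.fst e' = G.tgt o e ∨ G.snd e' = G.tgt o e := tgt_incident heS
    refine Relation.ReflTransGen.head ?_
      (ih (G.tgt o e) w h.2 (fun e' he' => hsub e' (List.mem_cons_of_mem _ he')) htv hw)
    refine ⟨⟨⟨e, heS⟩, fun hmem => hene (congrArg Subtype.val hmem)⟩, ?_⟩
    rcases fst_snd_pair (o := o) e with ⟨h1, h2⟩ | ⟨h1, h2⟩
    · exact Or.inl ⟨Subtype.ext (h1.trans h.1), Subtype.ext h2⟩
    · exact Or.inr ⟨Subtype.ext h1, Subtype.ext (h2.trans h.1)⟩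

/-- The vertex set of a simple closed walk. -/
theorem cycle_vertex_char {v : G.V} {l : List G.E} (h : G.DWalk o v l v) (hne : l ≠ []) :
    ∀ x, (∃ e ∈ {e | e ∈ l}, G.fst e = x ∨ G.snd e = x) ↔ x ∈ l.map (G.tgt o) := by
  have hperm := h.srcs_perm
  intro x
  constructor
  · rintro ⟨e, he, hor⟩
    have : x = G.src o e ∨ x = G.tgt o e := by
      rcases fst_snd_pair (o := o) e with ⟨h1, h2⟩ | ⟨h1, h2⟩ <;> rcases hor with h3 | h3
      · exact Or.inl (h3 ▸ h1)
      · exact Or.inr (h3 ▸ h2)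
      · exact Or.inr (h3 ▸ h1)
      · exact Or.inl (h3 ▸ h2)
    rcases this with h3 | h3
    · exact hperm.mem_iff.mp (h3 ▸ List.mem_map_of_mem he)
    · exact h3 ▸ List.mem_map_of_mem he
  · intro hx
    obtain ⟨e, he, htgt⟩ := List.mem_map.mp hx
    rcases fst_snd_pair (o := o) e with ⟨h1, h2⟩ | ⟨h1, h2⟩
    · exact ⟨e, he, Or.inr (h2.trans htgt)⟩
    · exact ⟨e, he, Or.inl (h1.trans htgt)⟩

/-- The start vertex of a closed walk is a target. -/
theorem cycle_start_mem {v : G.V} {l : List G.E} (h : G.DWalk o v l v) (hne : l ≠ []) :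
    v ∈ l.map (G.tgt o) := by
  have hperm := h.srcs_perm
  rcases l with _ | ⟨e, l'⟩
  · exact absurd rfl hne
  · refine hperm.mem_iff.mp ?_
    rw [← h.1]
    exact List.mem_map_of_mem (List.mem_cons_self)

theorem indicator_mem_cycleSpace_of_cycle {v : G.V} {l : List G.E}
    (h : G.DWalk o v l v) (hl : l.Nodup) :
    G.indicator {e | e ∈ l} ∈ G.cycleSpace o := by
  show ∀ v', ∑ e, G.indicator {e | e ∈ l} e * G.inc o e v' = 0
  intro v'
  have step1 : ∀ e, G.indicator {x | x ∈ l} e * G.inc o e v' =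
      if e ∈ l.toFinset then G.inc o e v' else 0 := by
    intro e
    by_cases he : e ∈ l <;> simp [Multigraph.indicator, Set.mem_setOf_eq, he]
  rw [Finset.sum_congr rfl fun e _ => step1 e, Finset.sum_ite_mem, Finset.univ_inter]
  have key : ∀ (f : G.E → G.V),
      (l.map fun e => if f e = v' then (1:ℤ) else 0).sum =
      ((l.map f).map fun x => if x = v' then (1:ℤ) else 0).sum := by
    intro f; rw [List.map_map]; rfl
  simp only [Multigraph.inc]
  rw [Finset.sum_sub_distrib, List.sum_toFinset _ hl, List.sum_toFinset _ hl, key, key,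
    (h.srcs_perm.map fun x => if x = v' then (1:ℤ) else 0).sum_eq, sub_self]

/-- A simple closed walk gives a cyclically oriented cycle. -/
theorem isCyclicallyOriented_of_simple_cycle {v : G.V} {l : List G.E}
    (h : G.DWalk o v l v) (hnd : (l.map (G.tgt o)).Nodup) (hne : l ≠ []) :
    G.IsCyclicallyOriented o {e | e ∈ l} := by
  have hl : l.Nodup := hnd.of_map _
  set S : Set G.E := {e | e ∈ l} with hSdef
  have hchar := cycle_vertex_char h hne
  have hvmem : v ∈ l.map (G.tgt o) := cycle_start_mem h hne
  -- connectivity of the restriction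
  have hreach : ∀ (x : G.V) (hx : ∃ e ∈ S, G.fst e = x ∨ G.snd e = x)
      (hv' : ∃ e ∈ S, G.fst e = v ∨ G.snd e = v),
      (G.restrict S).Reachable ⟨v, hv'⟩ ⟨x, hx⟩ := by
    intro x hx hv'
    obtain ⟨e, he, htgt⟩ := List.mem_map.mp ((hchar x).mp hx)
    obtain ⟨l₁, l₂, rfl⟩ := List.append_of_mem he
    obtain ⟨m, hm1, hm2⟩ := h.split
    have hwalk : G.DWalk o v (l₁ ++ [e]) (G.tgt o e) :=
      hm1.append ⟨hm2.1, rfl⟩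
    have := reachable_restrict_of_dwalk (S := S) (l₁ ++ [e]) v (G.tgt o e) hwalk
      (fun e' he' => by
        simp only [hSdef, Set.mem_setOf_eq, List.mem_append]
        rcases List.mem_append.mp he' with h1 | h1
        · exact Or.inl h1
        · simp at h1; exact Or.inr (by simp [h1]))
      hv' (tgt_incident he)
    rwa [show (⟨G.tgt o e, _⟩ : (G.restrict S).V) = ⟨x, hx⟩ from Subtype.ext htgt] at this
  have hvproof : ∃ e ∈ S, G.fst e = v ∨ G.snd e = v := (hchar v).mpr hvmem
  have hpre : (G.restrict S).Preconnected := by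
    rintro ⟨x, hx⟩ ⟨y, hy⟩
    exact (reachable_symm' (hreach x hx hvproof)).trans (hreach y hy hvproof)
  have hnonempty : Nonempty (G.restrict S).V := ⟨⟨v, hvproof⟩⟩
  have hncomp : (G.restrict S).numComponents = 1 := by
    rw [Multigraph.numComponents, Nat.card_eq_one_iff_unique]
    refine ⟨⟨fun x y => ?_⟩, ⟨Quot.mk _ ⟨v, hvproof⟩⟩⟩
    induction x using Quot.ind with | _ a =>
    induction y using Quot.ind with | _ b =>
    exact quot_eq_of_reachable (hpre a b)
  have hcardE : Nat.card (G.restrict S).E = l.length := by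
    have : S = ↑l.toFinset := by ext x; simp [hSdef]
    rw [show (G.restrict S).E = ↥S from rfl, this, Nat.card_coe_set_eq,
      Set.ncard_coe_finset, List.toFinset_card_of_nodup hl]
  have hcardV : Nat.card (G.restrict S).V = l.length := by
    have hset : {x : G.V | ∃ e ∈ S, G.fst e = x ∨ G.snd e = x} =
        ↑(l.map (G.tgt o)).toFinset := by
      ext x; simp only [Set.mem_setOf_eq, Finset.coe_sort_coe, Finset.mem_coe,
        List.mem_toFinset]; exact hchar x
    have : (G.restrict S).V = ↥{x : G.V | ∃ e ∈ S, G.fst e = x ∨ G.snd e = x} := rfl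
    rw [this, hset, Nat.card_coe_set_eq, Set.ncard_coe_finset,
      List.toFinset_card_of_nodup hnd, List.length_map]
  refine ⟨⟨⟨hnonempty, hpre⟩, ?_, ?_⟩, indicator_mem_cycleSpace_of_cycle h hl⟩
  · -- no separating edges
    ext ed
    simp only [Multigraph.sepEdges, Set.mem_setOf_eq, Set.mem_empty_iff_false, iff_false]
    intro hsep
    apply hsep
    obtain ⟨e, he⟩ := ed
    have hel : e ∈ l := he
    obtain ⟨l₁, l₂, rfl⟩ := List.append_of_mem hel
    obtain ⟨m, hm1, hm2⟩ := h.split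
    have hwalk : G.DWalk o (G.tgt o e) (l₂ ++ l₁) m := hm2.2.append hm1
    have hnod := hl
    rw [List.nodup_append] at hnod
    have hel2 : e ∉ l₂ ++ l₁ := by
      intro hmem
      rcases List.mem_append.mp hmem with h1 | h1
      · exact (List.nodup_cons.mp hnod.2.1).1 h1
      · exact hnod.2.2 e h1 e List.mem_cons_self rfl
    have hm : m = G.src o e := hm2.1.symm
    subst hm
    have hreach2 := reachable_restrict_delete_of_dwalk (S := S) ⟨e, he⟩ (l₂ ++ l₁)
      (G.tgt o e) (G.src o e) hwalk
      (fun e' he' => ⟨by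
        simp only [hSdef, Set.mem_setOf_eq, List.mem_append, List.mem_cons]
        rcases List.mem_append.mp he' with h1 | h1
        · exact Or.inr (Or.inr h1)
        · exact Or.inl h1, fun hEq => hel2 ((show e' = e from hEq) ▸ he')⟩)
      (tgt_incident he) (src_incident he)
    have hfst : (G.restrict S).fst ⟨e, he⟩ = ⟨G.fst e, ⟨e, he, Or.inl rfl⟩⟩ := rfl
    have hsnd : (G.restrict S).snd ⟨e, he⟩ = ⟨G.snd e, ⟨e, he, Or.inr rfl⟩⟩ := rfl
    rcases fst_snd_pair (o := o) e with ⟨h1, h2⟩ | ⟨h1, h2⟩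
    · rw [hfst, hsnd,
        show (⟨G.fst e, ⟨e, he, Or.inl rfl⟩⟩ : (G.restrict S).V) =
          ⟨G.src o e, src_incident he⟩ from Subtype.ext h1,
        show (⟨G.snd e, ⟨e, he, Or.inr rfl⟩⟩ : (G.restrict S).V) =
          ⟨G.tgt o e, tgt_incident he⟩ from Subtype.ext h2]
      exact reachable_symm' hreach2
    · rw [hfst, hsnd,
        show (⟨G.fst e, ⟨e, he, Or.inl rfl⟩⟩ : (G.restrict S).V) =
          ⟨G.tgt o e, tgt_incident he⟩ from Subtype.ext h1,
        show (⟨G.snd e, ⟨e, he, Or.inr rfl⟩⟩ : (G.restrict S).V) =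
          ⟨G.src o e, src_incident he⟩ from Subtype.ext h2]
      exact hreach2
  · -- b1 = 1
    rw [Multigraph.b1, hncomp, hcardE, hcardV]
    ring

/-- Each target along a walk is either the final vertex or the source of a later
edge of the walk. -/
theorem DWalk.tgt_mem {q : List G.E} {a w : G.V} (h : G.DWalk o a q w) :
    ∀ b ∈ q, G.tgt o b = w ∨ G.tgt o b ∈ q.map (G.src o) := by
  induction q generalizing a with
  | nil => intro b hb; exact absurd hb List.not_mem_nil
  | cons f q ih =>
    intro b hb
    rcases List.mem_cons.mp hb with rfl | hb
    · match q, h with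
      | [], h => exact Or.inl h.2
      | f2 :: q', h => exact Or.inr (by
          rw [show G.tgt o b = G.src o f2 from h.2.1.symm]
          exact List.mem_map_of_mem (List.mem_cons_of_mem _ (List.mem_cons_self)))
    · rcases ih h.2 b hb with h1 | h1
      · exact Or.inl h1
      · exact Or.inr (by
          rcases List.mem_map.mp h1 with ⟨c, hc, hceq⟩
          exact hceq ▸ List.mem_map_of_mem (List.mem_cons_of_mem _ hc))

/-- Key propagation lemma: a homology class vanishing outside `ES ∪ q`, where `q` is a
fresh ear path, vanishes on `q`. -/
theorem propagate_zero {VS : Set G.V} {ES : Set G.E} {g : G.E → ℤ}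
    (hg : ∀ x, ∑ e, g e * G.inc o e x = 0)
    (hES : ∀ e ∈ ES, G.src o e ∈ VS ∧ G.tgt o e ∈ VS) :
    ∀ (q : List G.E) (a w : G.V), G.DWalk o a q w → w ∈ VS →
    (∀ e ∈ q, G.src o e ∉ VS) → (q.map (G.src o)).Nodup →
    (∀ e, g e ≠ 0 → e ∈ ES ∨ e ∈ q) → ∀ e ∈ q, g e = 0 := by
  intro q
  induction q with
  | nil => intro a w _ _ _ _ _ e he; exact absurd he List.not_mem_nil
  | cons e1 q ih =>
    intro a w hwalk hw hfresh hnd hsupp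
    have ha : G.src o e1 = a := hwalk.1
    have haVS : a ∉ VS := ha ▸ hfresh e1 (List.mem_cons_self)
    have hnd' := List.nodup_cons.mp (by rwa [List.map_cons] at hnd)
    have hanq : a ∉ q.map (G.src o) := ha ▸ hnd'.1
    have key : g e1 = 0 := by
      have hsum : ∑ e, g e * G.inc o e a = g e1 * G.inc o e1 a := by
        refine Finset.sum_eq_single_of_mem e1 (Finset.mem_univ _) ?_
        intro b _ hb
        by_cases hgb : g b = 0
        · rw [hgb, zero_mul]
        rcases hsupp b hgb with hbES | hbq
        · have h1 : G.tgt o b ≠ a := fun hh => haVS (hh ▸ (hES b hbES).2)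
          have h2 : G.src o b ≠ a := fun hh => haVS (hh ▸ (hES b hbES).1)
          simp [Multigraph.inc, h1, h2]
        · have hbq' : b ∈ q := by
            rcases List.mem_cons.mp hbq with h1 | h1
            · exact absurd h1 hb
            · exact h1
          have h2 : G.src o b ≠ a := fun hh => hanq (hh ▸ List.mem_map_of_mem hbq')
          have h1 : G.tgt o b ≠ a := by
            rcases hwalk.2.tgt_mem b hbq' with h3 | h3
            · exact fun hh => haVS ((hh ▸ h3) ▸ hw)
            · exact fun hh => hanq (hh ▸ h3)
          simp [Multigraph.inc, h1, h2]
      have htgt : G.tgt o e1 ≠ a := by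
        match q, hwalk with
        | [], hwalk => exact fun hh => haVS ((hh ▸ hwalk.2) ▸ hw)
        | f2 :: q', hwalk =>
          intro hh
          apply hanq
          rw [← hh, ← hwalk.2.1]
          exact List.mem_map_of_mem (List.mem_cons_self)
      have hinc : G.inc o e1 a = -1 := by
        simp [Multigraph.inc, htgt, ha]
      have h0 := hg a
      rw [hsum, hinc] at h0
      linarith
    have hrest : ∀ e ∈ q, g e = 0 := by
      refine ih (G.tgt o e1) w hwalk.2 hw
        (fun e he => hfresh e (List.mem_cons_of_mem _ he)) hnd'.2 ?_
      intro e hge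
      rcases hsupp e hge with h1 | h1
      · exact Or.inl h1
      · rcases List.mem_cons.mp h1 with rfl | h2
        · exact absurd key hge
        · exact Or.inr h2
    intro e he
    rcases List.mem_cons.mp he with rfl | h2
    · exact key
    · exact hrest e h2

variable (G) in
/-- Invariant for the ear-decomposition construction. -/
def EarInv (o : G.E → Bool) (VS : Set G.V) (ES : Set G.E)
    (L : List (Set G.E × G.E)) : Prop :=
  (∀ e ∈ ES, G.src o e ∈ VS ∧ G.tgt o e ∈ VS) ∧
  (∀ u ∈ VS, ∀ w ∈ VS, ∃ l, G.DWalk o u l w ∧ ∀ e ∈ l, e ∈ ES) ∧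
  (∀ p ∈ L, G.IsCyclicallyOriented o p.1 ∧ p.2 ∈ p.1 ∧ ∀ e ∈ p.1, e ∈ ES) ∧
  List.Pairwise (fun p q => p.2 ∉ q.1) L ∧
  (∀ g : G.E → ℤ, (∀ x, ∑ e, g e * G.inc o e x = 0) → (∀ p ∈ L, g p.2 = 0) →
    (∀ e, e ∉ ES → g e = 0) → ∀ e, g e = 0)

theorem ear_extend (hb : ∀ v w : G.V, v ≠ w → G.DReachable o w v) (v₀ : G.V) :
    ∀ (m : ℕ) (VS : Set G.V) (ES : Set G.E) (L : List (Set G.E × G.E)),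
    v₀ ∈ VS → G.EarInv o VS ES L →
    (Finset.univ.filter (· ∉ ES)).card ≤ m →
    ∃ VS' ES' L', v₀ ∈ VS' ∧ G.EarInv o VS' ES' L' ∧ ∀ e : G.E, e ∈ ES' := by
  intro m
  induction m with
  | zero =>
    intro VS ES L hv₀ hInv hcard
    refine ⟨VS, ES, L, hv₀, hInv, fun e => ?_⟩
    by_contra he
    have : e ∈ Finset.univ.filter (· ∉ ES) := Finset.mem_filter.mpr ⟨Finset.mem_univ _, he⟩
    have := Finset.card_pos.mpr ⟨e, this⟩
    omega
  | succ m ih =>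
    intro VS ES L hv₀ hInv hcard
    obtain ⟨hI1, hI2, hI3, hI4, hI5⟩ := hInv
    by_cases hall : ∀ e : G.E, e ∈ ES
    · exact ⟨VS, ES, L, hv₀, ⟨hI1, hI2, hI3, hI4, hI5⟩, hall⟩
    push_neg at hall
    obtain ⟨e₀', he₀'⟩ := hall
    -- find a fresh edge with source in `VS`
    obtain ⟨e₀, he₀ES, he₀VS⟩ : ∃ e₀, e₀ ∉ ES ∧ G.src o e₀ ∈ VS := by
      by_cases hcase : G.src o e₀' ∈ VS
      · exact ⟨e₀', he₀', hcase⟩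
      · have hne : G.src o e₀' ≠ v₀ := fun hh => hcase (hh ▸ hv₀)
        obtain ⟨l, hl⟩ := dReachable_iff_dwalk.mp (hb (G.src o e₀') v₀ hne)
        obtain ⟨e', _, h1, h2⟩ := hl.crossing hv₀ hcase
        exact ⟨e', fun hmem => h2 (hI1 e' hmem).2, h1⟩
    -- the ear path
    obtain ⟨l0, hl0⟩ : ∃ l, G.DWalk o (G.tgt o e₀) l v₀ := by
      by_cases hteq : G.tgt o e₀ = v₀
      · exact ⟨[], hteq⟩
      · exact dReachable_iff_dwalk.mp (hb v₀ (G.tgt o e₀) (Ne.symm hteq))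
    obtain ⟨q, w', hq, hw', hqsub, hqfresh, hqnd, _⟩ :=
      exists_fresh_dwalk_aux VS l0.length l0 (G.tgt o e₀) v₀ le_rfl hl0 hv₀
    -- the return path, made vertex-simple
    obtain ⟨r0, hr0, hr0ES⟩ := hI2 w' hw' (G.src o e₀) he₀VS
    obtain ⟨r, hr, hrsub, hrnd⟩ := exists_simple_dwalk hr0
    have hrES : ∀ e ∈ r, e ∈ ES := fun e he => hr0ES e (hrsub e he)
    -- the new cycle
    set C : List G.E := e₀ :: (q ++ r) with hCdef
    have hCwalk : G.DWalk o (G.src o e₀) C (G.src o e₀) := ⟨rfl, hq.append hr⟩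
    have hqsrcs : q.map (G.src o) ++ [w'] = G.tgt o e₀ :: q.map (G.tgt o) :=
      hq.srcs_append
    have hBVS : ∀ x ∈ r.map (G.tgt o), x ∈ VS := by
      intro x hx
      obtain ⟨c, hc, rfl⟩ := List.mem_map.mp hx
      exact (hI1 c (hrES c hc)).2
    have hCnd : (C.map (G.tgt o)).Nodup := by
      have h1 : C.map (G.tgt o) = (q.map (G.src o) ++ [w']) ++ r.map (G.tgt o) := by
        rw [hqsrcs]; simp [hCdef]
      rw [h1, List.nodup_append]
      refine ⟨?_, (List.nodup_cons.mp hrnd).2, ?_⟩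
      · rw [List.nodup_append]
        refine ⟨hqnd, List.nodup_singleton _, ?_⟩
        intro x hx
        obtain ⟨c, hc, rfl⟩ := List.mem_map.mp hx
        simp only [List.mem_singleton, forall_eq]
        exact fun hh => hqfresh c hc (hh ▸ hw')
      · intro x hx
        rcases List.mem_append.mp hx with h2 | h2
        · obtain ⟨c, hc, rfl⟩ := List.mem_map.mp h2
          exact fun b hb hmem => hqfresh c hc (hmem ▸ hBVS _ hb)
        · rcases List.mem_singleton.mp h2 with rfl
          exact fun b hb hh => (List.nodup_cons.mp hrnd).1 (hh ▸ hb)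
    -- the new state
    set ES' : Set G.E := ES ∪ {e | e ∈ e₀ :: q} with hES'def
    set VS' : Set G.V := VS ∪ {x | x ∈ (e₀ :: q).map (G.tgt o)} with hVS'def
    set SC : Set G.E := {e | e ∈ C} with hSCdef
    have holdE : ∀ e ∈ ES, e ∈ ES' := fun e he => Set.mem_union_left _ he
    have hnewE : ∀ e ∈ e₀ :: q, e ∈ ES' := fun e he => Set.mem_union_right _ he
    have holdV : ∀ x ∈ VS, x ∈ VS' := fun x hx => Set.mem_union_left _ hx
    have hnewV : ∀ x ∈ (e₀ :: q).map (G.tgt o), x ∈ VS' :=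
      fun x hx => Set.mem_union_right _ hx
    have hsrcq : ∀ e ∈ q, G.src o e ∈ (e₀ :: q).map (G.tgt o) := by
      intro e he
      rw [List.map_cons, ← hqsrcs]
      exact List.mem_append_left _ (List.mem_map_of_mem he)
    have hqwalk : G.DWalk o (G.src o e₀) (e₀ :: q) w' := ⟨rfl, hq⟩
    -- invariant I1
    have hI1' : ∀ e ∈ ES', G.src o e ∈ VS' ∧ G.tgt o e ∈ VS' := by
      intro e he
      rcases (Set.mem_union _ _ _).mp he with he | he
      · exact ⟨holdV _ (hI1 e he).1, holdV _ (hI1 e he).2⟩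
      · rcases List.mem_cons.mp he with rfl | he
        · exact ⟨holdV _ he₀VS, hnewV _ (List.mem_map_of_mem (List.mem_cons_self))⟩
        · exact ⟨hnewV _ (hsrcq e he), hnewV _
            (List.mem_map_of_mem (List.mem_cons_of_mem _ he))⟩
    -- invariant I2
    have hA : ∀ u ∈ VS', ∃ l, G.DWalk o u l w' ∧ ∀ e ∈ l, e ∈ ES' := by
      intro u hu
      rcases (Set.mem_union _ _ _).mp hu with hu | hu
      · obtain ⟨l, h1, h2⟩ := hI2 u hu w' hw'
        exact ⟨l, h1, fun e he => holdE _ (h2 e he)⟩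
      · obtain ⟨f, hf, rfl⟩ := List.mem_map.mp hu
        obtain ⟨c₁, c₂, hsplit⟩ := List.append_of_mem hf
        rw [hsplit] at hqwalk
        obtain ⟨mid, _, h2⟩ := hqwalk.split
        exact ⟨c₂, h2.2, fun e he => hnewE _
          (hsplit ▸ List.mem_append_right _ (List.mem_cons_of_mem _ he))⟩
    have hB : ∀ x ∈ VS', ∃ l, G.DWalk o (G.src o e₀) l x ∧ ∀ e ∈ l, e ∈ ES' := by
      intro x hx
      rcases (Set.mem_union _ _ _).mp hx with hx | hx
      · obtain ⟨l, h1, h2⟩ := hI2 (G.src o e₀) he₀VS x hx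
        exact ⟨l, h1, fun e he => holdE _ (h2 e he)⟩
      · obtain ⟨f, hf, rfl⟩ := List.mem_map.mp hx
        obtain ⟨c₁, c₂, hsplit⟩ := List.append_of_mem hf
        rw [hsplit] at hqwalk
        obtain ⟨mid, h1, h2⟩ := hqwalk.split
        refine ⟨c₁ ++ [f], h1.append ⟨h2.1, rfl⟩, fun e he => hnewE _ ?_⟩
        rcases List.mem_append.mp he with h3 | h3
        · exact hsplit ▸ List.mem_append_left _ h3
        · rcases List.mem_singleton.mp h3 with rfl
          exact hsplit ▸ List.mem_append_right _ (List.mem_cons_self)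
    have hI2' : ∀ u ∈ VS', ∀ w ∈ VS', ∃ l, G.DWalk o u l w ∧ ∀ e ∈ l, e ∈ ES' := by
      intro u hu w hw
      obtain ⟨l₁, h11, h12⟩ := hA u hu
      obtain ⟨l₂, h21, h22⟩ := hI2 w' hw' (G.src o e₀) he₀VS
      obtain ⟨l₃, h31, h32⟩ := hB w hw
      refine ⟨l₁ ++ (l₂ ++ l₃), h11.append (h21.append h31), fun e he => ?_⟩
      rcases List.mem_append.mp he with h4 | h4
      · exact h12 e h4
      rcases List.mem_append.mp h4 with h5 | h5
      · exact holdE _ (h22 e h5)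
      · exact h32 e h5
    -- invariant I3
    have hCsub : ∀ e ∈ C, e ∈ ES' := by
      intro e he
      rcases List.mem_cons.mp he with rfl | he
      · exact hnewE _ (List.mem_cons_self)
      rcases List.mem_append.mp he with h1 | h1
      · exact hnewE _ (List.mem_cons_of_mem _ h1)
      · exact holdE _ (hrES e h1)
    have hI3' : ∀ p ∈ (SC, e₀) :: L,
        G.IsCyclicallyOriented o p.1 ∧ p.2 ∈ p.1 ∧ ∀ e ∈ p.1, e ∈ ES' := by
      intro p hp
      rcases List.mem_cons.mp hp with rfl | hp
      · exact ⟨isCyclicallyOriented_of_simple_cycle hCwalk hCnd (by simp [hCdef]),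
          List.mem_cons_self, hCsub⟩
      · exact ⟨(hI3 p hp).1, (hI3 p hp).2.1, fun e he => holdE _ ((hI3 p hp).2.2 e he)⟩
    have hI4' : List.Pairwise (fun p q => p.2 ∉ q.1) ((SC, e₀) :: L) :=
      List.Pairwise.cons (fun p hp hmem => he₀ES ((hI3 p hp).2.2 e₀ hmem)) hI4
    -- invariant V4
    have hI5' : ∀ g : G.E → ℤ, (∀ x, ∑ e, g e * G.inc o e x = 0) →
        (∀ p ∈ (SC, e₀) :: L, g p.2 = 0) → (∀ e, e ∉ ES' → g e = 0) → ∀ e, g e = 0 := by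
      intro g hg hpiv hout
      have hge₀ : g e₀ = 0 := hpiv (SC, e₀) (List.mem_cons_self)
      have hgq : ∀ e ∈ q, g e = 0 := by
        refine propagate_zero hg hI1 q (G.tgt o e₀) w' hq hw' hqfresh hqnd ?_
        intro e hge
        by_cases he' : e ∈ ES'
        · rcases (Set.mem_union _ _ _).mp he' with h1 | h1
          · exact Or.inl h1
          · rcases List.mem_cons.mp h1 with rfl | h2
            · exact absurd hge₀ hge
            · exact Or.inr h2
        · exact absurd (hout e he') hge
      refine hI5 g hg (fun p hp => hpiv p (List.mem_cons_of_mem _ hp)) ?_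
      intro e heES
      by_cases henew : e ∈ ES'
      · rcases (Set.mem_union _ _ _).mp henew with h1 | h1
        · exact absurd h1 heES
        · rcases List.mem_cons.mp h1 with rfl | h2
          · exact hge₀
          · exact hgq e h2
      · exact hout e henew
    -- measure decreases
    have hmeas : (Finset.univ.filter (· ∉ ES')).card ≤ m := by
      have hss : Finset.univ.filter (· ∉ ES') ⊂ Finset.univ.filter (· ∉ ES) := by
        constructor
        · intro e he
          rw [Finset.mem_filter] at he ⊢
          exact ⟨he.1, fun hmem => he.2 (holdE _ hmem)⟩
        · intro hsub
          have h1 : e₀ ∈ Finset.univ.filter (· ∉ ES) :=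
            Finset.mem_filter.mpr ⟨Finset.mem_univ _, he₀ES⟩
          have h2 := Finset.mem_filter.mp (hsub h1)
          exact h2.2 (hnewE _ (List.mem_cons_self))
      have := Finset.card_lt_card hss
      omega
    exact ih VS' ES' ((SC, e₀) :: L) (holdV _ hv₀) ⟨hI1', hI2', hI3', hI4', hI5'⟩
      (le_trans (le_of_eq (by congr)) hmeas)
theorem exists_basis_of_strongly_connected (hc : G.Connected)
    (hb : ∀ v w : G.V, v ≠ w → G.DReachable o w v) :
    ∃ (n : ℕ) (b : Module.Basis (Fin n) ℤ ↥(G.cycleSpace o)),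
      ∀ i : Fin n, ∃ S : Set G.E,
        G.IsCyclicallyOriented o S ∧ (b i : G.E → ℤ) = G.indicator S := by
  obtain ⟨⟨v₀⟩, -⟩ := hc
  have hInv0 : G.EarInv o {v₀} ∅ [] := by
    refine ⟨by simp, ?_, by simp, List.Pairwise.nil, ?_⟩
    · intro u hu w hw
      rcases Set.mem_singleton_iff.mp hu with rfl
      rcases Set.mem_singleton_iff.mp hw with rfl
      exact ⟨[], rfl, by simp⟩
    · intro g _ _ hout e
      exact hout e (Set.notMem_empty e)
  obtain ⟨VS', ES', L, -, ⟨hI1, hI2, hI3, hI4, hI5⟩, hfull⟩ :=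
    ear_extend hb v₀ (Finset.univ.filter (· ∉ (∅ : Set G.E))).card {v₀} ∅ [] rfl hInv0
      (le_of_eq (by congr))
  set n := L.length with hn
  set Sf : Fin n → Set G.E := fun i => (L.get i).1 with hSf
  set f : Fin n → G.E := fun i => (L.get i).2 with hf
  have hgetmem : ∀ i : Fin n, L.get i ∈ L := fun i => List.get_mem L i
  have hcyc : ∀ i, G.IsCyclicallyOriented o (Sf i) := fun i => (hI3 _ (hgetmem i)).1
  have hmemf : ∀ i, f i ∈ Sf i := fun i => (hI3 _ (hgetmem i)).2.1
  have htri : ∀ i j : Fin n, i < j → f i ∉ Sf j := fun i j hij =>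
    List.pairwise_iff_get.mp hI4 i j hij
  set χ : Fin n → ↥(G.cycleSpace o) :=
    fun i => ⟨G.indicator (Sf i), (hcyc i).2⟩ with hχ
  let π : ↥(G.cycleSpace o) →ₗ[ℤ] (Fin n → ℤ) :=
    { toFun := fun g i => (g : G.E → ℤ) (f i)
      map_add' := fun x y => by funext i; simp
      map_smul' := fun c x => by funext i; simp }
  have hπzero : ∀ z, π z = 0 → z = 0 := by
    intro z hz
    have hval : ∀ e, (z : G.E → ℤ) e = 0 := by
      refine hI5 (z : G.E → ℤ) z.2 ?_ ?_
      · intro p hp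
        obtain ⟨i, rfl⟩ := List.mem_iff_get.mp hp
        exact congrFun hz i
      · intro e he
        exact absurd (hfull e) he
    exact Subtype.ext (funext hval)
  have hπinj : Function.Injective π := by
    intro x y h
    have := hπzero (x - y) (by rw [map_sub, h, sub_self])
    rwa [sub_eq_zero] at this
  let Φ : (Fin n → ℤ) →ₗ[ℤ] ↥(G.cycleSpace o) :=
    { toFun := fun c => ∑ i, c i • χ i
      map_add' := by intro a b; simp [add_smul, Finset.sum_add_distrib]
      map_smul' := by
        intro c a
        simp only [RingHom.id_apply, Finset.smul_sum, Pi.smul_apply, smul_smul,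
          smul_eq_mul] }
  set M : Matrix (Fin n) (Fin n) ℤ :=
    Matrix.of fun i j => G.indicator (Sf j) (f i) with hM
  have hM0 : ∀ i j, i < j → M i j = 0 := fun i j h => by
    simp [hM, Multigraph.indicator, htri i j h]
  have hMdiag : ∀ i, M i i = 1 := fun i => by
    simp [hM, Multigraph.indicator, hmemf i]
  have hdet : M.det = 1 := by
    rw [Matrix.det_of_lowerTriangular M
      (fun i j hij => hM0 i j (by exact hij))]
    simp [hMdiag]
  have hMinv := M.invertibleOfIsUnitDet (by rw [hdet]; exact isUnit_one)
  have hcomp : ∀ c, π (Φ c) = M.mulVec c := by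
    intro c
    funext i
    show (↑(∑ j, c j • χ j) : G.E → ℤ) (f i) = _
    rw [AddSubmonoidClass.coe_finset_sum]
    rw [Finset.sum_apply]
    simp only [Matrix.mulVec, dotProduct, SetLike.val_smul, Pi.smul_apply,
      smul_eq_mul, hM, Matrix.of_apply]
    exact Finset.sum_congr rfl fun j _ => mul_comm _ _
  have hbij : Function.Bijective (fun c : Fin n → ℤ => M.mulVec c) :=
    (Matrix.toLinearEquiv' M hMinv).bijective
  have hΦinj : Function.Injective Φ := by
    intro x y h
    apply hbij.1
    show M.mulVec x = M.mulVec y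
    rw [← hcomp, ← hcomp, h]
  have hΦsurj : Function.Surjective Φ := by
    intro y
    obtain ⟨c, hc⟩ := hbij.2 (π y)
    exact ⟨c, hπinj (by rw [hcomp]; exact hc)⟩
  refine ⟨n, (Pi.basisFun ℤ (Fin n)).map (LinearEquiv.ofBijective Φ ⟨hΦinj, hΦsurj⟩),
    fun i => ⟨Sf i, hcyc i, ?_⟩⟩
  rw [Module.Basis.map_apply, Pi.basisFun_apply]
  have hval : (LinearEquiv.ofBijective Φ ⟨hΦinj, hΦsurj⟩) (Pi.single i 1) = χ i := by
    show ∑ j, (Pi.single i (1 : ℤ) : Fin n → ℤ) j • χ j = χ i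
    rw [Finset.sum_eq_single i]
    · rw [Pi.single_eq_same, one_smul]
    · intro j _ hji
      rw [Pi.single_eq_of_ne hji, zero_smul]
    · intro h
      exact absurd (Finset.mem_univ i) h
  rw [hval]

/-- (a) implies (b). -/
theorem strongly_connected_of_totallyCyclic (hc : G.Connected)
    (ht : G.IsTotallyCyclic o) : ∀ v w : G.V, v ≠ w → G.DReachable o w v := by
  intro v w _
  by_contra hnr
  have hW : ({u | G.DReachable o w u} : Set G.V).Nonempty :=
    ⟨w, Relation.ReflTransGen.refl⟩
  obtain ⟨⟨e, h1, h2⟩, -⟩ := ht {u | G.DReachable o w u} hW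
    ⟨w, Relation.ReflTransGen.refl, v, hnr, hc.2 w v⟩
  exact h2 (Relation.ReflTransGen.tail h1 ⟨e, rfl, rfl⟩)

/-- Construction of a chain with prescribed boundary from an undirected walk
avoiding the edge `e`. -/
theorem exists_chain_of_reachable_delete {e : G.E} {a b : G.V}
    (hab : (G.deleteEdges {e}).Reachable a b) :
    ∃ g : G.E → ℤ, g e = 0 ∧ ∀ x, ∑ e', g e' * G.inc o e' x =
      (if b = x then 1 else 0) - (if a = x then 1 else 0) := by
  induction hab with
  | refl => exact ⟨0, rfl, by simp⟩
  | @tail b c _ hadj ih =>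
    obtain ⟨g, hg0, hgx⟩ := ih
    obtain ⟨e', he'⟩ := hadj
    have hne : e'.1 ≠ e := e'.2
    have hkey : (G.src o e'.1 = b ∧ G.tgt o e'.1 = c) ∨
        (G.src o e'.1 = c ∧ G.tgt o e'.1 = b) := by
      rcases he' with ⟨q1, q2⟩ | ⟨q1, q2⟩
      · have q1' : G.fst e'.1 = b := q1
        have q2' : G.snd e'.1 = c := q2
        rcases fst_snd_pair (o := o) e'.1 with ⟨p1, p2⟩ | ⟨p1, p2⟩
        · exact Or.inl ⟨p1 ▸ q1', p2 ▸ q2'⟩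
        · exact Or.inr ⟨p2 ▸ q2', p1 ▸ q1'⟩
      · have q1' : G.fst e'.1 = c := q1
        have q2' : G.snd e'.1 = b := q2
        rcases fst_snd_pair (o := o) e'.1 with ⟨p1, p2⟩ | ⟨p1, p2⟩
        · exact Or.inr ⟨p1 ▸ q1', p2 ▸ q2'⟩
        · exact Or.inl ⟨p2 ▸ q2', p1 ▸ q1'⟩
    rcases hkey with ⟨hsrc, htgt⟩ | ⟨hsrc, htgt⟩
    · refine ⟨fun y => g y + (if y = e'.1 then 1 else 0), by simp [hg0, Ne.symm hne], ?_⟩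
      intro x
      have hd : ∑ y, (if y = e'.1 then (1:ℤ) else 0) * G.inc o y x = G.inc o e'.1 x := by
        rw [Finset.sum_eq_single_of_mem e'.1 (Finset.mem_univ _)]
        · simp
        · intro y _ hy; simp [hy]
      have hsplit : ∀ y, (g y + (if y = e'.1 then (1:ℤ) else 0)) * G.inc o y x =
          g y * G.inc o y x + (if y = e'.1 then (1:ℤ) else 0) * G.inc o y x :=
        fun y => add_mul _ _ _
      rw [Finset.sum_congr rfl fun y _ => hsplit y, Finset.sum_add_distrib, hgx x, hd,
        Multigraph.inc, hsrc, htgt]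
      ring
    · refine ⟨fun y => g y + (if y = e'.1 then -1 else 0), by simp [hg0, Ne.symm hne], ?_⟩
      intro x
      have hd : ∑ y, (if y = e'.1 then (-1:ℤ) else 0) * G.inc o y x =
          -G.inc o e'.1 x := by
        rw [Finset.sum_eq_single_of_mem e'.1 (Finset.mem_univ _)]
        · simp
        · intro y _ hy; simp [hy]
      have hsplit : ∀ y, (g y + (if y = e'.1 then (-1:ℤ) else 0)) * G.inc o y x =
          g y * G.inc o y x + (if y = e'.1 then (-1:ℤ) else 0) * G.inc o y x :=
        fun y => add_mul _ _ _
      rw [Finset.sum_congr rfl fun y _ => hsplit y, Finset.sum_add_distrib, hgx x, hd,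
        Multigraph.inc, hsrc, htgt]
      ring

/-- Through every non-separating edge there is a homology class with nonzero
coordinate. -/
theorem exists_cycle_through_edge (hs : G.sepEdges = ∅) (e : G.E) :
    ∃ f : G.E → ℤ, (∀ x, ∑ e', f e' * G.inc o e' x = 0) ∧ f e ≠ 0 := by
  have hns : ¬ G.IsSeparating e := by
    intro hsep
    have : e ∈ G.sepEdges := hsep
    rw [hs] at this
    exact this
  rw [Multigraph.IsSeparating, not_not] at hns
  obtain ⟨g, hg0, hgx⟩ := exists_chain_of_reachable_delete (o := o) hns
  rcases fst_snd_pair (o := o) e with ⟨h1, h2⟩ | ⟨h1, h2⟩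
  · refine ⟨fun y => g y + (if y = e then -1 else 0), ?_, by simp [hg0]⟩
    intro x
    have hd : ∑ y, (if y = e then (-1:ℤ) else 0) * G.inc o y x = -G.inc o e x := by
      rw [Finset.sum_eq_single_of_mem e (Finset.mem_univ _)]
      · simp
      · intro y _ hy; simp [hy]
    have hsplit : ∀ y, (g y + (if y = e then (-1:ℤ) else 0)) * G.inc o y x =
        g y * G.inc o y x + (if y = e then (-1:ℤ) else 0) * G.inc o y x :=
      fun y => add_mul _ _ _
    rw [Finset.sum_congr rfl fun y _ => hsplit y, Finset.sum_add_distrib, hgx x, hd,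
      Multigraph.inc, ← h1, ← h2]
    ring
  · refine ⟨fun y => g y + (if y = e then 1 else 0), ?_, by simp [hg0]⟩
    intro x
    have hd : ∑ y, (if y = e then (1:ℤ) else 0) * G.inc o y x = G.inc o e x := by
      rw [Finset.sum_eq_single_of_mem e (Finset.mem_univ _)]
      · simp
      · intro y _ hy; simp [hy]
    have hsplit : ∀ y, (g y + (if y = e then (1:ℤ) else 0)) * G.inc o y x =
        g y * G.inc o y x + (if y = e then (1:ℤ) else 0) * G.inc o y x :=
      fun y => add_mul _ _ _
    rw [Finset.sum_congr rfl fun y _ => hsplit y, Finset.sum_add_distrib, hgx x, hd,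
      Multigraph.inc, ← h1, ← h2]
    ring

/-- (c) implies (d). -/
theorem edge_in_cycle_of_basis (hs : G.sepEdges = ∅)
    (h : ∃ (n : ℕ) (b : Module.Basis (Fin n) ℤ ↥(G.cycleSpace o)),
      ∀ i : Fin n, ∃ S : Set G.E,
        G.IsCyclicallyOriented o S ∧ (b i : G.E → ℤ) = G.indicator S) :
    ∀ e : G.E, ∃ S : Set G.E, e ∈ S ∧ G.IsCyclicallyOriented o S := by
  obtain ⟨n, b, hbS⟩ := h
  intro e
  obtain ⟨f, hf, hfe⟩ := exists_cycle_through_edge (o := o) hs e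
  have hfmem : f ∈ G.cycleSpace o := hf
  set x : ↥(G.cycleSpace o) := ⟨f, hfmem⟩ with hx
  have hrepr := b.sum_repr x
  have hval : f e = ∑ i, b.repr x i * (b i : G.E → ℤ) e := by
    conv_lhs => rw [show f = (x : G.E → ℤ) from rfl, ← hrepr]
    rw [AddSubmonoidClass.coe_finset_sum, Finset.sum_apply]
    simp
  have hex : ∃ i, (b i : G.E → ℤ) e ≠ 0 := by
    by_contra hno
    push_neg at hno
    rw [hval] at hfe
    exact hfe (Finset.sum_eq_zero fun i _ => by rw [hno i, mul_zero])
  obtain ⟨i, hi⟩ := hex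
  obtain ⟨S, hScyc, hSval⟩ := hbS i
  refine ⟨S, ?_, hScyc⟩
  rw [hSval] at hi
  by_contra hmem
  exact hi (by simp [Multigraph.indicator, hmem])

/-- (d) implies (a). -/
theorem totallyCyclic_of_cycles
    (hd : ∀ e : G.E, ∃ S : Set G.E, e ∈ S ∧ G.IsCyclicallyOriented o S) :
    G.IsTotallyCyclic o := by
  intro W _ hWreach
  obtain ⟨v, hvW, x, hxW, hreach⟩ := hWreach
  obtain ⟨estar, hcross⟩ := crossing_of_reachable hreach hvW hxW
  obtain ⟨S, heS, hScyc⟩ := hd estar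
  have hprop : ∀ y, ∑ e', G.indicator S e' * G.inc o e' y = 0 := hScyc.2
  set T := Finset.univ.filter (· ∈ W) with hT
  have hsum0 : ∑ e', G.indicator S e' *
      ((if G.tgt o e' ∈ W then (1:ℤ) else 0) - (if G.src o e' ∈ W then 1 else 0)) = 0 := by
    calc ∑ e', G.indicator S e' *
          ((if G.tgt o e' ∈ W then (1:ℤ) else 0) - (if G.src o e' ∈ W then 1 else 0))
        = ∑ e', ∑ y ∈ T, G.indicator S e' * G.inc o e' y := by
          refine Finset.sum_congr rfl fun e' _ => ?_
          rw [← Finset.mul_sum]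
          congr 1
          simp only [Multigraph.inc]
          rw [Finset.sum_sub_distrib, Finset.sum_ite_eq, Finset.sum_ite_eq]
          simp [hT]
      _ = 0 := by
          rw [Finset.sum_comm]
          exact Finset.sum_eq_zero fun y _ => hprop y
  have hsplitstar : (G.src o estar ∈ W ∧ G.tgt o estar ∉ W) ∨
      (G.tgt o estar ∈ W ∧ G.src o estar ∉ W) := by
    rcases fst_snd_pair (o := o) estar with ⟨p1, p2⟩ | ⟨p1, p2⟩ <;>
      rcases hcross with ⟨q1, q2⟩ | ⟨q1, q2⟩
    · exact Or.inl ⟨p1 ▸ q1, p2 ▸ q2⟩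
    · exact Or.inr ⟨p2 ▸ q1, p1 ▸ q2⟩
    · exact Or.inr ⟨p1 ▸ q1, p2 ▸ q2⟩
    · exact Or.inl ⟨p2 ▸ q1, p1 ▸ q2⟩
  have hstarpos : G.indicator S estar = 1 := by simp [Multigraph.indicator, heS]
  constructor
  · -- an edge leaving W
    by_contra hno
    push_neg at hno
    have hnonneg : ∀ e' ∈ Finset.univ, (0:ℤ) ≤ G.indicator S e' *
        ((if G.tgt o e' ∈ W then (1:ℤ) else 0) - (if G.src o e' ∈ W then 1 else 0)) := by
      intro e' _
      by_cases hsrc : G.src o e' ∈ W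
      · have htgt := hno e' hsrc
        simp [Multigraph.indicator, hsrc, htgt]
      · by_cases htgt : G.tgt o e' ∈ W <;>
          by_cases hind : e' ∈ S <;>
          simp [Multigraph.indicator, hsrc, htgt, hind]
    have hall := (Finset.sum_eq_zero_iff_of_nonneg hnonneg).mp hsum0 estar
      (Finset.mem_univ _)
    rcases hsplitstar with ⟨q1, q2⟩ | ⟨q1, q2⟩
    · exact q2 (hno estar q1)
    · rw [hstarpos] at hall
      simp [q1, q2] at hall
  · -- an edge entering W
    by_contra hno
    push_neg at hno
    have hnonpos : ∀ e' ∈ Finset.univ, G.indicator S e' *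
        ((if G.tgt o e' ∈ W then (1:ℤ) else 0) - (if G.src o e' ∈ W then 1 else 0)) ≤ 0 := by
      intro e' _
      by_cases htgt : G.tgt o e' ∈ W
      · have hsrc := hno e' htgt
        simp [Multigraph.indicator, hsrc, htgt]
      · by_cases hsrc : G.src o e' ∈ W <;>
          by_cases hind : e' ∈ S <;>
          simp [Multigraph.indicator, hsrc, htgt, hind]
    have hall := (Finset.sum_eq_zero_iff_of_nonpos hnonpos).mp hsum0 estar
      (Finset.mem_univ _)
    rcases hsplitstar with ⟨q1, q2⟩ | ⟨q1, q2⟩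
    · rw [hstarpos] at hall
      simp [q1, q2] at hall
    · exact q2 (hno estar q1)

end Multigraph

/-- For a connected graph without separating edges with an orientation
`o`, TFAE: (a) `o` is totally cyclic; (b) any two distinct vertices are joined by a
directed path; (c) `H₁(Γ,ℤ)` has a basis of classes of cyclically oriented cycles;
(d) every edge lies in a cyclically oriented cycle. -/
theorem totallyCyclic_tfae (G : Multigraph) (hc : G.Connected) (hs : G.sepEdges = ∅)
    (o : G.E → Bool) :
    List.TFAE
      [G.IsTotallyCyclic o,
       ∀ v w : G.V, v ≠ w → G.DReachable o w v,
       ∃ (n : ℕ) (b : Module.Basis (Fin n) ℤ ↥(G.cycleSpace o)),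
         ∀ i : Fin n, ∃ S : Set G.E,
           G.IsCyclicallyOriented o S ∧ (b i : G.E → ℤ) = G.indicator S,
       ∀ e : G.E, ∃ S : Set G.E, e ∈ S ∧ G.IsCyclicallyOriented o S] := by
  tfae_have 1 → 2
  · exact fun h => Multigraph.strongly_connected_of_totallyCyclic hc h
  tfae_have 2 → 3
  · exact fun h => Multigraph.exists_basis_of_strongly_connected hc h
  tfae_have 3 → 4
  · exact fun h => Multigraph.edge_in_cycle_of_basis hs h
  tfae_have 4 → 1
  · exact fun h => Multigraph.totallyCyclic_of_cycles h
  tfae_finish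
end
end

section
/- Let Γ be a finite graph with an orientation inducing a totally cyclic orientation on Γ∖E(Γ)_sep, and let e₁, e₂ be non-separating edges. The functionals e₁* and e₂* on H₁(Γ,ℝ) satisfy e₁* = u·e₂* for some real u if and only if e₁ and e₂ belong to the same C1-set of Γ, and in this case u = 1. -/
/-! Basic theory of finite multigraphs (loops and multiple edges allowed),
following Caporaso–Viviani, "Torelli theorem for graphs and tropical curves". -/

noncomputable section

open scoped Classical

namespace Multigraph

open Relation Finset

variable (G : Multigraph)

theorem adj_symm : Symmetric G.Adj := by
  rintro u v ⟨e, h | h⟩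
  exacts [⟨e, Or.inr h⟩, ⟨e, Or.inl h⟩]

theorem reach_symm : Symmetric G.Reachable :=
  by
  haveI : Std.Symm G.Adj := ⟨fun _ _ h => G.adj_symm h⟩
  exact fun _ _ h => Std.Symm.symm (r := ReflTransGen G.Adj) _ _ h

theorem quot_mk_eq_iff (u v : G.V) :
    Quot.mk G.Adj u = Quot.mk G.Adj v ↔ G.Reachable u v := by
  rw [Quot.eq]
  constructor
  · intro h
    induction h with
    | rel a b hab => exact ReflTransGen.single hab
    | refl a => exact ReflTransGen.refl
    | symm a b _ ih => exact G.reach_symm ih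
    | trans a b c _ _ ih1 ih2 => exact ih1.trans ih2
  · intro h
    induction h with
    | refl => exact EqvGen.refl _
    | tail _ hbc ih => exact ih.trans _ _ _ (EqvGen.rel _ _ hbc)

theorem incR_eq (o : G.E → Bool) (e : G.E) (v : G.V) :
    G.incR o e v = (if G.tgt o e = v then (1:ℝ) else 0) - (if G.src o e = v then 1 else 0) := by
  unfold incR inc
  split_ifs <;> norm_num

theorem mem_cycleSpaceR (o : G.E → Bool) (f : G.E → ℝ) :
    f ∈ G.cycleSpaceR o ↔ ∀ v, ∑ e, f e * G.incR o e v = 0 := Iff.rfl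

/-- An edge gives adjacency of its endpoints. -/
theorem adj_of_edge (e : G.E) : G.Adj (G.fst e) (G.snd e) := ⟨e, Or.inl ⟨rfl, rfl⟩⟩

theorem adj_src_tgt (o : G.E → Bool) (e : G.E) : G.Adj (G.src o e) (G.tgt o e) := by
  unfold src tgt; cases o e <;> simp <;> [exact G.adj_symm (G.adj_of_edge e); exact G.adj_of_edge e]

end Multigraph
namespace Multigraph

open Relation Finset

variable (G : Multigraph)

/-- A walk from `u` to `v` gives a 1-chain with boundary `δ_v - δ_u`. -/
theorem chain_of_reachable (o : G.E → Bool) {u v : G.V} (h : G.Reachable u v) :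
    ∃ f : G.E → ℝ,
      (∀ x, ∑ e, f e * G.incR o e x = (if v = x then 1 else 0) - (if u = x then 1 else 0)) ∧
      (∀ e, f e ≠ 0 → G.Reachable u (G.fst e) ∧ G.Reachable u (G.snd e)) := by
  induction h with
  | refl => exact ⟨0, by simp, by simp⟩
  | @tail b c hub hbc ih =>
    obtain ⟨f, hf, hsupp⟩ := ih
    obtain ⟨e, he⟩ := hbc
    set σ : ℝ := if G.src o e = b then 1 else -1 with hσ
    have key : ∀ x, σ * G.incR o e x = (if c = x then 1 else 0) - (if b = x then 1 else 0) := by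
      intro x
      rw [incR_eq, hσ]
      unfold src tgt at *
      rcases he with ⟨h1, h2⟩ | ⟨h1, h2⟩ <;> cases hoe : o e <;>
        simp only [hoe, if_true, if_false, Bool.false_eq_true] <;>
        subst h1 <;> subst h2 <;> split_ifs <;> simp_all <;> ring
    refine ⟨f + fun e' => if e' = e then σ else 0, ?_, ?_⟩
    · intro x
      have : ∑ e', ((f + fun e'' => if e'' = e then σ else 0) e') * G.incR o e' x
          = (∑ e', f e' * G.incR o e' x) + ∑ e', (if e' = e then σ * G.incR o e' x else 0) := by
        rw [← Finset.sum_add_distrib]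
        refine Finset.sum_congr rfl fun e' _ => ?_
        by_cases h' : e' = e <;> simp [h'] <;> ring
      rw [this, hf, Finset.sum_ite_eq' Finset.univ e (fun e' => σ * G.incR o e' x)]
      simp only [Finset.mem_univ, if_true]
      rw [key]
      ring
    · intro e' he'
      by_cases h' : e' = e
      · subst h'
        have h1 : G.Reachable u (G.fst e') ∨ G.Reachable u (G.snd e') := by
          rcases he with ⟨h1, _⟩ | ⟨_, h2⟩
          · exact Or.inl (h1 ▸ hub)
          · exact Or.inr (h2 ▸ hub)
        have hadj : G.Adj (G.fst e') (G.snd e') := G.adj_of_edge e'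
        rcases h1 with h1 | h1
        exacts [⟨h1, h1.tail hadj⟩, ⟨h1.tail (G.adj_symm hadj), h1⟩]
      · simp only [Pi.add_apply, h', if_false, add_zero] at he'
        exact hsupp e' he'

/-- Cut identity: summing the cycle condition over a vertex set. -/
theorem cut_sum (o : G.E → Bool) (A : Set G.V) {f : G.E → ℝ} (hf : f ∈ G.cycleSpaceR o) :
    ∑ e, f e * ((if G.tgt o e ∈ A then (1:ℝ) else 0) - (if G.src o e ∈ A then 1 else 0)) = 0 := by
  have key : ∀ e : G.E,
      ((if G.tgt o e ∈ A then (1:ℝ) else 0) - (if G.src o e ∈ A then 1 else 0))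
        = ∑ v ∈ Finset.univ.filter (fun v => v ∈ A), G.incR o e v := by
    intro e
    rw [Finset.sum_congr rfl (fun v _ => G.incR_eq o e v), Finset.sum_sub_distrib]
    rw [Finset.sum_ite_eq (Finset.univ.filter (fun v => v ∈ A)) (G.tgt o e) (fun _ => (1:ℝ))]
    rw [Finset.sum_ite_eq (Finset.univ.filter (fun v => v ∈ A)) (G.src o e) (fun _ => (1:ℝ))]
    simp
  calc ∑ e, f e * ((if G.tgt o e ∈ A then (1:ℝ) else 0) - (if G.src o e ∈ A then 1 else 0))
      = ∑ e, ∑ v ∈ Finset.univ.filter (fun v => v ∈ A), f e * G.incR o e v := by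
        refine Finset.sum_congr rfl fun e _ => ?_
        rw [key e, Finset.mul_sum]
    _ = ∑ v ∈ Finset.univ.filter (fun v => v ∈ A), ∑ e, f e * G.incR o e v := Finset.sum_comm
    _ = 0 := by
        refine Finset.sum_eq_zero fun v _ => hf v

/-- A separating edge has zero coordinate on every cycle. -/
theorem sep_coord_zero (o : G.E → Bool) {e : G.E} (he : G.IsSeparating e)
    {f : G.E → ℝ} (hf : f ∈ G.cycleSpaceR o) : f e = 0 := by
  set A : Set G.V := {v | (G.deleteEdges {e}).Reachable (G.fst e) v} with hA
  have hfst : G.fst e ∈ A := ReflTransGen.refl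
  have hsnd : G.snd e ∉ A := he
  have hclosed : ∀ e' : G.E, e' ≠ e → ((G.fst e' ∈ A) ↔ (G.snd e' ∈ A)) := by
    intro e' hne
    have hadj : (G.deleteEdges {e}).Adj (G.fst e') (G.snd e') :=
      ⟨⟨e', by simp [hne]⟩, Or.inl ⟨rfl, rfl⟩⟩
    constructor
    · intro h1; exact h1.tail hadj
    · intro h1; exact h1.tail ((G.deleteEdges {e}).adj_symm hadj)
  have hcross : ∀ e' : G.E, e' ≠ e → ((G.tgt o e' ∈ A) ↔ (G.src o e' ∈ A)) := by
    intro e' hne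
    unfold src tgt
    cases o e' <;> simp only [if_true, if_false, Bool.false_eq_true]
    · exact hclosed e' hne
    · exact (hclosed e' hne).symm
  have h0 := G.cut_sum o A hf
  rw [Finset.sum_eq_single e] at h0
  · have : (if G.tgt o e ∈ A then (1:ℝ) else 0) - (if G.src o e ∈ A then 1 else 0) ≠ 0 := by
      unfold src tgt
      cases o e <;> simp [hfst, hsnd]
    rcases mul_eq_zero.mp h0 with h | h
    exacts [h, absurd h this]
  · intro e' _ hne
    have h1 := hcross e' hne
    by_cases h2 : G.tgt o e' ∈ A
    · rw [if_pos h2, if_pos (h1.mp h2)]; ring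
    · rw [if_neg h2, if_neg (fun h => h2 (h1.mpr h))]; ring
  · intro h; exact absurd (Finset.mem_univ e) h

theorem reach_of_coord_ne (o : G.E → Bool) {f : G.E → ℝ} (hf : f ∈ G.cycleSpaceR o)
    {e : G.E} (h : f e ≠ 0) :
    (G.deleteEdges {e}).Reachable (G.fst e) (G.snd e) := by
  by_contra hc
  exact h (G.sep_coord_zero o hc hf)

end Multigraph
namespace Multigraph

open Relation Finset

variable (G : Multigraph)

theorem incR_delete (o : G.E → Bool) (T : Set G.E) (e : (G.deleteEdges T).E) (x : G.V) :
    (G.deleteEdges T).incR (fun e' => o e'.1) e x = G.incR o e.1 x := rfl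

/-- Sums of chains vanishing on `T` transfer across deletion of `T`. -/
theorem sum_inc_delete (o : G.E → Bool) (T : Set G.E) (f : G.E → ℝ)
    (hf : ∀ e ∈ T, f e = 0) (x : G.V) :
    ∑ e : (G.deleteEdges T).E, f e.1 * (G.deleteEdges T).incR (fun e' => o e'.1) e x
      = ∑ e, f e * G.incR o e x := by
  have h1 : ∑ e : (G.deleteEdges T).E, f e.1 * (G.deleteEdges T).incR (fun e' => o e'.1) e x
      = ∑ e : {e : G.E // e ∉ T}, f e.1 * G.incR o e.1 x :=
    Finset.sum_congr (congrArg (fun i => @Finset.univ _ i) (Subsingleton.elim _ _))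
      (fun _ _ => rfl)
  rw [h1]
  rw [← Finset.sum_subtype (Finset.univ.filter (fun e : G.E => e ∉ T))
    (by intro x; simp) (fun e => f e * G.incR o e x)]
  refine Finset.sum_subset (Finset.filter_subset _ _) ?_
  intro e _ he
  simp only [Finset.mem_filter, Finset.mem_univ, true_and, not_not] at he
  rw [hf e he, zero_mul]

theorem mem_cycleSpaceR_delete_iff (o : G.E → Bool) (T : Set G.E) (f : G.E → ℝ)
    (hf : ∀ e ∈ T, f e = 0) :
    ((fun e : (G.deleteEdges T).E => f e.1) ∈
        (G.deleteEdges T).cycleSpaceR (fun e' => o e'.1)) ↔ f ∈ G.cycleSpaceR o := by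
  rw [mem_cycleSpaceR, mem_cycleSpaceR]
  exact forall_congr' fun x => by rw [G.sum_inc_delete o T f hf x]

/-- Reachability is monotone under smaller deletion sets. -/
theorem reach_delete_mono {T T' : Set G.E} (hT : T ⊆ T') {u v : G.V}
    (h : (G.deleteEdges T').Reachable u v) : (G.deleteEdges T).Reachable u v := by
  refine ReflTransGen.mono ?_ _ _ h
  rintro a b ⟨e, he⟩
  exact ⟨⟨e.1, fun hm => e.2 (hT hm)⟩, he⟩

theorem src_tgt_cases (o : G.E → Bool) (e : G.E) :
    (G.src o e = G.fst e ∧ G.tgt o e = G.snd e) ∨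
    (G.src o e = G.snd e ∧ G.tgt o e = G.fst e) := by
  unfold src tgt; cases o e <;> simp

/-- Through any non-separating edge there is a cycle with coefficient 1. -/
theorem exists_cycle_through (o : G.E → Bool) {e : G.E} (he : ¬ G.IsSeparating e) :
    ∃ g ∈ G.cycleSpaceR o, g e = 1 ∧
      ∀ e', g e' ≠ 0 → e' = e ∨
        ((G.deleteEdges {e}).Reachable (G.tgt o e) (G.fst e') ∧
         (G.deleteEdges {e}).Reachable (G.tgt o e) (G.snd e')) := by
  unfold IsSeparating at he
  rw [not_not] at he
  have hts : (G.deleteEdges {e}).Reachable (G.tgt o e) (G.src o e) := by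
    rcases G.src_tgt_cases o e with ⟨h1, h2⟩ | ⟨h1, h2⟩
    · rw [h1, h2]; exact (G.deleteEdges {e}).reach_symm he
    · rw [h1, h2]; exact he
  obtain ⟨k, hk, hsupp⟩ := (G.deleteEdges {e}).chain_of_reachable (fun e' => o e'.1) hts
  set g : G.E → ℝ := (fun e' => if h : e' ∈ ({e} : Set G.E) then 0 else k ⟨e', h⟩)
      + fun e' => if e' = e then 1 else 0 with hg
  have hke : ∀ e' ∈ ({e} : Set G.E),
      (fun e'' => if h : e'' ∈ ({e} : Set G.E) then 0 else k ⟨e'', h⟩) e' = 0 := by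
    intro e' he'; simp [he']
  have hsum : ∀ x, ∑ e', (fun e'' => if h : e'' ∈ ({e} : Set G.E) then 0 else k ⟨e'', h⟩) e'
      * G.incR o e' x
      = (if G.src o e = x then 1 else 0) - (if G.tgt o e = x then 1 else 0) := by
    intro x
    rw [← G.sum_inc_delete o {e} _ hke x]
    erw [← hk x]
    refine Finset.sum_congr rfl fun e' _ => ?_
    congr 1
    simp [e'.2]
    rfl
  refine ⟨g, ?_, ?_, ?_⟩
  · intro x
    have : ∑ e', g e' * G.incR o e' x
        = (∑ e', (fun e'' => if h : e'' ∈ ({e} : Set G.E) then 0 else k ⟨e'', h⟩) e'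
            * G.incR o e' x)
          + ∑ e', (if e' = e then G.incR o e' x else 0) := by
      rw [← Finset.sum_add_distrib]
      refine Finset.sum_congr rfl fun e' _ => ?_
      by_cases h' : e' = e <;> simp [hg, h'] <;> ring
    rw [this, hsum x, Finset.sum_ite_eq' Finset.univ e (fun e' => G.incR o e' x)]
    simp only [Finset.mem_univ, if_true]
    rw [incR_eq]
    ring
  · simp [hg]
  · intro e' he'
    by_cases h' : e' = e
    · exact Or.inl h'
    · refine Or.inr ?_
      have : k ⟨e', h'⟩ ≠ 0 := by
        intro h0
        apply he'
        simp [hg, h', h0]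
      exact hsupp ⟨e', h'⟩ this

end Multigraph
namespace Multigraph

open Relation Finset

variable (G : Multigraph)

theorem sum_inc_filter (o : G.E → Bool) (e : G.E) (P : G.V → Prop) :
    ∑ v ∈ Finset.univ.filter (fun v => P v), G.incR o e v
      = (if P (G.tgt o e) then (1:ℝ) else 0) - (if P (G.src o e) then 1 else 0) := by
  rw [Finset.sum_congr rfl (fun v _ => G.incR_eq o e v), Finset.sum_sub_distrib]
  rw [Finset.sum_ite_eq (Finset.univ.filter (fun v => P v)) (G.tgt o e) (fun _ => (1:ℝ))]
  rw [Finset.sum_ite_eq (Finset.univ.filter (fun v => P v)) (G.src o e) (fun _ => (1:ℝ))]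
  simp

/-- Any demand vector with zero sum on every connected component is a boundary. -/
theorem flow_exists (o : G.E → Bool) (d : G.V → ℝ)
    (hd : ∀ x : G.V,
      ∑ v ∈ Finset.univ.filter (fun v => Quot.mk G.Adj v = Quot.mk G.Adj x), d v = 0) :
    ∃ f : G.E → ℝ, ∀ x, ∑ e, f e * G.incR o e x = d x := by
  set r : G.V → G.V := fun v => (Quot.mk G.Adj v).out with hr
  have hrr : ∀ v, Quot.mk G.Adj (r v) = Quot.mk G.Adj v := fun v => Quot.out_eq _
  have hrv : ∀ v, G.Reachable (r v) v := fun v => (G.quot_mk_eq_iff _ _).mp (hrr v)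
  choose c hc _ using fun v => G.chain_of_reachable o (hrv v)
  refine ⟨fun e => ∑ v, d v * c v e, fun x => ?_⟩
  calc ∑ e, (∑ v, d v * c v e) * G.incR o e x
      = ∑ e, ∑ v, d v * (c v e * G.incR o e x) := by
        refine Finset.sum_congr rfl fun e _ => ?_
        rw [Finset.sum_mul]
        exact Finset.sum_congr rfl fun v _ => by ring
    _ = ∑ v, ∑ e, d v * (c v e * G.incR o e x) := Finset.sum_comm
    _ = ∑ v, d v * ((if v = x then 1 else 0) - (if r v = x then 1 else 0)) := by
        refine Finset.sum_congr rfl fun v _ => ?_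
        rw [← Finset.mul_sum, hc v x]
    _ = (∑ v, if v = x then d v else 0) - ∑ v, if r v = x then d v else 0 := by
        rw [← Finset.sum_sub_distrib]
        refine Finset.sum_congr rfl fun v _ => ?_
        split_ifs <;> ring
    _ = d x := by
        rw [Finset.sum_ite_eq' Finset.univ x d]
        simp only [Finset.mem_univ, if_true]
        rw [← Finset.sum_filter]
        have h0 : ∑ v ∈ Finset.univ.filter (fun v => r v = x), d v = 0 := by
          by_cases hx : r x = x
          · have heq : Finset.univ.filter (fun v => r v = x)
                = Finset.univ.filter (fun v => Quot.mk G.Adj v = Quot.mk G.Adj x) := by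
              ext v
              simp only [Finset.mem_filter, Finset.mem_univ, true_and]
              constructor
              · intro hv
                rw [← hrr v, hv]
              · intro hv
                show (Quot.mk G.Adj v).out = x
                rw [hv]; exact hx
            rw [heq, hd x]
          · have heq : Finset.univ.filter (fun v => r v = x) = ∅ := by
              ext v
              simp only [Finset.mem_filter, Finset.mem_univ, true_and,
                Finset.notMem_empty, iff_false]
              intro hv
              apply hx
              have : r (r v) = r v := by
                show ((Quot.mk G.Adj (r v)).out) = r v
                rw [hrr v]
              rw [← hv, this, hv]
            rw [heq, Finset.sum_empty]
        rw [h0, sub_zero]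

/-- The boundary map `C₁ → C₀`. -/
def bMap (o : G.E → Bool) : (G.E → ℝ) →ₗ[ℝ] (G.V → ℝ) where
  toFun f := fun v => ∑ e, f e * G.incR o e v
  map_add' f g := by
    funext v
    simp [add_mul, Finset.sum_add_distrib]
  map_smul' a f := by
    funext v
    simp [Finset.mul_sum, mul_assoc]

theorem ker_bMap (o : G.E → Bool) : LinearMap.ker (G.bMap o) = G.cycleSpaceR o := by
  ext f
  rw [LinearMap.mem_ker, mem_cycleSpaceR]
  constructor
  · intro h v; exact congrFun h v
  · intro h; funext v; exact h v

noncomputable instance fintypeQuotAdj : Fintype (Quot G.Adj) :=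
  Fintype.ofSurjective (Quot.mk G.Adj) (fun q => Quot.exists_rep q)

/-- The component-sum map `C₀ → ℝ^{components}`. -/
def qMap : (G.V → ℝ) →ₗ[ℝ] (Quot G.Adj → ℝ) where
  toFun g := fun q => ∑ v ∈ Finset.univ.filter (fun v => Quot.mk G.Adj v = q), g v
  map_add' f g := by funext q; simp [Finset.sum_add_distrib]
  map_smul' a f := by funext q; simp [Finset.mul_sum]

theorem range_qMap : LinearMap.range G.qMap = ⊤ := by
  rw [LinearMap.range_eq_top]
  intro h
  refine ⟨fun v => if (Quot.mk G.Adj v).out = v then h (Quot.mk G.Adj v) else 0, ?_⟩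
  funext q
  show ∑ v ∈ Finset.univ.filter (fun v => Quot.mk G.Adj v = q),
      (if (Quot.mk G.Adj v).out = v then h (Quot.mk G.Adj v) else 0) = h q
  have hcong : ∀ v ∈ Finset.univ.filter (fun v => Quot.mk G.Adj v = q),
      (if (Quot.mk G.Adj v).out = v then h (Quot.mk G.Adj v) else 0)
        = (if q.out = v then h q else 0) := by
    intro v hv
    simp only [Finset.mem_filter, Finset.mem_univ, true_and] at hv
    rw [hv]
  rw [Finset.sum_congr rfl hcong]
  rw [Finset.sum_ite_eq (Finset.univ.filter (fun v => Quot.mk G.Adj v = q)) q.out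
    (fun _ => h q)]
  rw [if_pos]
  simp only [Finset.mem_filter, Finset.mem_univ, true_and]
  exact Quot.out_eq q

theorem range_bMap (o : G.E → Bool) :
    LinearMap.range (G.bMap o) = LinearMap.ker G.qMap := by
  apply le_antisymm
  · rintro _ ⟨f, rfl⟩
    rw [LinearMap.mem_ker]
    funext q
    show ∑ v ∈ Finset.univ.filter (fun v => Quot.mk G.Adj v = q),
        (∑ e, f e * G.incR o e v) = 0
    rw [Finset.sum_comm]
    refine Finset.sum_eq_zero fun e _ => ?_
    rw [← Finset.mul_sum, G.sum_inc_filter o e (fun v => Quot.mk G.Adj v = q)]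
    have : Quot.mk G.Adj (G.tgt o e) = Quot.mk G.Adj (G.src o e) :=
      (G.quot_mk_eq_iff _ _).mpr (G.reach_symm (ReflTransGen.single (G.adj_src_tgt o e)))
    rw [this, sub_self, mul_zero]
  · intro g hg
    rw [LinearMap.mem_ker] at hg
    obtain ⟨f, hf⟩ := G.flow_exists o g (fun x => congrFun hg (Quot.mk G.Adj x))
    exact ⟨f, funext hf⟩

/-- Dimension formula: `dim H₁(Γ,ℝ) = b₁(Γ)`. -/
theorem finrank_cycleSpaceR (o : G.E → Bool) :
    (Module.finrank ℝ ↥(G.cycleSpaceR o) : ℤ) = G.b1 := by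
  have h1 := LinearMap.finrank_range_add_finrank_ker (G.bMap o)
  have h2 := LinearMap.finrank_range_add_finrank_ker G.qMap
  rw [ker_bMap, range_bMap] at h1
  rw [range_qMap] at h2
  have hE : Module.finrank ℝ (G.E → ℝ) = Fintype.card G.E := Module.finrank_pi ℝ
  have hV : Module.finrank ℝ (G.V → ℝ) = Fintype.card G.V := Module.finrank_pi ℝ
  have hQ : Module.finrank ℝ ↥(⊤ : Submodule ℝ (Quot G.Adj → ℝ))
      = Fintype.card (Quot G.Adj) := by
    rw [finrank_top]; exact Module.finrank_pi ℝ
  rw [hE] at h1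
  rw [hQ, hV] at h2
  unfold b1 numComponents
  rw [Nat.card_eq_fintype_card, Nat.card_eq_fintype_card, Nat.card_eq_fintype_card]
  omega

end Multigraph
namespace Multigraph

open Relation Finset

variable (G : Multigraph)

def IsWalk : G.V → G.V → List G.E → Prop
  | u, v, [] => u = v
  | u, v, e :: l => (G.fst e = u ∧ IsWalk (G.snd e) v l) ∨ (G.snd e = u ∧ IsWalk (G.fst e) v l)

theorem isWalk_nil (u v : G.V) : G.IsWalk u v [] ↔ u = v := Iff.rfl

theorem isWalk_cons (u v : G.V) (e : G.E) (l : List G.E) :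
    G.IsWalk u v (e :: l) ↔
      (G.fst e = u ∧ G.IsWalk (G.snd e) v l) ∨ (G.snd e = u ∧ G.IsWalk (G.fst e) v l) := Iff.rfl

theorem reachable_iff_walk (u v : G.V) : G.Reachable u v ↔ ∃ l, G.IsWalk u v l := by
  constructor
  · intro h
    induction h using Relation.ReflTransGen.head_induction_on with
    | refl => exact ⟨[], rfl⟩
    | head hab _ ih =>
      obtain ⟨l, hl⟩ := ih
      obtain ⟨e, he⟩ := hab
      rcases he with ⟨h1, h2⟩ | ⟨h1, h2⟩
      · exact ⟨e :: l, Or.inl ⟨h1, h2 ▸ hl⟩⟩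
      · exact ⟨e :: l, Or.inr ⟨h2, h1 ▸ hl⟩⟩
  · rintro ⟨l, hl⟩
    induction l generalizing u with
    | nil => rw [G.isWalk_nil] at hl; exact hl ▸ ReflTransGen.refl
    | cons e t ih =>
      rcases (G.isWalk_cons u v e t).mp hl with ⟨h1, h2⟩ | ⟨h1, h2⟩
      · exact ReflTransGen.head ⟨e, Or.inl ⟨h1, rfl⟩⟩ (ih _ h2)
      · exact ReflTransGen.head ⟨e, Or.inr ⟨rfl, h1⟩⟩ (ih _ h2)

/-- Excision of separating edges: a walk avoiding `T` between two vertices of the same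
component of `Γ∖E(Γ)_sep` can be modified to avoid all separating edges as well. -/
theorem reach_excise_sep (T : Set G.E) {u v : G.V}
    (hγ : (G.deleteEdges G.sepEdges).Reachable u v)
    (h : (G.deleteEdges T).Reachable u v) :
    (G.deleteEdges (G.sepEdges ∪ T)).Reachable u v := by
  obtain ⟨l, hl⟩ := (((G.deleteEdges T)).reachable_iff_walk u v).mp h
  suffices H : ∀ n (u : G.V) (l : List (G.deleteEdges T).E), l.length ≤ n →
      (G.deleteEdges T).IsWalk u v l → (G.deleteEdges G.sepEdges).Reachable u v →
      (G.deleteEdges (G.sepEdges ∪ T)).Reachable u v from H l.length u l le_rfl hl hγ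
  intro n
  induction n with
  | zero =>
    intro u l hlen hw _
    rw [Nat.le_zero, List.length_eq_zero_iff] at hlen
    subst hlen
    exact hw ▸ ReflTransGen.refl
  | succ m ih =>
    intro u l hlen hw hγ
    match l with
    | [] => exact hw ▸ ReflTransGen.refl
    | e :: t =>
      simp only [List.length_cons, Nat.succ_le_succ_iff] at hlen
      by_cases hsep : G.IsSeparating e.1
      · -- separating first edge: excise
        -- `u` is an endpoint of `e.1`; let `u'` be the other endpoint.
        obtain ⟨u', hu, hu', hwt⟩ :
            ∃ u', (G.fst e.1 = u ∧ G.snd e.1 = u' ∨ G.fst e.1 = u' ∧ G.snd e.1 = u) ∧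
              ¬ (G.deleteEdges {e.1}).Reachable u u' ∧
              (G.deleteEdges T).IsWalk u' v t := by
          rcases ((G.deleteEdges T).isWalk_cons u v e t).mp hw with ⟨h1, h2⟩ | ⟨h1, h2⟩
          · refine ⟨G.snd e.1, Or.inl ⟨h1, rfl⟩, ?_, h2⟩
            intro hr
            exact hsep (h1 ▸ hr)
          · refine ⟨G.fst e.1, Or.inr ⟨rfl, h1⟩, ?_, h2⟩
            intro hr
            exact hsep (h1 ▸ (G.deleteEdges {e.1}).reach_symm hr)
        set A : Set G.V := {w | (G.deleteEdges {e.1}).Reachable u w} with hA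
        have huA : u ∈ A := ReflTransGen.refl
        have hu'A : u' ∉ A := hu'
        have hvA : v ∈ A := by
          have h1 : ({e.1} : Set G.E) ⊆ G.sepEdges := by
            intro x hx
            rw [Set.mem_singleton_iff] at hx
            exact hx ▸ hsep
          exact G.reach_delete_mono h1 hγ
        have honly : ∀ z, z ∈ A → (z = G.fst e.1 ∨ z = G.snd e.1) → z = u := by
          intro z hz hzend
          rcases hu with ⟨q1, q2⟩ | ⟨q1, q2⟩
          · rcases hzend with hz1 | hz1
            · exact hz1.trans q1
            · exact absurd (show u' ∈ A by rw [← q2, ← hz1]; exact hz) hu'A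
          · rcases hzend with hz1 | hz1
            · exact absurd (show u' ∈ A by rw [← q1, ← hz1]; exact hz) hu'A
            · exact hz1.trans q2
        have hclosed : ∀ (e' : G.E), e' ≠ e.1 → ∀ z w, z ∈ A →
            (G.fst e' = z ∧ G.snd e' = w) ∨ (G.fst e' = w ∧ G.snd e' = z) → w ∈ A := by
          intro e' hne z w hz hjoin
          exact hz.tail ⟨⟨e', by simp [hne]⟩, hjoin⟩
        have help : ∀ (t' : List (G.deleteEdges T).E) (w : G.V),
            (G.deleteEdges T).IsWalk w v t' → w ∉ A →
            ∃ t'' : List (G.deleteEdges T).E,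
              t''.length < t'.length ∧ (G.deleteEdges T).IsWalk u v t'' := by
          intro t'
          induction t' with
          | nil =>
            intro w hw' hwA
            erw [(G.deleteEdges T).isWalk_nil] at hw'
            exact absurd (hw' ▸ hvA) hwA
          | cons e' t₂ ih2 =>
            intro w hw' hwA
            obtain ⟨w', hjoin, hwt₂⟩ :
                ∃ w', ((G.fst e'.1 = w ∧ G.snd e'.1 = w') ∨ (G.fst e'.1 = w' ∧ G.snd e'.1 = w)) ∧
                  (G.deleteEdges T).IsWalk w' v t₂ := by
              rcases ((G.deleteEdges T).isWalk_cons w v e' t₂).mp hw' with ⟨h1, h2⟩ | ⟨h1, h2⟩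
              · exact ⟨G.snd e'.1, Or.inl ⟨h1, rfl⟩, h2⟩
              · exact ⟨G.fst e'.1, Or.inr ⟨rfl, h1⟩, h2⟩
            by_cases hw'A : w' ∈ A
            · -- the edge `e'` crosses the cut, so it must be `e.1` and `w' = u`
              have hne : e'.1 = e.1 := by
                by_contra hne
                apply hwA
                refine hclosed e'.1 hne w' w hw'A ?_
                rcases hjoin with ⟨h1, h2⟩ | ⟨h1, h2⟩
                · exact Or.inr ⟨h1, h2⟩
                · exact Or.inl ⟨h1, h2⟩
              have hw'u : w' = u := by
                refine honly w' hw'A ?_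
                rcases hjoin with ⟨_, h2⟩ | ⟨h1, _⟩
                · exact Or.inr (hne ▸ h2.symm)
                · exact Or.inl (hne ▸ h1.symm)
              exact ⟨t₂, by simp, hw'u ▸ hwt₂⟩
            · obtain ⟨t'', ht1, ht2⟩ := ih2 w' hwt₂ hw'A
              exact ⟨t'', ht1.trans (by simp), ht2⟩
        obtain ⟨t'', hlen'', hw''⟩ := help t u' hwt hu'A
        exact ih u t'' (by omega) hw'' hγ
      · -- non-separating first edge: keep it
        obtain ⟨u', hstep, hstepγ, hwt⟩ :
            ∃ u', (G.deleteEdges (G.sepEdges ∪ T)).Adj u u' ∧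
              (G.deleteEdges G.sepEdges).Adj u u' ∧ (G.deleteEdges T).IsWalk u' v t := by
          have hmem : e.1 ∉ G.sepEdges ∪ T := by
            rintro (hx | hx)
            exacts [hsep hx, e.2 hx]
          rcases ((G.deleteEdges T).isWalk_cons u v e t).mp hw with ⟨h1, h2⟩ | ⟨h1, h2⟩
          · exact ⟨G.snd e.1, ⟨⟨e.1, hmem⟩, Or.inl ⟨h1, rfl⟩⟩, ⟨⟨e.1, hsep⟩, Or.inl ⟨h1, rfl⟩⟩, h2⟩
          · exact ⟨G.fst e.1, ⟨⟨e.1, hmem⟩, Or.inr ⟨rfl, h1⟩⟩, ⟨⟨e.1, hsep⟩, Or.inr ⟨rfl, h1⟩⟩, h2⟩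
        have hγ' : (G.deleteEdges G.sepEdges).Reachable u' v :=
          ((G.deleteEdges G.sepEdges).reach_symm (ReflTransGen.single hstepγ)).trans hγ
        exact ReflTransGen.head hstep (ih u' t hlen hwt hγ')

end Multigraph
namespace Multigraph

open Relation Finset

variable (G : Multigraph)

/-- The contracted graph `Γ̃(S)` with isolated vertices removed. -/
def contrC (S : Set G.E) : Multigraph :=
  ((G.deleteEdges G.sepEdges).contractCompl {e | e.1 ∈ S}).core

/-- The orientation induced on the contraction. -/
def oC (o : G.E → Bool) (S : Set G.E) : (G.contrC S).E → Bool := fun eb => o eb.1.1.1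

/-- The relation whose quotient gives the vertices of the contraction. -/
def adjR (S : Set G.E) : G.V → G.V → Prop :=
  ((G.deleteEdges G.sepEdges).deleteEdges {e | e.1 ∈ S}).Adj

theorem contrC_fst_val (S : Set G.E) (eb : (G.contrC S).E) :
    ((G.contrC S).fst eb).1 = Quot.mk (G.adjR S) (G.fst eb.1.1.1) := rfl

theorem contrC_snd_val (S : Set G.E) (eb : (G.contrC S).E) :
    ((G.contrC S).snd eb).1 = Quot.mk (G.adjR S) (G.snd eb.1.1.1) := rfl

theorem contrC_src_val (o : G.E → Bool) (S : Set G.E) (eb : (G.contrC S).E) :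
    ((G.contrC S).src (G.oC o S) eb).1 = Quot.mk (G.adjR S) (G.src o eb.1.1.1) := by
  unfold src oC
  cases h : o eb.1.1.1 <;> simp [h] <;> rfl

theorem contrC_tgt_val (o : G.E → Bool) (S : Set G.E) (eb : (G.contrC S).E) :
    ((G.contrC S).tgt (G.oC o S) eb).1 = Quot.mk (G.adjR S) (G.tgt o eb.1.1.1) := by
  unfold tgt oC
  cases h : o eb.1.1.1 <;> simp [h] <;> rfl

theorem contrC_incR (o : G.E → Bool) (S : Set G.E) (eb : (G.contrC S).E)
    (x : (G.contrC S).V) :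
    (G.contrC S).incR (G.oC o S) eb x
      = (if Quot.mk (G.adjR S) (G.tgt o eb.1.1.1) = x.1 then (1:ℝ) else 0)
        - (if Quot.mk (G.adjR S) (G.src o eb.1.1.1) = x.1 then 1 else 0) := by
  rw [incR_eq]
  congr 1
  · refine if_congr ?_ rfl rfl
    erw [Subtype.ext_iff, contrC_tgt_val]
    exact Iff.rfl
  · refine if_congr ?_ rfl rfl
    erw [Subtype.ext_iff, contrC_src_val]
    exact Iff.rfl

/-- Edges of the contraction correspond to elements of `S`. -/
def ecs (S : Set G.E) (hSn : ∀ e ∈ S, ¬ G.IsSeparating e) :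
    (G.contrC S).E ≃ {e : G.E // e ∈ S} where
  toFun eb := ⟨eb.1.1.1, eb.1.2⟩
  invFun e := ⟨⟨⟨e.1, hSn e.1 e.2⟩, e.2⟩, Set.mem_univ _⟩
  left_inv eb := rfl
  right_inv e := rfl

theorem sum_contrC (S : Set G.E) (hSn : ∀ e ∈ S, ¬ G.IsSeparating e) (Φ : G.E → ℝ) :
    ∑ eb : (G.contrC S).E, Φ eb.1.1.1 = ∑ e ∈ Finset.univ.filter (fun e => e ∈ S), Φ e := by
  have h1 : ∑ eb : (G.contrC S).E, Φ eb.1.1.1 = ∑ s : {e : G.E // e ∈ S}, Φ s.1 :=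
    Fintype.sum_equiv (G.ecs S hSn) _ _ (fun eb => rfl)
  exact h1.trans (Finset.sum_subtype (Finset.univ.filter (fun e => e ∈ S))
    (fun x => by simp) Φ).symm

/-- Restriction of a cycle of `Γ̃` to the contraction is a cycle. -/
theorem mem_cycleSpaceR_contrC (o : G.E → Bool) (S : Set G.E)
    (hSn : ∀ e ∈ S, ¬ G.IsSeparating e)
    {g : (G.deleteEdges G.sepEdges).E → ℝ}
    (hg : g ∈ (G.deleteEdges G.sepEdges).cycleSpaceR (fun e => o e.1)) :
    (fun eb : (G.contrC S).E => g eb.1.1) ∈ (G.contrC S).cycleSpaceR (G.oC o S) := by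
  set gext : G.E → ℝ := fun e => if h : e ∈ G.sepEdges then 0 else g ⟨e, h⟩ with hgext
  have hgext0 : ∀ e ∈ G.sepEdges, gext e = 0 := by
    intro e he; simp [hgext, he]
  have hgrestr : (fun eh : (G.deleteEdges G.sepEdges).E => gext eh.1) = g := by
    funext eh
    simp only [hgext]
    rw [dif_neg eh.2]
    rfl
  have hgmem : gext ∈ G.cycleSpaceR o := by
    rw [← G.mem_cycleSpaceR_delete_iff o G.sepEdges gext hgext0, hgrestr]
    exact hg
  intro x
  obtain ⟨X, hX⟩ := x
  have step1 : ∀ eb : (G.contrC S).E,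
      g eb.1.1 * (G.contrC S).incR (G.oC o S) eb ⟨X, hX⟩
        = gext eb.1.1.1 * ((if Quot.mk (G.adjR S) (G.tgt o eb.1.1.1) = X then (1:ℝ) else 0)
            - (if Quot.mk (G.adjR S) (G.src o eb.1.1.1) = X then 1 else 0)) := by
    intro eb
    erw [contrC_incR]
    congr 1
    show g eb.1.1 = gext eb.1.1.1
    rw [← hgrestr]
  rw [Finset.sum_congr rfl (fun eb _ => step1 eb)]
  rw [G.sum_contrC S hSn (fun e => gext e * ((if Quot.mk (G.adjR S) (G.tgt o e) = X then (1:ℝ) else 0)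
    - (if Quot.mk (G.adjR S) (G.src o e) = X then 1 else 0)))]
  have step2 : ∑ e ∈ Finset.univ.filter (fun e => e ∈ S),
      gext e * ((if Quot.mk (G.adjR S) (G.tgt o e) = X then (1:ℝ) else 0)
        - (if Quot.mk (G.adjR S) (G.src o e) = X then 1 else 0))
      = ∑ e : G.E, gext e * ((if Quot.mk (G.adjR S) (G.tgt o e) = X then (1:ℝ) else 0)
        - (if Quot.mk (G.adjR S) (G.src o e) = X then 1 else 0)) := by
    refine Finset.sum_subset (Finset.filter_subset _ _) ?_
    intro e _ heS
    simp only [Finset.mem_filter, Finset.mem_univ, true_and] at heS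
    by_cases hsep : e ∈ G.sepEdges
    · rw [hgext0 e hsep, zero_mul]
    · have hadj : G.adjR S (G.fst e) (G.snd e) := ⟨⟨⟨e, hsep⟩, heS⟩, Or.inl ⟨rfl, rfl⟩⟩
      have hmk : Quot.mk (G.adjR S) (G.tgt o e) = Quot.mk (G.adjR S) (G.src o e) := by
        rcases G.src_tgt_cases o e with ⟨h1, h2⟩ | ⟨h1, h2⟩
        · rw [h1, h2]; exact (Quot.sound hadj).symm
        · rw [h1, h2]; exact Quot.sound hadj
      rw [hmk, sub_self, mul_zero]
  rw [step2]
  have step3 : ∀ e : G.E,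
      (if Quot.mk (G.adjR S) (G.tgt o e) = X then (1:ℝ) else 0)
        - (if Quot.mk (G.adjR S) (G.src o e) = X then 1 else 0)
      = ∑ v ∈ Finset.univ.filter (fun v => Quot.mk (G.adjR S) v = X), G.incR o e v :=
    fun e => (G.sum_inc_filter o e (fun v => Quot.mk (G.adjR S) v = X)).symm
  rw [Finset.sum_congr rfl (fun e _ => by rw [step3 e, Finset.mul_sum])]
  rw [Finset.sum_comm]
  exact Finset.sum_eq_zero fun v _ => hgmem v

/-- Reachability in `Γ̃` projects to the contraction with isolated vertices removed. -/
theorem reach_contrC (S : Set G.E) {a b : G.V}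
    (h : (G.deleteEdges G.sepEdges).Reachable a b)
    (ha : ∃ eb ∈ (Set.univ : Set ((G.deleteEdges G.sepEdges).contractCompl {e | e.1 ∈ S}).E),
      ((G.deleteEdges G.sepEdges).contractCompl {e | e.1 ∈ S}).fst eb = Quot.mk (G.adjR S) a ∨
      ((G.deleteEdges G.sepEdges).contractCompl {e | e.1 ∈ S}).snd eb = Quot.mk (G.adjR S) a)
    (hb : ∃ eb ∈ (Set.univ : Set ((G.deleteEdges G.sepEdges).contractCompl {e | e.1 ∈ S}).E),
      ((G.deleteEdges G.sepEdges).contractCompl {e | e.1 ∈ S}).fst eb = Quot.mk (G.adjR S) b ∨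
      ((G.deleteEdges G.sepEdges).contractCompl {e | e.1 ∈ S}).snd eb = Quot.mk (G.adjR S) b) :
    (G.contrC S).Reachable ⟨Quot.mk (G.adjR S) a, ha⟩ ⟨Quot.mk (G.adjR S) b, hb⟩ := by
  induction h with
  | refl => exact ReflTransGen.refl
  | @tail c d hac hcd ih =>
    obtain ⟨eh, heh⟩ := hcd
    by_cases hS : eh.1 ∈ S
    · -- an edge of `S`: a genuine step in the contraction
      have hcore : ∀ z : G.V,
          ((G.deleteEdges G.sepEdges).fst eh = z ∨ (G.deleteEdges G.sepEdges).snd eh = z) →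
          ∃ eb ∈ (Set.univ : Set ((G.deleteEdges G.sepEdges).contractCompl {e | e.1 ∈ S}).E),
            ((G.deleteEdges G.sepEdges).contractCompl {e | e.1 ∈ S}).fst eb
              = Quot.mk (G.adjR S) z ∨
            ((G.deleteEdges G.sepEdges).contractCompl {e | e.1 ∈ S}).snd eb
              = Quot.mk (G.adjR S) z := by
        intro z hz
        refine ⟨⟨eh, hS⟩, Set.mem_univ _, ?_⟩
        rcases hz with hz | hz
        · exact Or.inl (congrArg (Quot.mk (G.adjR S)) hz)
        · exact Or.inr (congrArg (Quot.mk (G.adjR S)) hz)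
      have hc : ∃ eb ∈ (Set.univ : Set ((G.deleteEdges G.sepEdges).contractCompl {e | e.1 ∈ S}).E),
          ((G.deleteEdges G.sepEdges).contractCompl {e | e.1 ∈ S}).fst eb = Quot.mk (G.adjR S) c ∨
          ((G.deleteEdges G.sepEdges).contractCompl {e | e.1 ∈ S}).snd eb = Quot.mk (G.adjR S) c := by
        rcases heh with ⟨h1, _⟩ | ⟨_, h2⟩
        · exact hcore c (Or.inl h1)
        · exact hcore c (Or.inr h2)
      refine (ih hc).tail ?_
      refine ⟨⟨⟨eh, hS⟩, Set.mem_univ _⟩, ?_⟩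
      rcases heh with ⟨h1, h2⟩ | ⟨h1, h2⟩
      · exact Or.inl ⟨Subtype.ext (congrArg (Quot.mk (G.adjR S)) h1),
          Subtype.ext (congrArg (Quot.mk (G.adjR S)) h2)⟩
      · exact Or.inr ⟨Subtype.ext (congrArg (Quot.mk (G.adjR S)) h1),
          Subtype.ext (congrArg (Quot.mk (G.adjR S)) h2)⟩
    · -- an edge outside `S`: both endpoints have the same image
      have hmk : Quot.mk (G.adjR S) c = Quot.mk (G.adjR S) d := by
        have hadj : G.adjR S (G.fst eh.1) (G.snd eh.1) := ⟨⟨eh, hS⟩, Or.inl ⟨rfl, rfl⟩⟩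
        rcases heh with ⟨h1, h2⟩ | ⟨h1, h2⟩
        · rw [← h1, ← h2]; exact Quot.sound hadj
        · rw [← h1, ← h2]; exact (Quot.sound hadj).symm
      have hc : ∃ eb ∈ (Set.univ : Set ((G.deleteEdges G.sepEdges).contractCompl {e | e.1 ∈ S}).E),
          ((G.deleteEdges G.sepEdges).contractCompl {e | e.1 ∈ S}).fst eb = Quot.mk (G.adjR S) c ∨
          ((G.deleteEdges G.sepEdges).contractCompl {e | e.1 ∈ S}).snd eb = Quot.mk (G.adjR S) c := by
        rw [hmk]; exact hb
      have := ih hc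
      have hsub : (⟨Quot.mk (G.adjR S) c, hc⟩ : (G.contrC S).V)
          = ⟨Quot.mk (G.adjR S) d, hb⟩ := Subtype.ext hmk
      rw [hsub] at this
      exact this

end Multigraph
namespace Multigraph

open Relation Finset

variable (G : Multigraph)

theorem incR_ne_zero (o : G.E → Bool) (e : G.E) (v : G.V) (h : G.incR o e v ≠ 0) :
    v = G.tgt o e ∨ v = G.src o e := by
  by_contra hc
  push_neg at hc
  rw [incR_eq, if_neg (fun h' => hc.1 h'.symm), if_neg (fun h' => hc.2 h'.symm)] at h
  exact h (by ring)

/-- Localizing a cycle to the component of `Γ̃` containing `z`. -/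
theorem localize (o : G.E → Bool) (z : G.V) {f : G.E → ℝ} (hf : f ∈ G.cycleSpaceR o) :
    (fun e => if (¬ G.IsSeparating e ∧ (G.deleteEdges G.sepEdges).Reachable z (G.fst e))
      then f e else 0) ∈ G.cycleSpaceR o := by
  set K : Set G.V := {w | (G.deleteEdges G.sepEdges).Reachable z w} with hK
  set fK : G.E → ℝ := fun e =>
    if (¬ G.IsSeparating e ∧ (G.deleteEdges G.sepEdges).Reachable z (G.fst e))
      then f e else 0 with hfK
  have hadjK : ∀ e : G.E, ¬ G.IsSeparating e → ((G.fst e ∈ K) ↔ (G.snd e ∈ K)) := by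
    intro e he
    have : (G.deleteEdges G.sepEdges).Adj (G.fst e) (G.snd e) := ⟨⟨e, he⟩, Or.inl ⟨rfl, rfl⟩⟩
    exact ⟨fun h1 => h1.tail this, fun h1 => h1.tail ((G.deleteEdges G.sepEdges).adj_symm this)⟩
  intro v
  by_cases hv : v ∈ K
  · have : ∀ e, fK e * G.incR o e v = f e * G.incR o e v := by
      intro e
      by_cases hinc : G.incR o e v = 0
      · rw [hinc, mul_zero, mul_zero]
      · by_cases hsep : G.IsSeparating e
        · have h1 : fK e = 0 := by rw [hfK]; exact if_neg (fun hc => hc.1 hsep)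
          rw [h1, G.sep_coord_zero o hsep hf]
        · have hvend : v = G.fst e ∨ v = G.snd e := by
            rcases G.incR_ne_zero o e v hinc with h1 | h1 <;>
              rcases G.src_tgt_cases o e with ⟨h2, h3⟩ | ⟨h2, h3⟩
            · exact Or.inr (h1.trans h3)
            · exact Or.inl (h1.trans h3)
            · exact Or.inl (h1.trans h2)
            · exact Or.inr (h1.trans h2)
          have hfst : G.fst e ∈ K := by
            rcases hvend with h1 | h1
            · exact h1 ▸ hv
            · exact (hadjK e hsep).mpr (h1 ▸ hv)
          have h2 : fK e = f e := by rw [hfK]; exact if_pos ⟨hsep, hfst⟩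
          rw [h2]
    rw [Finset.sum_congr rfl (fun e _ => this e)]
    exact hf v
  · refine Finset.sum_eq_zero fun e _ => ?_
    by_cases hinc : G.incR o e v = 0
    · rw [hinc, mul_zero]
    · by_cases hcond : (¬ G.IsSeparating e ∧ (G.deleteEdges G.sepEdges).Reachable z (G.fst e))
      · exfalso
        apply hv
        have hsnd : G.snd e ∈ K := (hadjK e hcond.1).mp hcond.2
        have hvend : v = G.fst e ∨ v = G.snd e := by
          rcases G.incR_ne_zero o e v hinc with h1 | h1 <;>
            rcases G.src_tgt_cases o e with ⟨h2, h3⟩ | ⟨h2, h3⟩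
          · exact Or.inr (h1.trans h3)
          · exact Or.inl (h1.trans h3)
          · exact Or.inl (h1.trans h2)
          · exact Or.inr (h1.trans h2)
        rcases hvend with h1 | h1
        · exact h1 ▸ hcond.2
        · exact h1 ▸ hsnd
      · have h2 : fK e = 0 := by rw [hfK]; exact if_neg hcond
        rw [h2, zero_mul]

/-- Cycles on the contraction lift to cycles on `G`. -/
theorem lift_contrC (o : G.E → Bool) (S : Set G.E) (hSn : ∀ e ∈ S, ¬ G.IsSeparating e)
    (φ : (G.contrC S).E → ℝ) (hφ : φ ∈ (G.contrC S).cycleSpaceR (G.oC o S)) :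
    ∃ F ∈ G.cycleSpaceR o, ∀ eb : (G.contrC S).E, F eb.1.1.1 = φ eb := by
  classical
  set FS : G.E → ℝ := fun e => if h : e ∈ S then φ ((G.ecs S hSn).symm ⟨e, h⟩) else 0 with hFS
  set d : G.V → ℝ := fun x => -∑ e, FS e * G.incR o e x with hd'
  set H2 := (G.deleteEdges G.sepEdges).deleteEdges {e : (G.deleteEdges G.sepEdges).E | e.1 ∈ S}
    with hH2
  have hFSval : ∀ eb : (G.contrC S).E, FS eb.1.1.1 = φ eb := by
    intro eb
    have h1 : eb.1.1.1 ∈ S := eb.1.2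
    rw [hFS]
    simp only
    rw [dif_pos h1]
    have : (⟨eb.1.1.1, h1⟩ : {e : G.E // e ∈ S}) = (G.ecs S hSn) eb := rfl
    rw [this, Equiv.symm_apply_apply]
  have hFS0 : ∀ e ∉ S, FS e = 0 := by
    intro e he
    rw [hFS]
    simp only
    rw [dif_neg he]
  -- the component sums of the demand vanish
  have hd : ∀ x : G.V,
      ∑ v ∈ Finset.univ.filter (fun v => Quot.mk (G.adjR S) v = Quot.mk (G.adjR S) x), d v
        = 0 := by
    intro x
    have swap : ∑ v ∈ Finset.univ.filter
          (fun v => Quot.mk (G.adjR S) v = Quot.mk (G.adjR S) x), d v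
        = -∑ e, FS e *
            ((if Quot.mk (G.adjR S) (G.tgt o e) = Quot.mk (G.adjR S) x then (1:ℝ) else 0)
            - (if Quot.mk (G.adjR S) (G.src o e) = Quot.mk (G.adjR S) x then 1 else 0)) := by
      rw [show (∑ v ∈ Finset.univ.filter
              (fun v => Quot.mk (G.adjR S) v = Quot.mk (G.adjR S) x), d v)
          = -∑ v ∈ Finset.univ.filter
              (fun v => Quot.mk (G.adjR S) v = Quot.mk (G.adjR S) x),
              ∑ e, FS e * G.incR o e v by
        rw [← Finset.sum_neg_distrib]]
      congr 1
      rw [Finset.sum_comm]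
      refine Finset.sum_congr rfl fun e _ => ?_
      rw [← Finset.mul_sum,
        G.sum_inc_filter o e (fun v => Quot.mk (G.adjR S) v = Quot.mk (G.adjR S) x)]
    rw [swap]
    have hrestrict : ∑ e, FS e *
          ((if Quot.mk (G.adjR S) (G.tgt o e) = Quot.mk (G.adjR S) x then (1:ℝ) else 0)
          - (if Quot.mk (G.adjR S) (G.src o e) = Quot.mk (G.adjR S) x then 1 else 0))
        = ∑ e ∈ Finset.univ.filter (fun e => e ∈ S), FS e *
          ((if Quot.mk (G.adjR S) (G.tgt o e) = Quot.mk (G.adjR S) x then (1:ℝ) else 0)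
          - (if Quot.mk (G.adjR S) (G.src o e) = Quot.mk (G.adjR S) x then 1 else 0)) := by
      refine (Finset.sum_subset (Finset.filter_subset _ _) ?_).symm
      intro e _ he
      simp only [Finset.mem_filter, Finset.mem_univ, true_and] at he
      rw [hFS0 e he, zero_mul]
    rw [hrestrict]
    by_cases hXc : ∃ eb' ∈ (Set.univ :
          Set ((G.deleteEdges G.sepEdges).contractCompl {e | e.1 ∈ S}).E),
        ((G.deleteEdges G.sepEdges).contractCompl {e | e.1 ∈ S}).fst eb'
          = Quot.mk (G.adjR S) x ∨
        ((G.deleteEdges G.sepEdges).contractCompl {e | e.1 ∈ S}).snd eb'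
          = Quot.mk (G.adjR S) x
    · rw [← G.sum_contrC S hSn (fun e => FS e *
          ((if Quot.mk (G.adjR S) (G.tgt o e) = Quot.mk (G.adjR S) x then (1:ℝ) else 0)
          - (if Quot.mk (G.adjR S) (G.src o e) = Quot.mk (G.adjR S) x then 1 else 0)))]
      have : ∀ eb : (G.contrC S).E, FS eb.1.1.1 *
            ((if Quot.mk (G.adjR S) (G.tgt o eb.1.1.1) = Quot.mk (G.adjR S) x then (1:ℝ) else 0)
            - (if Quot.mk (G.adjR S) (G.src o eb.1.1.1) = Quot.mk (G.adjR S) x then 1 else 0))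
          = φ eb * (G.contrC S).incR (G.oC o S) eb ⟨Quot.mk (G.adjR S) x, hXc⟩ := by
        intro eb
        rw [hFSval eb, G.contrC_incR o S eb ⟨Quot.mk (G.adjR S) x, hXc⟩]
      rw [Finset.sum_congr rfl (fun eb _ => this eb)]
      rw [hφ ⟨Quot.mk (G.adjR S) x, hXc⟩, neg_zero]
    · have : ∀ e ∈ Finset.univ.filter (fun e => e ∈ S), FS e *
            ((if Quot.mk (G.adjR S) (G.tgt o e) = Quot.mk (G.adjR S) x then (1:ℝ) else 0)
            - (if Quot.mk (G.adjR S) (G.src o e) = Quot.mk (G.adjR S) x then 1 else 0)) = 0 := by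
        intro e he
        simp only [Finset.mem_filter, Finset.mem_univ, true_and] at he
        have hcore : ∀ z : G.V, (G.fst e = z ∨ G.snd e = z) →
            Quot.mk (G.adjR S) z ≠ Quot.mk (G.adjR S) x := by
          intro z hz heq
          apply hXc
          refine ⟨⟨⟨e, hSn e he⟩, he⟩, Set.mem_univ _, ?_⟩
          rcases hz with hz | hz
          · exact Or.inl (heq ▸ congrArg (Quot.mk (G.adjR S)) hz)
          · exact Or.inr (heq ▸ congrArg (Quot.mk (G.adjR S)) hz)
        have h1 : Quot.mk (G.adjR S) (G.tgt o e) ≠ Quot.mk (G.adjR S) x := by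
          rcases G.src_tgt_cases o e with ⟨_, h2⟩ | ⟨_, h2⟩
          · exact hcore _ (Or.inr h2.symm)
          · exact hcore _ (Or.inl h2.symm)
        have h2 : Quot.mk (G.adjR S) (G.src o e) ≠ Quot.mk (G.adjR S) x := by
          rcases G.src_tgt_cases o e with ⟨h3, _⟩ | ⟨h3, _⟩
          · exact hcore _ (Or.inl h3.symm)
          · exact hcore _ (Or.inr h3.symm)

        rw [if_neg h1, if_neg h2, sub_zero, mul_zero]
      rw [Finset.sum_eq_zero this, neg_zero]
  obtain ⟨f0, hf0⟩ := H2.flow_exists (fun eh => o eh.1.1) d (fun x => hd x)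
  set f0Γ : (G.deleteEdges G.sepEdges).E → ℝ := fun eh =>
    if h : eh ∈ {e : (G.deleteEdges G.sepEdges).E | e.1 ∈ S} then 0 else f0 ⟨eh, h⟩ with hf0Γ
  set f0G : G.E → ℝ := fun e => if h : e ∈ G.sepEdges then 0 else f0Γ ⟨e, h⟩ with hf0G
  have hstep1 : ∀ x, ∑ eh : (G.deleteEdges G.sepEdges).E,
      f0Γ eh * (G.deleteEdges G.sepEdges).incR (fun e' => o e'.1) eh x = d x := by
    intro x
    have h0 : ∀ eh ∈ {e : (G.deleteEdges G.sepEdges).E | e.1 ∈ S}, f0Γ eh = 0 := by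
      intro eh he
      rw [hf0Γ]
      simp only
      rw [dif_pos he]
    have := (G.deleteEdges G.sepEdges).sum_inc_delete (fun e' => o e'.1)
      {e : (G.deleteEdges G.sepEdges).E | e.1 ∈ S} f0Γ h0 x
    rw [← this]
    rw [← hf0 x]
    refine Finset.sum_congr rfl fun eh2 _ => ?_
    congr 1
    rw [hf0Γ]
    simp only
    rw [dif_neg eh2.2]
    rfl
  have hb1 : ∀ x, ∑ e, f0G e * G.incR o e x = d x := by
    intro x
    have h0 : ∀ e ∈ G.sepEdges, f0G e = 0 := by
      intro e he
      rw [hf0G]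
      simp only
      rw [dif_pos he]
    rw [← G.sum_inc_delete o G.sepEdges f0G h0 x, ← hstep1 x]
    refine Finset.sum_congr rfl fun eh _ => ?_
    congr 1
    rw [hf0G]
    simp only
    rw [dif_neg eh.2]
    rfl
  refine ⟨fun e => FS e + f0G e, ?_, ?_⟩
  · intro x
    have : ∑ e, (FS e + f0G e) * G.incR o e x
        = (∑ e, FS e * G.incR o e x) + ∑ e, f0G e * G.incR o e x := by
      rw [← Finset.sum_add_distrib]
      exact Finset.sum_congr rfl fun e _ => add_mul _ _ _
    rw [this, hb1 x]
    have : ∑ e, FS e * G.incR o e x = -d x := by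
      rw [hd']
      simp only
      rw [neg_neg]
    rw [this]
    ring
  · intro eb
    have h1 : f0G eb.1.1.1 = 0 := by
      rw [hf0G]
      simp only
      rw [dif_neg eb.1.1.2]
      rw [hf0Γ]
      simp only
      erw [dif_pos (show (⟨eb.1.1.1, eb.1.1.2⟩ : (G.deleteEdges G.sepEdges).E)
        ∈ {e : (G.deleteEdges G.sepEdges).E | e.1 ∈ S} from eb.1.2)]
    show FS eb.1.1.1 + f0G eb.1.1.1 = φ eb
    rw [h1, add_zero, hFSval eb]

end Multigraph
namespace Multigraph

open Relation Finset

variable (G : Multigraph)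

/-- If `ker e₁* ⊆ ker a*` on the cycle space then the functionals are proportional. -/
theorem exists_ratio (o : G.E → Bool) (e₁ a : G.E)
    (h : ∀ f ∈ G.cycleSpaceR o, f e₁ = 0 → f a = 0) :
    ∃ c : ℝ, ∀ f ∈ G.cycleSpaceR o, f a = c * f e₁ := by
  by_cases h1 : ∀ f ∈ G.cycleSpaceR o, f e₁ = 0
  · exact ⟨0, fun f hf => by rw [h f hf (h1 f hf), zero_mul]⟩
  · push_neg at h1
    obtain ⟨g, hg, hge⟩ := h1
    refine ⟨g a / g e₁, fun f hf => ?_⟩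
    have hw : (f - (f e₁ / g e₁) • g) ∈ G.cycleSpaceR o :=
      Submodule.sub_mem _ hf (Submodule.smul_mem _ _ hg)
    have hw1 : (f - (f e₁ / g e₁) • g) e₁ = 0 := by
      simp only [Pi.sub_apply, Pi.smul_apply, smul_eq_mul]
      field_simp
      ring
    have hw2 := h _ hw hw1
    simp only [Pi.sub_apply, Pi.smul_apply, smul_eq_mul, sub_eq_zero] at hw2
    rw [hw2]
    field_simp

/-- **Forward construction**: the proportionality class of a non-separating edge is
a C1-set. -/
theorem isC1_class (o : G.E → Bool) (e₁ : G.E) (h₁ : ¬ G.IsSeparating e₁) :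
    G.IsC1 {e | ¬ G.IsSeparating e ∧ ∃ c : ℝ, c ≠ 0 ∧
      ∀ f ∈ G.cycleSpaceR o, f e = c * f e₁} := by
  classical
  set S : Set G.E := {e | ¬ G.IsSeparating e ∧ ∃ c : ℝ, c ≠ 0 ∧
      ∀ f ∈ G.cycleSpaceR o, f e = c * f e₁} with hS
  have hSn : ∀ e ∈ S, ¬ G.IsSeparating e := fun e he => he.1
  have he₁S : e₁ ∈ S := ⟨h₁, 1, one_ne_zero, fun f _ => (one_mul _).symm⟩
  obtain ⟨g, hg, hge₁, _⟩ := G.exists_cycle_through o h₁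
  set z : G.V := G.tgt o e₁ with hz
  have hadjGt : ∀ e : G.E, ¬ G.IsSeparating e →
      (G.deleteEdges G.sepEdges).Adj (G.fst e) (G.snd e) :=
    fun e he => ⟨⟨e, he⟩, Or.inl ⟨rfl, rfl⟩⟩
  have hzfst : (G.deleteEdges G.sepEdges).Reachable z (G.fst e₁) := by
    rcases G.src_tgt_cases o e₁ with ⟨_, h2⟩ | ⟨_, h2⟩
    · rw [hz, h2]
      exact (G.deleteEdges G.sepEdges).reach_symm (ReflTransGen.single (hadjGt e₁ h₁))
    · rw [hz, h2]
      exact ReflTransGen.refl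
  set gK : G.E → ℝ := fun e =>
    if (¬ G.IsSeparating e ∧ (G.deleteEdges G.sepEdges).Reachable z (G.fst e))
      then g e else 0 with hgK
  have hgKmem : gK ∈ G.cycleSpaceR o := G.localize o z hg
  have hgK1 : gK e₁ = 1 := by
    rw [hgK]
    simp only
    rw [if_pos ⟨h₁, hzfst⟩, hge₁]
  have hSval : ∀ e ∈ S, ∃ c : ℝ, c ≠ 0 ∧ gK e = c ∧
      ∀ f ∈ G.cycleSpaceR o, f e = c * f e₁ := by
    intro e he
    obtain ⟨c, hc0, hc⟩ := he.2
    exact ⟨c, hc0, by rw [hc gK hgKmem, hgK1, mul_one], hc⟩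
  have hreachS : ∀ e ∈ S, (G.deleteEdges G.sepEdges).Reachable z (G.fst e) ∧
      (G.deleteEdges G.sepEdges).Reachable z (G.snd e) := by
    intro e he
    obtain ⟨c, hc0, hval, _⟩ := hSval e he
    have hne : gK e ≠ 0 := by rw [hval]; exact hc0
    have hcond : ¬ G.IsSeparating e ∧ (G.deleteEdges G.sepEdges).Reachable z (G.fst e) := by
      by_contra hcond
      exact hne (by rw [hgK]; exact if_neg hcond)
    exact ⟨hcond.2, hcond.2.tail (hadjGt e hcond.1)⟩
  -- the projected cycle on the contraction, everywhere nonzero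
  set g1 : (G.deleteEdges G.sepEdges).E → ℝ := fun eh => gK eh.1 with hg1'
  have hgKsep : ∀ e ∈ G.sepEdges, gK e = 0 := fun e he => G.sep_coord_zero o he hgKmem
  have hg1 : g1 ∈ (G.deleteEdges G.sepEdges).cycleSpaceR (fun e => o e.1) := by
    rw [hg1']
    exact (G.mem_cycleSpaceR_delete_iff o G.sepEdges gK hgKsep).mpr hgKmem
  set ρ : (G.contrC S).E → ℝ := fun eb => g1 eb.1.1 with hρ'
  have hρmem : ρ ∈ (G.contrC S).cycleSpaceR (G.oC o S) :=
    G.mem_cycleSpaceR_contrC o S hSn hg1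
  have hρval : ∀ eb : (G.contrC S).E, ρ eb = gK eb.1.1.1 := fun eb => rfl
  have hρne : ∀ eb : (G.contrC S).E, ρ eb ≠ 0 := by
    intro eb
    obtain ⟨c, hc0, hval, _⟩ := hSval eb.1.1.1 eb.1.2
    rw [hρval, hval]
    exact hc0
  refine ⟨hSn, ?_, ?_⟩
  · -- the contraction is a cycle graph
    show (G.contrC S).IsCycleGraph
    have hX0core : ∃ eb' ∈ (Set.univ :
          Set ((G.deleteEdges G.sepEdges).contractCompl {e | e.1 ∈ S}).E),
        ((G.deleteEdges G.sepEdges).contractCompl {e | e.1 ∈ S}).fst eb'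
          = Quot.mk (G.adjR S) z ∨
        ((G.deleteEdges G.sepEdges).contractCompl {e | e.1 ∈ S}).snd eb'
          = Quot.mk (G.adjR S) z := by
      refine ⟨⟨⟨e₁, h₁⟩, he₁S⟩, Set.mem_univ _, ?_⟩
      rcases G.src_tgt_cases o e₁ with ⟨_, h2⟩ | ⟨_, h2⟩
      · exact Or.inr (congrArg (Quot.mk (G.adjR S)) h2.symm)
      · exact Or.inl (congrArg (Quot.mk (G.adjR S)) h2.symm)
    have hbase : ∀ x : (G.contrC S).V,
        (G.contrC S).Reachable ⟨Quot.mk (G.adjR S) z, hX0core⟩ x := by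
      rintro ⟨q, hq⟩
      obtain ⟨w, _, hw⟩ := hq
      have hwS : w.1.1 ∈ S := w.2
      have hrs := hreachS w.1.1 hwS
      have hcfst : ∃ eb' ∈ (Set.univ :
            Set ((G.deleteEdges G.sepEdges).contractCompl {e | e.1 ∈ S}).E),
          ((G.deleteEdges G.sepEdges).contractCompl {e | e.1 ∈ S}).fst eb'
            = Quot.mk (G.adjR S) (G.fst w.1.1) ∨
          ((G.deleteEdges G.sepEdges).contractCompl {e | e.1 ∈ S}).snd eb'
            = Quot.mk (G.adjR S) (G.fst w.1.1) :=
        ⟨w, Set.mem_univ _, Or.inl rfl⟩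
      have hcsnd : ∃ eb' ∈ (Set.univ :
            Set ((G.deleteEdges G.sepEdges).contractCompl {e | e.1 ∈ S}).E),
          ((G.deleteEdges G.sepEdges).contractCompl {e | e.1 ∈ S}).fst eb'
            = Quot.mk (G.adjR S) (G.snd w.1.1) ∨
          ((G.deleteEdges G.sepEdges).contractCompl {e | e.1 ∈ S}).snd eb'
            = Quot.mk (G.adjR S) (G.snd w.1.1) :=
        ⟨w, Set.mem_univ _, Or.inr rfl⟩
      rcases hw with hw | hw
      · have := G.reach_contrC S hrs.1 hX0core hcfst
        have hsub : (⟨Quot.mk (G.adjR S) (G.fst w.1.1), hcfst⟩ : (G.contrC S).V)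
            = ⟨q, ⟨w, Set.mem_univ _, Or.inl hw⟩⟩ := Subtype.ext hw
        rw [hsub] at this
        exact this
      · have := G.reach_contrC S hrs.2 hX0core hcsnd
        have hsub : (⟨Quot.mk (G.adjR S) (G.snd w.1.1), hcsnd⟩ : (G.contrC S).V)
            = ⟨q, ⟨w, Set.mem_univ _, Or.inr hw⟩⟩ := Subtype.ext hw
        rw [hsub] at this
        exact this
    refine ⟨⟨⟨⟨Quot.mk (G.adjR S) z, hX0core⟩⟩, fun x y =>
      ((G.contrC S).reach_symm (hbase x)).trans (hbase y)⟩, ?_, ?_⟩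
    · -- no separating edges in the contraction
      rw [Set.eq_empty_iff_forall_notMem]
      intro eb heb
      exact heb ((G.contrC S).reach_of_coord_ne (G.oC o S) hρmem (hρne eb))
    · -- b₁ = 1
      have hspan : (G.contrC S).cycleSpaceR (G.oC o S) = Submodule.span ℝ {ρ} := by
        apply le_antisymm
        · intro φ hφ
          obtain ⟨F, hF, hFval⟩ := G.lift_contrC o S hSn φ hφ
          rw [Submodule.mem_span_singleton]
          refine ⟨F e₁, ?_⟩
          funext eb
          obtain ⟨c, _, hval, hprop⟩ := hSval eb.1.1.1 eb.1.2
          have h1 : φ eb = c * F e₁ := by rw [← hFval eb]; exact hprop F hF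
          have h2 : ρ eb = c := by rw [hρval, hval]
          show F e₁ * ρ eb = φ eb
          rw [h1, h2]
          ring
        · rw [Submodule.span_le, Set.singleton_subset_iff]
          exact hρmem
      have hρne0 : ρ ≠ 0 := by
        intro h0
        exact hρne ((G.ecs S hSn).symm ⟨e₁, he₁S⟩) (by rw [h0]; rfl)
      have hfr : Module.finrank ℝ ↥((G.contrC S).cycleSpaceR (G.oC o S)) = 1 := by
        rw [hspan]
        exact finrank_span_singleton hρne0
      have := (G.contrC S).finrank_cycleSpaceR (G.oC o S)
      rw [hfr] at this
      exact this.symm.trans (by norm_num)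
  · -- Γ̃∖S has no separating edges
    rw [Set.eq_empty_iff_forall_notMem]
    intro a ha
    have ha0S : a.1.1 ∉ S := a.2
    have ha0ns : ¬ G.IsSeparating a.1.1 := a.1.2
    have exF : ∃ F ∈ G.cycleSpaceR o, F e₁ = 0 ∧ F a.1.1 ≠ 0 := by
      by_contra hcon
      push_neg at hcon
      have h' : ∀ f ∈ G.cycleSpaceR o, f e₁ = 0 → f a.1.1 = 0 := by
        intro f hf h0
        by_contra hne
        exact hne (hcon f hf h0)
      obtain ⟨c, hc⟩ := G.exists_ratio o e₁ a.1.1 h'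
      obtain ⟨fa, hfa, hfa1, _⟩ := G.exists_cycle_through o ha0ns
      have hc0 : c ≠ 0 := by
        intro h0
        rw [h0] at hc
        have := hc fa hfa
        rw [zero_mul, hfa1] at this
        exact one_ne_zero this
      exact ha0S ⟨ha0ns, c, hc0, hc⟩
    obtain ⟨F, hF, hFe₁, hFa⟩ := exF
    have hFS : ∀ e ∈ S, F e = 0 := by
      intro e he
      obtain ⟨c, _, hc⟩ := he.2
      rw [hc F hF, hFe₁, mul_zero]
    have hFsep : ∀ e ∈ G.sepEdges, F e = 0 := fun e he => G.sep_coord_zero o he hF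
    have hF1 : (fun eh : (G.deleteEdges G.sepEdges).E => F eh.1)
        ∈ (G.deleteEdges G.sepEdges).cycleSpaceR (fun e => o e.1) :=
      (G.mem_cycleSpaceR_delete_iff o G.sepEdges F hFsep).mpr hF
    have hF2 : (fun a' : ((G.deleteEdges G.sepEdges).deleteEdges
          {e : (G.deleteEdges G.sepEdges).E | e.1 ∈ S}).E => F a'.1.1)
        ∈ ((G.deleteEdges G.sepEdges).deleteEdges
          {e : (G.deleteEdges G.sepEdges).E | e.1 ∈ S}).cycleSpaceR (fun e => o e.1.1) :=
      ((G.deleteEdges G.sepEdges).mem_cycleSpaceR_delete_iff (fun e => o e.1)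
        {e : (G.deleteEdges G.sepEdges).E | e.1 ∈ S} (fun eh => F eh.1)
        (fun eh he => hFS eh.1 he)).mpr hF1
    exact ha (((G.deleteEdges G.sepEdges).deleteEdges
      {e : (G.deleteEdges G.sepEdges).E | e.1 ∈ S}).reach_of_coord_ne
      (fun e => o e.1.1) hF2 hFa)

end Multigraph
namespace Multigraph

open Relation Finset

variable (G : Multigraph)

theorem eq_of_mem_isC1 (o : G.E → Bool)
    (htc : (G.deleteEdges G.sepEdges).IsTotallyCyclic (fun e => o e.1))
    {S : Set G.E} (hS : G.IsC1 S) {e₁ e₂ : G.E} (h1 : e₁ ∈ S) (h2 : e₂ ∈ S)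
    {f : G.E → ℝ} (hf : f ∈ G.cycleSpaceR o) : f e₁ = f e₂ := by
  classical
  by_cases heq : e₁ = e₂
  · rw [heq]
  obtain ⟨hSn, hCycRaw, _⟩ := hS
  have hCyc : (G.contrC S).IsCycleGraph := hCycRaw
  have h₁ns : ¬ G.IsSeparating e₁ := hSn e₁ h1
  have h₂ns : ¬ G.IsSeparating e₂ := hSn e₂ h2
  have hγ : (G.deleteEdges G.sepEdges).Reachable (G.tgt o e₂) (G.src o e₂) :=
    (G.deleteEdges G.sepEdges).reach_symm (ReflTransGen.single
      ((G.deleteEdges G.sepEdges).adj_src_tgt (fun e => o e.1) ⟨e₂, h₂ns⟩))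
  -- Step 1: `{e₁, e₂}` is a 2-edge cut: the endpoints of `e₂` are separated in
  -- `G∖{e₁,e₂}`.
  have hstep1 : ¬ (G.deleteEdges ({e₁, e₂} : Set G.E)).Reachable (G.tgt o e₂) (G.src o e₂) := by
    intro hr
    have hex := G.reach_excise_sep {e₁, e₂} hγ hr
    obtain ⟨k, hk, _⟩ := (G.deleteEdges (G.sepEdges ∪ {e₁, e₂})).chain_of_reachable
      (fun e => o e.1) hex
    set kext : G.E → ℝ := fun e =>
      if h : e ∈ G.sepEdges ∪ ({e₁, e₂} : Set G.E) then 0 else k ⟨e, h⟩ with hkext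
    have hkext0 : ∀ e ∈ G.sepEdges ∪ ({e₁, e₂} : Set G.E), kext e = 0 := by
      intro e he
      rw [hkext]
      simp only
      rw [dif_pos he]
    have hkb : ∀ x, ∑ e, kext e * G.incR o e x
        = (if G.src o e₂ = x then 1 else 0) - (if G.tgt o e₂ = x then 1 else 0) := by
      intro x
      rw [← G.sum_inc_delete o (G.sepEdges ∪ {e₁, e₂}) kext hkext0 x]; erw [← hk x]
      refine Finset.sum_congr rfl fun eh _ => ?_
      congr 1
      rw [hkext]
      simp only
      rw [dif_neg eh.2]
      rfl
    set gg : G.E → ℝ := fun e => kext e + (if e = e₂ then 1 else 0) with hgg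
    have hggmem : gg ∈ G.cycleSpaceR o := by
      intro x
      have hsplit : ∑ e, gg e * G.incR o e x
          = (∑ e, kext e * G.incR o e x) + ∑ e, (if e = e₂ then G.incR o e x else 0) := by
        rw [← Finset.sum_add_distrib]
        refine Finset.sum_congr rfl fun e _ => ?_
        by_cases h' : e = e₂ <;> simp [hgg, h'] <;> ring
      rw [hsplit, hkb x, Finset.sum_ite_eq' Finset.univ e₂ (fun e => G.incR o e x)]
      simp only [Finset.mem_univ, if_true]
      rw [incR_eq]
      ring
    have hgg2 : gg e₂ = 1 := by
      show kext e₂ + (if e₂ = e₂ then 1 else 0) = 1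
      rw [hkext0 e₂ (Or.inr (by simp)), if_pos rfl]
      norm_num
    have hgg1 : gg e₁ = 0 := by
      show kext e₁ + (if e₁ = e₂ then 1 else 0) = 0
      rw [hkext0 e₁ (Or.inr (by simp)), if_neg heq]
      norm_num
    -- project to the contraction
    have hggsep : ∀ e ∈ G.sepEdges, gg e = 0 := fun e he => G.sep_coord_zero o he hggmem
    have hgg1' : (fun eh : (G.deleteEdges G.sepEdges).E => gg eh.1)
        ∈ (G.deleteEdges G.sepEdges).cycleSpaceR (fun e => o e.1) :=
      (G.mem_cycleSpaceR_delete_iff o G.sepEdges gg hggsep).mpr hggmem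
    set ρg : (G.contrC S).E → ℝ := fun eb => gg eb.1.1.1 with hρg
    have hρgmem : ρg ∈ (G.contrC S).cycleSpaceR (G.oC o S) :=
      G.mem_cycleSpaceR_contrC o S hSn hgg1'
    set eB₁ : (G.contrC S).E := (G.ecs S hSn).symm ⟨e₁, h1⟩ with heB₁
    set eB₂ : (G.contrC S).E := (G.ecs S hSn).symm ⟨e₂, h2⟩ with heB₂
    have hρg1 : ρg eB₁ = 0 := hgg1
    have hρg2 : ρg eB₂ = 1 := hgg2
    have heB₁ns : ¬ (G.contrC S).IsSeparating eB₁ :=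
      Set.eq_empty_iff_forall_notMem.mp hCyc.2.1 eB₁
    obtain ⟨φ₁, hφ₁mem, hφ₁val, _⟩ := (G.contrC S).exists_cycle_through (G.oC o S) heB₁ns
    set ψ : (G.contrC S).E → ℝ := φ₁ - (φ₁ eB₂) • ρg with hψ
    have hψmem : ψ ∈ (G.contrC S).cycleSpaceR (G.oC o S) :=
      Submodule.sub_mem _ hφ₁mem (Submodule.smul_mem _ _ hρgmem)
    have hψ1 : ψ eB₁ = 1 := by
      rw [hψ]
      simp only [Pi.sub_apply, Pi.smul_apply, smul_eq_mul]
      rw [hφ₁val, hρg1]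
      ring
    have hψ2 : ψ eB₂ = 0 := by
      rw [hψ]
      simp only [Pi.sub_apply, Pi.smul_apply, smul_eq_mul]
      rw [hρg2]
      ring
    -- two independent cycles contradict `b₁ = 1`
    set x : ↥((G.contrC S).cycleSpaceR (G.oC o S)) := ⟨ρg, hρgmem⟩ with hx
    set y : ↥((G.contrC S).cycleSpaceR (G.oC o S)) := ⟨ψ, hψmem⟩ with hy
    have hli : LinearIndependent ℝ ![x, y] := by
      rw [LinearIndependent.pair_iff]
      intro s t hst
      have hfun : s • ρg + t • ψ = 0 := by
        have := congrArg Subtype.val hst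
        simpa using this
      have hs : s = 0 := by
        have := congrFun hfun eB₂
        simp only [Pi.add_apply, Pi.smul_apply, smul_eq_mul, Pi.zero_apply] at this
        rw [hρg2, hψ2] at this
        linarith
      have ht : t = 0 := by
        have := congrFun hfun eB₁
        simp only [Pi.add_apply, Pi.smul_apply, smul_eq_mul, Pi.zero_apply] at this
        rw [hρg1, hψ1, hs] at this
        linarith
      exact ⟨hs, ht⟩
    have hle := hli.fintype_card_le_finrank
    rw [Fintype.card_fin] at hle
    have hdim := (G.contrC S).finrank_cycleSpaceR (G.oC o S)
    rw [hCyc.2.2] at hdim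
    omega
  -- Steps 2–4: the cut argument with total cyclicity
  set A : Set G.V := {w | (G.deleteEdges ({e₁, e₂} : Set G.E)).Reachable (G.tgt o e₂) w}
    with hA
  have htgtA : G.tgt o e₂ ∈ A := ReflTransGen.refl
  have hsrcA : G.src o e₂ ∉ A := hstep1
  have hclosed : ∀ e : G.E, e ∉ ({e₁, e₂} : Set G.E) → ((G.fst e ∈ A) ↔ (G.snd e ∈ A)) := by
    intro e he
    have hadj : (G.deleteEdges ({e₁, e₂} : Set G.E)).Adj (G.fst e) (G.snd e) :=
      ⟨⟨e, he⟩, Or.inl ⟨rfl, rfl⟩⟩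
    exact ⟨fun h' => h'.tail hadj,
      fun h' => h'.tail ((G.deleteEdges ({e₁, e₂} : Set G.E)).adj_symm hadj)⟩
  have hcross : ∀ e : G.E, e ∉ ({e₁, e₂} : Set G.E) →
      ((G.tgt o e ∈ A) ↔ (G.src o e ∈ A)) := by
    intro e he
    rcases G.src_tgt_cases o e with ⟨hs, ht⟩ | ⟨hs, ht⟩
    · rw [hs, ht]; exact (hclosed e he).symm
    · rw [hs, ht]; exact hclosed e he
  have hcut := G.cut_sum o A hf
  have hvanish : ∀ e ∈ Finset.univ, e ∉ ({e₁, e₂} : Finset G.E) →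
      f e * ((if G.tgt o e ∈ A then (1:ℝ) else 0) - (if G.src o e ∈ A then 1 else 0)) = 0 := by
    intro e _ he
    have he' : e ∉ ({e₁, e₂} : Set G.E) := by
      simp only [Finset.mem_insert, Finset.mem_singleton] at he
      simp only [Set.mem_insert_iff, Set.mem_singleton_iff]
      exact he
    by_cases h' : G.tgt o e ∈ A
    · rw [if_pos h', if_pos ((hcross e he').mp h')]; ring
    · rw [if_neg h', if_neg (fun hc => h' ((hcross e he').mpr hc))]; ring
  have hpair : ∑ e ∈ ({e₁, e₂} : Finset G.E),
      f e * ((if G.tgt o e ∈ A then (1:ℝ) else 0) - (if G.src o e ∈ A then 1 else 0)) = 0 := by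
    rw [Finset.sum_subset (Finset.subset_univ _) hvanish]
    exact hcut
  rw [Finset.sum_pair heq] at hpair
  -- `e₂` crosses from outside `A` into `A`
  have hχ2 : ((if G.tgt o e₂ ∈ A then (1:ℝ) else 0) - (if G.src o e₂ ∈ A then 1 else 0)) = 1 := by
    rw [if_pos htgtA, if_neg hsrcA]
    ring
  -- total cyclicity forces `e₁` to cross from inside `A` out
  have hχ1 : ((if G.tgt o e₁ ∈ A then (1:ℝ) else 0) - (if G.src o e₁ ∈ A then 1 else 0)) = -1 := by
    obtain ⟨⟨eh, hehs, heht⟩, _⟩ := htc A ⟨G.tgt o e₂, htgtA⟩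
      ⟨G.tgt o e₂, htgtA, G.src o e₂, hsrcA, hγ⟩
    have hcrossing : eh.1 ∈ ({e₁, e₂} : Set G.E) := by
      by_contra hc
      have := hcross eh.1 hc
      exact heht (this.mpr hehs)
    have heh1 : eh.1 = e₁ := by
      rcases hcrossing with hc | hc
      · exact hc
      · exfalso
        apply hsrcA
        rw [← hc]
        exact hehs
    rw [if_neg (by rw [← heh1]; exact heht), if_pos (by rw [← heh1]; exact hehs)]
    ring
  rw [hχ1, hχ2] at hpair
  linarith

end Multigraph
/-- For non-separating edges `e₁, e₂`, the functionals `e₁*` and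
`e₂*` on `H₁(Γ,ℝ)` are proportional (`e₁* = u·e₂*`) iff `e₁, e₂` belong to the same
C1-set, in which case `u = 1` (i.e. `e₁* = e₂*`). -/
theorem edgeFun_proportional_iff_mem_same_isC1 (G : Multigraph) (o : G.E → Bool)
    (h : (G.deleteEdges G.sepEdges).IsTotallyCyclic (fun e => o e.1))
    (e₁ e₂ : G.E) (h₁ : ¬ G.IsSeparating e₁) (h₂ : ¬ G.IsSeparating e₂) :
    ((∃ u : ℝ, ∀ f ∈ G.cycleSpaceR o, f e₁ = u * f e₂) ↔
      (∃ S : Set G.E, G.IsC1 S ∧ e₁ ∈ S ∧ e₂ ∈ S)) ∧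
    ((∃ S : Set G.E, G.IsC1 S ∧ e₁ ∈ S ∧ e₂ ∈ S) →
      ∀ f ∈ G.cycleSpaceR o, f e₁ = f e₂) := by
  constructor
  · constructor
    · rintro ⟨u, hu⟩
      obtain ⟨g, hg, hg1, _⟩ := G.exists_cycle_through o h₁
      have hu0 : u ≠ 0 := by
        intro h0
        rw [h0] at hu
        have := hu g hg
        rw [zero_mul, hg1] at this
        exact one_ne_zero this
      refine ⟨{e | ¬ G.IsSeparating e ∧ ∃ c : ℝ, c ≠ 0 ∧
          ∀ f ∈ G.cycleSpaceR o, f e = c * f e₁},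
        G.isC1_class o e₁ h₁,
        ⟨h₁, 1, one_ne_zero, fun f _ => (one_mul _).symm⟩,
        ⟨h₂, u⁻¹, inv_ne_zero hu0, fun f hf => ?_⟩⟩
      rw [hu f hf]
      field_simp
    · rintro ⟨Sx, hSx, h1x, h2x⟩
      exact ⟨1, fun f hf => by
        rw [one_mul]
        exact G.eq_of_mem_isC1 o h hSx h1x h2x hf⟩
  · rintro ⟨Sx, hSx, h1x, h2x⟩ f hf
    exact G.eq_of_mem_isC1 o h hSx h1x h2x hf
end
end

section
/- Let Γ be a finite 3-edge connected graph. For every edge e of Γ, there exist two homology classes c₁, c₂ ∈ H₁(Γ,ℤ) with (c₁, c₂) = ±l(e) for any edge-length function l; more precisely, there exist two cycles Δ₁, Δ₂ of Γ with E(Δ₁) ∩ E(Δ₂) = {e}. -/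
/-! Basic theory of finite multigraphs (loops and multiple edges allowed),
following Caporaso–Viviani, "Torelli theorem for graphs and tropical curves". -/

noncomputable section

open scoped Classical

namespace Multigraph

open Finset

variable {G : Multigraph}

def stepTail (G : Multigraph) (f : G.E) (d : Bool) : G.V := if d then G.fst f else G.snd f
def stepHead (G : Multigraph) (f : G.E) (d : Bool) : G.V := if d then G.snd f else G.fst f

private lemma telescope_fin {M : Type} [AddCommGroup M] (m : ℕ) (h : Fin (m+1) → M) :
    ∑ i : Fin m, (h i.succ - h i.castSucc) = h (Fin.last m) - h 0 := by
  have h1 := Fin.sum_univ_succ h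
  have h2 := Fin.sum_univ_castSucc h
  rw [Finset.sum_sub_distrib]
  have e1 : ∑ i : Fin m, h i.succ = (∑ i : Fin (m+1), h i) - h 0 := by rw [h1]; abel
  have e2 : ∑ i : Fin m, h i.castSucc = (∑ i : Fin (m+1), h i) - h (Fin.last m) := by
    rw [h2]; abel
  rw [e1, e2]; abel

private lemma exists_fin_path {α : Type} (r : α → α → Prop) {u v : α}
    (h : Relation.ReflTransGen r u v) :
    ∃ (m : ℕ) (vx : Fin (m+1) → α), vx 0 = u ∧ vx (Fin.last m) = v ∧
      Function.Injective vx ∧ ∀ i : Fin m, r (vx i.castSucc) (vx i.succ) := by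
  induction h using Relation.ReflTransGen.head_induction_on with
  | refl =>
      exact ⟨0, fun _ => v, rfl, rfl, fun i j _ => Fin.ext (by omega), fun i => i.elim0⟩
  | head hac hcb ih =>
      obtain ⟨m, vx, h0, hlast, hinj, hstep⟩ := ih
      rename_i a c
      by_cases hu : ∃ j : Fin (m+1), vx j = a
      · obtain ⟨j, hj⟩ := hu
        refine ⟨m - j.val, fun i => vx ⟨j.val + i.val, by omega⟩, ?_, ?_, ?_, ?_⟩
        · show vx ⟨j.val + _, _⟩ = a
          have h4 : (⟨j.val + ((0 : Fin (m - j.val + 1)) : ℕ), by omega⟩ : Fin (m+1)) = j := by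
            apply Fin.ext; simp
          rw [h4, hj]
        · show vx ⟨j.val + _, _⟩ = v
          have h4 : (⟨j.val + ((Fin.last (m - j.val)) : ℕ), by omega⟩ : Fin (m+1)) = Fin.last m := by
            apply Fin.ext; simp [Fin.last]; omega
          rw [h4, hlast]
        · intro i1 i2 hi
          apply Fin.ext
          have h2 := hinj hi
          have h3 : j.val + i1.val = j.val + i2.val := congrArg Fin.val h2
          omega
        · intro i
          show r (vx ⟨j.val + (i.castSucc : ℕ), by omega⟩) (vx ⟨j.val + (i.succ : ℕ), by omega⟩)
          convert hstep ⟨j.val + i.val, by omega⟩ using 2 <;>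
            (apply Fin.ext; simp only [Fin.coe_castSucc, Fin.val_succ]; try omega)
      · refine ⟨m + 1, Fin.cases (motive := fun _ => α) a vx, Fin.cases_zero .., ?_, ?_, ?_⟩
        · rw [← Fin.succ_last, Fin.cases_succ, hlast]
        · intro i1 i2 hi
          rcases Fin.eq_zero_or_eq_succ i1 with rfl | ⟨j1, rfl⟩ <;>
            rcases Fin.eq_zero_or_eq_succ i2 with rfl | ⟨j2, rfl⟩
          · rfl
          · rw [Fin.cases_zero, Fin.cases_succ] at hi
            exact absurd ⟨j2, hi.symm⟩ hu
          · rw [Fin.cases_succ, Fin.cases_zero] at hi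
            exact absurd ⟨j1, hi⟩ hu
          · rw [Fin.cases_succ, Fin.cases_succ] at hi
            rw [hinj hi]
        · intro i
          rcases Fin.eq_zero_or_eq_succ i with rfl | ⟨j, rfl⟩
          · rw [Fin.castSucc_zero, Fin.cases_zero, Fin.cases_succ, h0]
            exact hac
          · rw [← Fin.succ_castSucc, Fin.cases_succ, Fin.cases_succ]
            exact hstep j


/-- The relation "joined by an edge satisfying `L` (forward) or `R` (backward)". -/
def relOf (G : Multigraph) (L R : G.E → Prop) : G.V → G.V → Prop :=
  fun x y => ∃ f, (L f ∧ G.fst f = x ∧ G.snd f = y) ∨ (R f ∧ G.fst f = y ∧ G.snd f = x)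

/-- A vertex-simple path in `G` from `u` to `v`. -/
structure SPath (G : Multigraph) (u v : G.V) where
  m : ℕ
  sf : Fin m → G.E
  sd : Fin m → Bool
  vx : Fin (m+1) → G.V
  h0 : vx 0 = u
  hlast : vx (Fin.last m) = v
  htail : ∀ i, G.stepTail (sf i) (sd i) = vx i.castSucc
  hhead : ∀ i, G.stepHead (sf i) (sd i) = vx i.succ
  hinj : Function.Injective vx

lemma exists_spath {L R : G.E → Prop} {u v : G.V}
    (h : Relation.ReflTransGen (relOf G L R) u v) :
    ∃ p : SPath G u v, ∀ i, (p.sd i = true ∧ L (p.sf i)) ∨ (p.sd i = false ∧ R (p.sf i)) := by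
  obtain ⟨m, vx, h0, hlast, hinj, hstep⟩ := exists_fin_path _ h
  choose f hf using hstep
  classical
  refine ⟨⟨m, f, fun i => if L (f i) ∧ G.fst (f i) = vx i.castSucc ∧ G.snd (f i) = vx i.succ
      then true else false, vx, h0, hlast, ?_, ?_, hinj⟩, ?_⟩ <;> intro i <;>
    by_cases hc : L (f i) ∧ G.fst (f i) = vx i.castSucc ∧ G.snd (f i) = vx i.succ
  · simp only [if_pos hc, stepTail]; exact hc.2.1
  · have hr := (hf i).resolve_left (fun h' => hc ⟨h'.1, h'.2⟩)
    simp only [if_neg hc, stepTail]; exact hr.2.2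
  · simp only [if_pos hc, stepHead]; exact hc.2.2
  · have hr := (hf i).resolve_left (fun h' => hc ⟨h'.1, h'.2⟩)
    simp only [if_neg hc, stepHead]; exact hr.2.1
  · exact Or.inl ⟨by simp [if_pos hc], hc.1⟩
  · have hr := (hf i).resolve_left (fun h' => hc ⟨h'.1, h'.2⟩)
    exact Or.inr ⟨by simp [if_neg hc], hr.1⟩

variable {u v : G.V}

lemma SPath.sf_inj (p : SPath G u v) : Function.Injective p.sf := by
  intro i j hij
  have ti := p.htail i
  have hi := p.hhead i
  have tj := p.htail j
  have hj := p.hhead j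
  rw [hij] at ti hi
  unfold stepTail stepHead at *
  by_cases di : p.sd i = p.sd j
  · rw [di] at ti
    have : p.vx i.castSucc = p.vx j.castSucc := by rw [← ti, ← tj]
    have := p.hinj this
    exact Fin.ext (by have := congrArg Fin.val this; simpa using this)
  · have hd : p.sd i = !p.sd j := by
      cases hdi : p.sd i <;> cases hdj : p.sd j <;> simp_all
    rw [hd] at ti hi
    have e1 : p.vx i.castSucc = p.vx j.succ := by
      cases hdj : p.sd j <;> rw [hdj] at ti hj <;> simp at ti hj <;> rw [← ti, ← hj]
    have e2 : p.vx i.succ = p.vx j.castSucc := by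
      cases hdj : p.sd j <;> rw [hdj] at hi tj <;> simp at hi tj <;> rw [← hi, ← tj]
    have f1 := congrArg Fin.val (p.hinj e1)
    have f2 := congrArg Fin.val (p.hinj e2)
    simp [Fin.val_succ] at f1 f2
    omega

/-- The signed indicator 1-chain of a path. -/
def SPath.chain (p : SPath G u v) : G.E → ℤ :=
  fun f => ∑ i, if p.sf i = f then (if p.sd i then 1 else -1) else 0

lemma SPath.chain_apply (p : SPath G u v) {i : Fin p.m} {f : G.E} (h : p.sf i = f) :
    p.chain f = if p.sd i then 1 else -1 := by
  unfold chain
  rw [Finset.sum_eq_single i]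
  · rw [if_pos h]
  · intro j _ hji
    rw [if_neg]
    intro hj
    exact hji (p.sf_inj (hj.trans h.symm))
  · intro h'; exact absurd (Finset.mem_univ i) h'

lemma SPath.chain_eq_zero (p : SPath G u v) {f : G.E} (h : ∀ i, p.sf i ≠ f) :
    p.chain f = 0 := by
  unfold chain
  exact Finset.sum_eq_zero fun i _ => if_neg (h i)

lemma SPath.chain_cases (p : SPath G u v) (f : G.E) :
    p.chain f = 0 ∨ p.chain f = 1 ∨ p.chain f = -1 := by
  by_cases h : ∃ i, p.sf i = f
  · obtain ⟨i, hi⟩ := h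
    rw [p.chain_apply hi]
    cases p.sd i <;> simp
  · push_neg at h
    exact Or.inl (p.chain_eq_zero h)

/-- Reference-oriented incidence. -/
def incZ (G : Multigraph) (f : G.E) (x : G.V) : ℤ :=
  (if G.snd f = x then 1 else 0) - (if G.fst f = x then 1 else 0)

/-- Divergence of an integral 1-chain. -/
def divZ (G : Multigraph) (g : G.E → ℤ) (x : G.V) : ℤ := ∑ f, g f * G.incZ f x

lemma divZ_sub (g g' : G.E → ℤ) (x : G.V) :
    G.divZ (fun f => g f - g' f) x = G.divZ g x - G.divZ g' x := by
  unfold divZ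
  rw [← Finset.sum_sub_distrib]
  exact Finset.sum_congr rfl fun f _ => by ring

lemma divZ_add (g g' : G.E → ℤ) (x : G.V) :
    G.divZ (fun f => g f + g' f) x = G.divZ g x + G.divZ g' x := by
  unfold divZ
  rw [← Finset.sum_add_distrib]
  exact Finset.sum_congr rfl fun f _ => by ring

lemma SPath.divZ_chain (p : SPath G u v) (x : G.V) :
    G.divZ p.chain x = (if v = x then 1 else 0) - (if u = x then 1 else 0) := by
  unfold divZ SPath.chain
  have step1 : ∀ f : G.E, (∑ i, if p.sf i = f then (if p.sd i then (1:ℤ) else -1) else 0) * G.incZ f x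
      = ∑ i, if p.sf i = f then (if p.sd i then (1:ℤ) else -1) * G.incZ f x else 0 := by
    intro f
    rw [Finset.sum_mul]
    exact Finset.sum_congr rfl fun i _ => by split_ifs <;> ring
  rw [Finset.sum_congr rfl fun f _ => step1 f, Finset.sum_comm]
  have step2 : ∀ i : Fin p.m,
      (∑ f, if p.sf i = f then (if p.sd i then (1:ℤ) else -1) * G.incZ f x else 0)
      = (if p.vx i.succ = x then 1 else 0) - (if p.vx i.castSucc = x then 1 else 0) := by
    intro i
    rw [Finset.sum_ite_eq]
    rw [if_pos (Finset.mem_univ _)]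
    rw [← p.htail i, ← p.hhead i]
    unfold incZ stepTail stepHead
    cases p.sd i <;> simp <;> ring
  rw [Finset.sum_congr rfl fun i _ => step2 i]
  rw [telescope_fin p.m (fun j => if p.vx j = x then (1:ℤ) else 0), p.h0, p.hlast]

lemma flow_reach (g : G.E → ℤ) (c : ℤ) (hc : 0 < c) {u v : G.V}
    (hdiv : ∀ x, G.divZ g x = (if v = x then c else 0) - (if u = x then c else 0)) (hne : u ≠ v) :
    Relation.ReflTransGen (relOf G (fun f => 0 < g f) (fun f => g f < 0)) u v := by
  by_contra hv
  set r := relOf G (fun f => 0 < g f) (fun f => g f < 0) with hr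
  set B : Set G.V := {x | Relation.ReflTransGen r u x} with hB
  have huB : u ∈ B := Relation.ReflTransGen.refl
  have hclosed : ∀ x ∈ B, ∀ y, r x y → y ∈ B := fun x hx y hxy => hx.tail hxy
  have hsum : ∑ x, (if x ∈ B then G.divZ g x else 0)
      = ∑ f, g f * ((if G.snd f ∈ B then 1 else 0) - (if G.fst f ∈ B then 1 else 0)) := by
    unfold divZ
    have e1 : ∀ x : G.V, (if x ∈ B then ∑ f, g f * G.incZ f x else 0)
        = ∑ f, (if x ∈ B then g f * G.incZ f x else 0) := by
      intro x; split_ifs with h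
      · rfl
      · exact Finset.sum_const_zero.symm
    rw [Finset.sum_congr rfl fun x _ => e1 x, Finset.sum_comm]
    refine Finset.sum_congr rfl fun f _ => ?_
    have e2 : ∀ x : G.V, (if x ∈ B then g f * G.incZ f x else 0)
        = g f * ((if G.snd f = x then (if x ∈ B then (1:ℤ) else 0) else 0)
            - (if G.fst f = x then (if x ∈ B then (1:ℤ) else 0) else 0)) := by
      intro x; unfold incZ; split_ifs <;> ring
    rw [Finset.sum_congr rfl fun x _ => e2 x, ← Finset.mul_sum]
    congr 1
    rw [Finset.sum_sub_distrib, Finset.sum_ite_eq, Finset.sum_ite_eq,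
      if_pos (Finset.mem_univ _), if_pos (Finset.mem_univ _)]
  have hge : (0:ℤ) ≤ ∑ f, g f * ((if G.snd f ∈ B then 1 else 0) - (if G.fst f ∈ B then 1 else 0)) := by
    refine Finset.sum_nonneg fun f _ => ?_
    rcases lt_trichotomy (g f) 0 with h | h | h
    · have : G.snd f ∈ B → G.fst f ∈ B := by
        intro hs
        exact hclosed _ hs _ ⟨f, Or.inr ⟨h, rfl, rfl⟩⟩
      split_ifs with h1 h2 h2 <;> first | (exfalso; exact h2 (this h1)) | nlinarith
    · simp [h]
    · have : G.fst f ∈ B → G.snd f ∈ B := by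
        intro hs
        exact hclosed _ hs _ ⟨f, Or.inl ⟨h, rfl, rfl⟩⟩
      split_ifs with h1 h2 h2 <;> first | (exfalso; exact h1 (this h2)) | nlinarith
  have hvB : v ∉ B := hv
  have hlt : ∑ x, (if x ∈ B then G.divZ g x else 0) = -c := by
    rw [Finset.sum_congr rfl fun x _ => by rw [hdiv x]]
    have e3 : ∀ x : G.V, (if x ∈ B then (if v = x then c else 0) - (if u = x then c else 0) else 0)
        = (if v = x then (if x ∈ B then c else 0) else 0) - (if u = x then (if x ∈ B then c else 0) else 0) := by
      intro x; split_ifs <;> ring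
    rw [Finset.sum_congr rfl fun x _ => e3 x, Finset.sum_sub_distrib,
      Finset.sum_ite_eq, Finset.sum_ite_eq, if_pos (Finset.mem_univ _), if_pos (Finset.mem_univ _),
      if_neg hvB, if_pos huB]
    ring
  rw [hsum] at hlt
  omega



/-! ### Circuits (vertex-simple closed walks) -/

private lemma zmod_val_cast {n : ℕ} [NeZero n] (i : ZMod n) : ((i.val : ℕ) : ZMod n) = i :=
  ZMod.natCast_rightInverse i

/-- A vertex-simple closed walk of length `n+1` in `G`. -/
structure Circuit (G : Multigraph) where
  n : ℕ
  sf : ZMod (n+1) → G.E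
  sd : ZMod (n+1) → Bool
  tl : ZMod (n+1) → G.V
  hsf : Function.Injective sf
  htl : Function.Injective tl
  htail : ∀ i, G.stepTail (sf i) (sd i) = tl i
  hhead : ∀ i, G.stepHead (sf i) (sd i) = tl (i + 1)

def Circuit.S (C : Circuit G) : Set G.E := Set.range C.sf

lemma Circuit.fst_sf (C : Circuit G) (i : ZMod (C.n+1)) :
    G.fst (C.sf i) = if C.sd i then C.tl i else C.tl (i+1) := by
  have ht := C.htail i
  have hh := C.hhead i
  simp only [stepTail, stepHead] at ht hh
  cases h : C.sd i <;> rw [h] at ht hh <;> simp_all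

lemma Circuit.snd_sf (C : Circuit G) (i : ZMod (C.n+1)) :
    G.snd (C.sf i) = if C.sd i then C.tl (i+1) else C.tl i := by
  have ht := C.htail i
  have hh := C.hhead i
  simp only [stepTail, stepHead] at ht hh
  cases h : C.sd i <;> rw [h] at ht hh <;> simp_all

def Circuit.vert (C : Circuit G) (i : ZMod (C.n+1)) : (G.restrict C.S).V :=
  ⟨C.tl i, C.sf i, ⟨i, rfl⟩, by
    rw [C.fst_sf i, C.snd_sf i]
    cases h : C.sd i <;> simp⟩

lemma Circuit.vert_surj (C : Circuit G) (w : (G.restrict C.S).V) : ∃ i, C.vert i = w := by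
  obtain ⟨x, hx⟩ := w
  obtain ⟨f, hfS, hor⟩ := hx
  obtain ⟨i, rfl⟩ := hfS
  rcases hor with hx | hx
  · rw [C.fst_sf i] at hx
    cases h : C.sd i <;> rw [h] at hx <;> simp at hx
    · exact ⟨i+1, Subtype.ext hx⟩
    · exact ⟨i, Subtype.ext hx⟩
  · rw [C.snd_sf i] at hx
    cases h : C.sd i <;> rw [h] at hx <;> simp at hx
    · exact ⟨i, Subtype.ext hx⟩
    · exact ⟨i+1, Subtype.ext hx⟩

lemma Circuit.reach_del (C : Circuit G) (k : ZMod (C.n+1))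
    (F : Set (G.restrict C.S).E) (hF : ∀ g ∈ F, g.1 = C.sf k) :
    ∀ w₁ w₂ : (G.restrict C.S).V, ((G.restrict C.S).deleteEdges F).Reachable w₁ w₂ := by
  set H := (G.restrict C.S).deleteEdges F with hH
  have hAdj : ∀ i : ZMod (C.n+1), i ≠ k → H.Adj (C.vert i) (C.vert (i+1)) := by
    intro i hik
    refine ⟨⟨⟨C.sf i, ⟨i, rfl⟩⟩, fun hmem => hik (C.hsf (hF _ hmem))⟩, ?_⟩
    cases h : C.sd i
    · right
      refine ⟨Subtype.ext ?_, Subtype.ext ?_⟩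
      · show G.fst (C.sf i) = C.tl (i+1)
        rw [C.fst_sf i, h]; simp
      · show G.snd (C.sf i) = C.tl i
        rw [C.snd_sf i, h]; simp
    · left
      refine ⟨Subtype.ext ?_, Subtype.ext ?_⟩
      · show G.fst (C.sf i) = C.tl i
        rw [C.fst_sf i, h]; simp
      · show G.snd (C.sf i) = C.tl (i+1)
        rw [C.snd_sf i, h]; simp
  have hsymm : Symmetric H.Adj := by
    rintro a b ⟨g, hg | hg⟩
    · exact ⟨g, Or.inr hg⟩
    · exact ⟨g, Or.inl hg⟩
  have key : ∀ j : ℕ, j ≤ C.n →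
      H.Reachable (C.vert (k+1)) (C.vert (k+1+(j : ZMod (C.n+1)))) := by
    intro j
    induction j with
    | zero =>
        intro _
        simp only [Nat.cast_zero, add_zero]
        exact (Relation.ReflTransGen.refl :
          H.Reachable (C.vert (k+1)) (C.vert (k+1)))
    | succ j ih =>
        intro hj
        have hne : (k+1+(j : ZMod (C.n+1))) ≠ k := by
          intro hEq
          have h1 : k + ((1+j : ℕ) : ZMod (C.n+1)) = k + 0 := by
            push_cast
            rw [add_zero]
            linear_combination hEq
          have h2 : ((1+j : ℕ) : ZMod (C.n+1)) = 0 := by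
            exact add_left_cancel h1
          have h3 := (ZMod.natCast_eq_zero_iff (1+j) (C.n+1)).mp h2
          have := Nat.le_of_dvd (by omega) h3
          omega
        have hstep := hAdj _ hne
        have hcast : k+1+((j+1 : ℕ) : ZMod (C.n+1)) = (k+1+(j : ZMod (C.n+1)))+1 := by
          push_cast; ring
        rw [hcast]
        exact (ih (by omega)).tail hstep
  have hall : ∀ w, H.Reachable (C.vert (k+1)) w := by
    intro w
    obtain ⟨i, rfl⟩ := C.vert_surj w
    obtain ⟨j, hj, hji⟩ : ∃ j : ℕ, j ≤ C.n ∧ (k+1+(j:ZMod (C.n+1))) = i := by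
      refine ⟨(i - (k+1)).val, by have := ZMod.val_lt (i - (k+1)); omega, ?_⟩
      rw [zmod_val_cast]; ring
    rw [← hji]
    exact key j hj
  intro w₁ w₂
  haveI : Std.Symm H.Adj := ⟨fun a b h => hsymm h⟩
  exact ((Relation.ReflTransGen.symmetric (r := H.Adj)).symm _ _ (hall w₁)).trans (hall w₂)

lemma numComponents_eq_one (H : Multigraph) (hne : Nonempty H.V) (hp : H.Preconnected) :
    H.numComponents = 1 := by
  rw [numComponents, Nat.card_eq_one_iff_unique]
  refine ⟨⟨fun a b => ?_⟩, ⟨Quot.mk _ hne.some⟩⟩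
  induction a using Quot.ind with | _ a =>
  induction b using Quot.ind with | _ b =>
  have hr : H.Reachable a b := hp a b
  induction hr with
  | refl => rfl
  | tail h1 h2 ih => exact ih.trans (Quot.sound h2)

lemma reach_of_deleteEdges {H : Multigraph} (F : Set H.E) {x y : H.V}
    (h : (H.deleteEdges F).Reachable x y) : H.Reachable x y := by
  refine Relation.ReflTransGen.mono ?_ _ _ h
  rintro a b ⟨g, hg⟩
  exact ⟨g.1, hg⟩

lemma Circuit.isCycleSet (C : Circuit G) : G.IsCycleSet C.S := by
  have hpre : (G.restrict C.S).Preconnected := by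
    intro a b
    exact reach_of_deleteEdges ∅ (C.reach_del 0 ∅ (by simp) a b)
  have hne : Nonempty (G.restrict C.S).V := ⟨C.vert 0⟩
  refine ⟨⟨hne, hpre⟩, ?_, ?_⟩
  · rw [Set.eq_empty_iff_forall_notMem]
    intro f hf
    obtain ⟨k, hk⟩ : ∃ k, C.sf k = f.1 := f.2
    exact hf (C.reach_del k {f}
      (fun g hg => by rw [Set.mem_singleton_iff] at hg; rw [hg, ← hk]) _ _)
  · have hcomp : (G.restrict C.S).numComponents = 1 := numComponents_eq_one _ hne hpre
    have eE : Nat.card (G.restrict C.S).E = C.n + 1 := by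
      have he : Nat.card (ZMod (C.n+1)) = Nat.card ↥C.S := by
        refine Nat.card_congr (Equiv.ofBijective
          (fun i => (⟨C.sf i, ⟨i, rfl⟩⟩ : ↥C.S)) ⟨?_, ?_⟩)
        · intro i j hij
          exact C.hsf (congrArg Subtype.val hij)
        · rintro ⟨f, i, hi⟩
          exact ⟨i, Subtype.ext hi⟩
      show Nat.card ↥C.S = C.n + 1
      rw [← he, Nat.card_zmod]
    have eV : Nat.card (G.restrict C.S).V = C.n + 1 := by
      have he : Nat.card (ZMod (C.n+1)) = Nat.card (G.restrict C.S).V := by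
        refine Nat.card_congr (Equiv.ofBijective C.vert ⟨?_, ?_⟩)
        · intro i j hij
          exact C.htl (congrArg Subtype.val hij)
        · exact C.vert_surj
      rw [← he, Nat.card_zmod]
    rw [b1, hcomp, eE, eV]
    push_cast
    ring

/-! ### The homology class of a circuit -/

def Circuit.flowR (C : Circuit G) (o : G.E → Bool) : G.E → ℝ :=
  fun f => ∑ i, if C.sf i = f then (if C.sd i = o f then 1 else -1) else 0

lemma Circuit.flowR_apply (C : Circuit G) (o : G.E → Bool) {i : ZMod (C.n+1)} {f : G.E}
    (h : C.sf i = f) : C.flowR o f = if C.sd i = o f then 1 else -1 := by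
  unfold flowR
  rw [Finset.sum_eq_single i]
  · rw [if_pos h]
  · intro j _ hji
    rw [if_neg]
    intro hj
    exact hji (C.hsf (hj.trans h.symm))
  · intro h'; exact absurd (Finset.mem_univ i) h'

lemma Circuit.flowR_eq_zero (C : Circuit G) (o : G.E → Bool) {f : G.E} (h : f ∉ C.S) :
    C.flowR o f = 0 := by
  unfold flowR
  refine Finset.sum_eq_zero fun i _ => if_neg fun hi => h ⟨i, hi⟩

lemma Circuit.flowR_mem (C : Circuit G) (o : G.E → Bool) : C.flowR o ∈ G.cycleSpaceR o := by
  have hmain : ∀ x, ∑ f, C.flowR o f * G.incR o f x = 0 := by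
    intro x
    unfold flowR
    have step1 : ∀ f : G.E,
        (∑ i, if C.sf i = f then (if C.sd i = o f then (1:ℝ) else -1) else 0) * G.incR o f x
        = ∑ i, if C.sf i = f then (if C.sd i = o f then (1:ℝ) else -1) * G.incR o f x else 0 := by
      intro f
      rw [Finset.sum_mul]
      exact Finset.sum_congr rfl fun i _ => by split_ifs <;> ring
    rw [Finset.sum_congr rfl fun f _ => step1 f, Finset.sum_comm]
    have step2 : ∀ i : ZMod (C.n+1),
        (∑ f, if C.sf i = f then (if C.sd i = o f then (1:ℝ) else -1) * G.incR o f x else 0)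
        = (if C.tl (i+1) = x then 1 else 0) - (if C.tl i = x then 1 else 0) := by
      intro i
      rw [Finset.sum_ite_eq, if_pos (Finset.mem_univ _)]
      have ht := C.htail i
      have hh := C.hhead i
      simp only [stepTail, stepHead] at ht hh
      unfold incR inc tgt src
      cases hsd : C.sd i <;> rw [hsd] at ht hh <;> simp at ht hh <;>
        cases ho : o (C.sf i) <;> simp [ho, hsd, ht, hh, apply_ite (Int.cast : ℤ → ℝ)] <;>
        split_ifs <;> norm_num
    rw [Finset.sum_congr rfl fun i _ => step2 i, Finset.sum_sub_distrib]
    have : ∑ i : ZMod (C.n+1), (if C.tl (i+1) = x then (1:ℝ) else 0)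
        = ∑ i : ZMod (C.n+1), (if C.tl i = x then (1:ℝ) else 0) :=
      Fintype.sum_equiv (Equiv.addRight 1) _ _ (fun i => rfl)
    rw [this, sub_self]
  exact hmain

/-! ### Building circuits -/

private lemma zmod_add_one_val {n : ℕ} (i : ZMod (n+1)) :
    (i + 1).val = (i.val + 1) % (n+1) := by
  conv_lhs => rw [← zmod_val_cast i]
  rw [show ((i.val : ZMod (n+1)) + 1) = ((i.val + 1 : ℕ) : ZMod (n+1)) by push_cast; ring]
  rw [ZMod.val_natCast]

def loopCircuit (e : G.E) (he : G.fst e = G.snd e) : Circuit G where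
  n := 0
  sf := fun _ => e
  sd := fun _ => true
  tl := fun _ => G.fst e
  hsf := fun i j _ => by
    have h1 := ZMod.val_lt i; have h2 := ZMod.val_lt j
    exact ZMod.val_injective _ (by omega)
  htl := fun i j _ => by
    have h1 := ZMod.val_lt i; have h2 := ZMod.val_lt j
    exact ZMod.val_injective _ (by omega)
  htail := fun i => by simp [stepTail]
  hhead := fun i => by simp [stepHead, ← he]

lemma loopCircuit_S (e : G.E) (he : G.fst e = G.snd e) : (loopCircuit e he).S = {e} := by
  simp [loopCircuit, Circuit.S]

def SPath.toCircuit {u v : G.V} (p : SPath G u v) (e : G.E)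
    (hfst : G.fst e = u) (hsnd : G.snd e = v) (he : ∀ j, p.sf j ≠ e) : Circuit G where
  n := p.m
  sf := fun i => if h : i.val < p.m then p.sf ⟨i.val, h⟩ else e
  sd := fun i => if h : i.val < p.m then p.sd ⟨i.val, h⟩ else false
  tl := fun i => p.vx ⟨i.val, by have := ZMod.val_lt i; omega⟩
  hsf := by
    intro i j hij
    by_cases hi : i.val < p.m <;> by_cases hj : j.val < p.m <;>
      simp only [dif_pos, dif_neg, hi, hj, dite_true, dite_false] at hij
    · have h2 := congrArg Fin.val (p.sf_inj hij)
      exact ZMod.val_injective _ h2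
    · exact absurd hij (he _)
    · exact absurd hij.symm (he _)
    · have h1 := ZMod.val_lt i
      have h2 := ZMod.val_lt j
      exact ZMod.val_injective _ (by omega)
  htl := by
    intro i j hij
    have h2 := congrArg Fin.val (p.hinj hij)
    exact ZMod.val_injective _ h2
  htail := by
    intro i
    by_cases h : i.val < p.m
    · rw [dif_pos h, dif_pos h, p.htail ⟨i.val, h⟩]
      congr 1
    · rw [dif_neg h, dif_neg h]
      show G.stepTail e false = _
      have hiv : i.val = p.m := by have := ZMod.val_lt i; omega
      have : (⟨i.val, by omega⟩ : Fin (p.m+1)) = Fin.last p.m := Fin.ext (by simp [hiv, Fin.last])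
      rw [this, p.hlast]
      simpa [stepTail] using hsnd
  hhead := by
    intro i
    by_cases h : i.val < p.m
    · rw [dif_pos h, dif_pos h, p.hhead ⟨i.val, h⟩]
      congr 1
      apply Fin.ext
      simp only [Fin.val_succ]
      rw [zmod_add_one_val, Nat.mod_eq_of_lt (by omega)]
    · rw [dif_neg h, dif_neg h]
      show G.stepHead e false = _
      have hiv : i.val = p.m := by have := ZMod.val_lt i; omega
      have h0 : (i+1).val = 0 := by rw [zmod_add_one_val, hiv, Nat.mod_self]
      have : (⟨(i+1).val, by omega⟩ : Fin (p.m+1)) = 0 := Fin.ext (by simp [h0])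
      rw [this, p.h0]
      simpa [stepHead] using hfst

lemma SPath.toCircuit_S {u v : G.V} (p : SPath G u v) (e : G.E)
    (hfst : G.fst e = u) (hsnd : G.snd e = v) (he : ∀ j, p.sf j ≠ e) :
    (p.toCircuit e hfst hsnd he).S = insert e (Set.range p.sf) := by
  ext f
  simp only [Circuit.S, Set.mem_range, Set.mem_insert_iff, toCircuit]
  constructor
  · rintro ⟨i, rfl⟩
    by_cases h : i.val < p.m
    · right
      refine ⟨⟨i.val, h⟩, ?_⟩
      rw [dif_pos h]
    · left
      rw [dif_neg h]
  · rintro (rfl | ⟨j, rfl⟩)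
    · refine ⟨((p.m : ℕ) : ZMod (p.m+1)), ?_⟩
      have hv : ((p.m : ℕ) : ZMod (p.m+1)).val = p.m := by
        rw [ZMod.val_natCast]; exact Nat.mod_eq_of_lt (by omega)
      rw [dif_neg (by omega)]
    · have hv : ((j.val : ℕ) : ZMod (p.m+1)).val = j.val := by
        rw [ZMod.val_natCast]; exact Nat.mod_eq_of_lt (by omega)
      refine ⟨((j.val : ℕ) : ZMod (p.m+1)), ?_⟩
      rw [dif_pos (by omega : ((j.val : ℕ) : ZMod (p.m+1)).val < p.m)]
      congr 1
      exact Fin.ext (by simp [hv])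

/-! ### The main construction -/

private lemma rtg_cross {α : Type} (r : α → α → Prop) (A : Set α) {a b : α}
    (h : Relation.ReflTransGen r a b) (ha : a ∈ A) : b ∉ A → ∃ x ∈ A, ∃ y, y ∉ A ∧ r x y := by
  induction h with
  | refl => intro hb; exact absurd ha hb
  | tail h1 h2 ih =>
      intro hc
      rename_i x y
      by_cases hx : x ∈ A
      · exact ⟨x, hx, y, hc, h2⟩
      · exact ih hx

lemma main_two_circuits (G : Multigraph) (h : G.EdgeConnected3) (e : G.E) :
    ∃ C₁ C₂ : Circuit G, e ∈ C₁.S ∧ e ∈ C₂.S ∧ C₁.S ∩ C₂.S = {e} := by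
  by_cases hloop : G.fst e = G.snd e
  · refine ⟨loopCircuit e hloop, loopCircuit e hloop, ?_, ?_, ?_⟩ <;>
      rw [loopCircuit_S] <;> try rw [loopCircuit_S]
    · rfl
    · rfl
    · simp
  · set u := G.fst e with hu
    set v := G.snd e with hv
    have hne : u ≠ v := hloop
    have pre1 : (G.deleteEdges {e}).Preconnected := by
      refine h.2 {e} ?_
      rw [Nat.card_coe_set_eq, Set.ncard_singleton]; omega
    have pre2 : ∀ f : G.E, (G.deleteEdges {e, f}).Preconnected := by
      intro f
      refine h.2 {e, f} ?_
      rw [Nat.card_coe_set_eq]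
      have h1 := Set.ncard_insert_le e ({f} : Set G.E)
      rw [Set.ncard_singleton] at h1
      omega
    -- Step A : a simple path from u to v avoiding e
    have hrel : Relation.ReflTransGen (relOf G (fun f => f ≠ e) (fun f => f ≠ e)) u v := by
      refine Relation.ReflTransGen.mono ?_ _ _ (pre1 u v)
      rintro a b ⟨⟨f, hf⟩, hor⟩
      have hf' : f ≠ e := fun h' => hf (by simp [h'])
      rcases hor with ⟨h1, h2⟩ | ⟨h1, h2⟩
      · exact ⟨f, Or.inl ⟨hf', h1, h2⟩⟩
      · exact ⟨f, Or.inr ⟨hf', h1, h2⟩⟩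
    obtain ⟨P, hPprop⟩ := exists_spath hrel
    have hP : ∀ i, P.sf i ≠ e := fun i => by
      rcases hPprop i with ⟨_, h'⟩ | ⟨_, h'⟩ <;> exact h'
    -- Step B : residual reachability
    set Lres : G.E → Prop := fun f => f ≠ e ∧ ∀ j, P.sf j = f → P.sd j = false with hLres
    set Rres : G.E → Prop := fun f => f ≠ e ∧ ∀ j, P.sf j = f → P.sd j = true with hRres
    have hres : Relation.ReflTransGen (relOf G Lres Rres) u v := by
      by_contra hcon
      set A : Set G.V := {x | Relation.ReflTransGen (relOf G Lres Rres) u x} with hA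
      have huA : u ∈ A := Relation.ReflTransGen.refl
      have hvA : v ∉ A := hcon
      have hclosed : ∀ x ∈ A, ∀ y, relOf G Lres Rres x y → y ∈ A :=
        fun x hx y hxy => hx.tail hxy
      have hrev : ∀ i : Fin P.m, P.vx i.succ ∈ A → P.vx i.castSucc ∈ A := by
        intro i hi
        refine hclosed _ hi _ ?_
        have ht := P.htail i
        have hh := P.hhead i
        cases hd : P.sd i <;> rw [hd] at ht hh <;>
          simp only [stepTail, stepHead, if_true, if_false, Bool.false_eq_true] at ht hh
        · refine ⟨P.sf i, Or.inl ⟨⟨hP i, fun j hj => ?_⟩, hh, ht⟩⟩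
          rw [P.sf_inj hj, hd]
        · refine ⟨P.sf i, Or.inr ⟨⟨hP i, fun j hj => ?_⟩, ht, hh⟩⟩
          rw [P.sf_inj hj, hd]
      have hmono : ∀ (d l : ℕ) (hl : l + d ≤ P.m),
          P.vx ⟨l + d, by omega⟩ ∈ A → P.vx ⟨l, by omega⟩ ∈ A := by
        intro d
        induction d with
        | zero => intro l hl hx; exact hx
        | succ d ih =>
            intro l hl hx
            have hx' : P.vx ⟨(l+1) + d, by omega⟩ ∈ A := by
              have hEq : (⟨(l+1) + d, by omega⟩ : Fin (P.m+1)) = ⟨l + (d+1), by omega⟩ :=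
                Fin.ext (by simp; omega)
              rw [hEq]; exact hx
            have h1 := ih (l+1) (by omega) hx'
            have h2 := hrev ⟨l, by omega⟩
            have e1 : (⟨l, by omega⟩ : Fin P.m).succ = ⟨l+1, by omega⟩ := Fin.ext (by simp)
            have e2 : (⟨l, by omega⟩ : Fin P.m).castSucc = ⟨l, by omega⟩ := Fin.ext (by simp)
            rw [e1, e2] at h2
            exact h2 h1
      obtain ⟨i0, hi0c, hi0s⟩ : ∃ i : Fin P.m, P.vx i.castSucc ∈ A ∧ P.vx i.succ ∉ A := by
        by_contra hno
        push_neg at hno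
        have hall : ∀ l : ℕ, ∀ _hl : l ≤ P.m, P.vx ⟨l, by omega⟩ ∈ A := by
          intro l
          induction l with
          | zero =>
              intro _
              rw [show (⟨0, by omega⟩ : Fin (P.m+1)) = 0 from Fin.ext (by simp)]
              rw [P.h0]; exact huA
          | succ l ih =>
              intro hl
              have h1 := ih (by omega)
              have h2 := hno ⟨l, by omega⟩
              have e1 : (⟨l, by omega⟩ : Fin P.m).succ = ⟨l+1, by omega⟩ := Fin.ext (by simp)
              have e2 : (⟨l, by omega⟩ : Fin P.m).castSucc = ⟨l, by omega⟩ := Fin.ext (by simp)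
              rw [e1, e2] at h2
              exact h2 h1
        have hfin := hall P.m le_rfl
        rw [show (⟨P.m, by omega⟩ : Fin (P.m+1)) = Fin.last P.m from Fin.ext rfl] at hfin
        rw [P.hlast] at hfin
        exact hvA hfin
      set f0 := P.sf i0 with hf0
      obtain ⟨x, hx, y, hy, hxy⟩ := rtg_cross _ A ((pre2 f0) u v) huA hvA
      obtain ⟨⟨g, hg⟩, hor⟩ := hxy
      have hge : g ≠ e := fun h' => hg (by simp [h'])
      have hgf0 : g ≠ f0 := fun h' => hg (by simp [h'])
      have hor' : (G.fst g = x ∧ G.snd g = y) ∨ (G.fst g = y ∧ G.snd g = x) := hor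
      by_cases hgP : ∃ j, P.sf j = g
      · obtain ⟨j, hj⟩ := hgP
        have ht := P.htail j
        have hh := P.hhead j
        rw [hj] at ht hh
        have hcases : (P.vx j.castSucc = x ∧ P.vx j.succ = y) ∨
            (P.vx j.castSucc = y ∧ P.vx j.succ = x) := by
          rcases hor' with ⟨h1, h2⟩ | ⟨h1, h2⟩ <;> cases hd : P.sd j <;> rw [hd] at ht hh <;>
            simp only [stepTail, stepHead, if_true, if_false, Bool.false_eq_true] at ht hh
          · exact Or.inr ⟨ht.symm.trans h2, hh.symm.trans h1⟩
          · exact Or.inl ⟨ht.symm.trans h1, hh.symm.trans h2⟩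
          · exact Or.inl ⟨ht.symm.trans h2, hh.symm.trans h1⟩
          · exact Or.inr ⟨ht.symm.trans h1, hh.symm.trans h2⟩
        have hji0 : j ≠ i0 := fun h' => hgf0 (by rw [← hj, h'])
        rcases hcases with ⟨hc1, hc2⟩ | ⟨hc1, hc2⟩
        · -- crossing at j : contradiction by monotonicity
          rcases lt_or_gt_of_ne (fun h' => hji0 (Fin.ext h') : j.val ≠ i0.val) with hlt | hgt
          · -- j < i0 : vx (j+1) ∈ A from vx i0.castSucc ∈ A
            have h1 : P.vx ⟨(j.val+1) + (i0.val - (j.val+1)), by omega⟩ ∈ A := by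
              have hEq : (⟨(j.val+1) + (i0.val - (j.val+1)), by omega⟩ : Fin (P.m+1))
                  = i0.castSucc := Fin.ext (by simp; omega)
              rw [hEq]; exact hi0c
            have h2 := hmono (i0.val - (j.val+1)) (j.val+1) (by omega) h1
            rw [show (⟨j.val+1, by omega⟩ : Fin (P.m+1)) = j.succ from Fin.ext (by simp)] at h2
            rw [hc2] at h2
            exact hy h2
          · -- i0 < j : vx (i0+1) ∈ A from vx j.castSucc ∈ A
            have h1 : P.vx ⟨(i0.val+1) + (j.val - (i0.val+1)), by omega⟩ ∈ A := by
              have hEq : (⟨(i0.val+1) + (j.val - (i0.val+1)), by omega⟩ : Fin (P.m+1))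
                  = j.castSucc := Fin.ext (by simp; omega)
              rw [hEq, hc1]; exact hx
            have h2 := hmono (j.val - (i0.val+1)) (i0.val+1) (by omega) h1
            rw [show (⟨i0.val+1, by omega⟩ : Fin (P.m+1)) = i0.succ from Fin.ext (by simp)] at h2
            exact hi0s h2
        · -- reverse crossing : contradicts hrev
          have h2 := hrev j (by rw [hc2]; exact hx)
          rw [hc1] at h2
          exact hy h2
      · push_neg at hgP
        have hLg : Lres g := ⟨hge, fun j hj => absurd hj (hgP j)⟩
        have hRg : Rres g := ⟨hge, fun j hj => absurd hj (hgP j)⟩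
        rcases hor' with ⟨h1, h2⟩ | ⟨h1, h2⟩
        · exact hy (hclosed _ (h1 ▸ hx) _ ⟨g, Or.inl ⟨hLg, h1, h2⟩⟩)
        · exact hy (hclosed _ (h2 ▸ hx) _ ⟨g, Or.inr ⟨hRg, h1, h2⟩⟩)
    obtain ⟨Q, hQprop⟩ := exists_spath hres
    have hQe : ∀ i, Q.sf i ≠ e := fun i => by
      rcases hQprop i with ⟨_, h'⟩ | ⟨_, h'⟩ <;> exact h'.1
    -- Step C : the value-2 flow
    set g : G.E → ℤ := fun f => P.chain f + Q.chain f with hgdef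
    have hgdiv : ∀ x, G.divZ g x = (if v = x then 2 else 0) - (if u = x then 2 else 0) := by
      intro x
      rw [hgdef, divZ_add, P.divZ_chain, Q.divZ_chain]
      split_ifs <;> ring
    have hge0 : g e = 0 := by
      show P.chain e + Q.chain e = 0
      rw [P.chain_eq_zero hP, Q.chain_eq_zero hQe]
      norm_num
    have hopp : ∀ f, P.chain f ≠ 0 → Q.chain f ≠ 0 → P.chain f + Q.chain f = 0 := by
      intro f hp hq
      obtain ⟨i, hi⟩ : ∃ i, P.sf i = f := by
        by_contra hno; push_neg at hno; exact hp (P.chain_eq_zero hno)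
      obtain ⟨j, hj⟩ : ∃ j, Q.sf j = f := by
        by_contra hno; push_neg at hno; exact hq (Q.chain_eq_zero hno)
      rw [P.chain_apply hi, Q.chain_apply hj]
      rcases hQprop j with ⟨hd, hL⟩ | ⟨hd, hR⟩
      · have := hL.2 i (hi.trans hj.symm)
        rw [this, hd]; norm_num
      · have := hR.2 i (hi.trans hj.symm)
        rw [this, hd]; norm_num
    have hcancel : ∀ f, g f = 0 ∨ g f = 1 ∨ g f = -1 := by
      intro f
      show P.chain f + Q.chain f = 0 ∨ P.chain f + Q.chain f = 1 ∨ P.chain f + Q.chain f = -1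
      have hP3 := P.chain_cases f
      have hQ3 := Q.chain_cases f
      by_cases hp0 : P.chain f = 0
      · omega
      · by_cases hq0 : Q.chain f = 0
        · omega
        · have := hopp f hp0 hq0; omega
    -- Step D : two edge-disjoint simple paths
    have hr1 := flow_reach g 2 (by norm_num) hgdiv hne
    obtain ⟨Q₁, hQ₁⟩ := exists_spath hr1
    have hQ₁ne : ∀ i, g (Q₁.sf i) ≠ 0 := fun i => by
      rcases hQ₁ i with ⟨_, h'⟩ | ⟨_, h'⟩ <;> omega
    have hQ₁e : ∀ i, Q₁.sf i ≠ e := fun i h' => hQ₁ne i (by rw [h']; exact hge0)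
    have hQ₁chain : ∀ i, Q₁.chain (Q₁.sf i) = g (Q₁.sf i) := by
      intro i
      rw [Q₁.chain_apply rfl]
      rcases hQ₁ i with ⟨hd, h'⟩ | ⟨hd, h'⟩ <;> rw [hd] <;>
        rcases hcancel (Q₁.sf i) with hc | hc | hc <;> simp <;> omega
    set g2 : G.E → ℤ := fun f => g f - Q₁.chain f with hg2def
    have hg2div : ∀ x, G.divZ g2 x = (if v = x then 1 else 0) - (if u = x then 1 else 0) := by
      intro x
      rw [hg2def, divZ_sub, hgdiv, Q₁.divZ_chain]
      split_ifs <;> ring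
    have hr2 := flow_reach g2 1 one_pos hg2div hne
    obtain ⟨Q₂, hQ₂⟩ := exists_spath hr2
    have hQ₂ne : ∀ i, g2 (Q₂.sf i) ≠ 0 := fun i => by
      rcases hQ₂ i with ⟨_, h'⟩ | ⟨_, h'⟩ <;> omega
    have hQ₂e : ∀ i, Q₂.sf i ≠ e := fun i h' => by
      refine hQ₂ne i ?_
      rw [h']
      show g e - Q₁.chain e = 0
      rw [hge0, Q₁.chain_eq_zero hQ₁e]
      norm_num
    have hdisj : ∀ i j, Q₁.sf i ≠ Q₂.sf j := by
      intro i j h'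
      have h1 : g2 (Q₁.sf i) = 0 := by
        show g (Q₁.sf i) - Q₁.chain (Q₁.sf i) = 0
        rw [hQ₁chain i]; ring
      exact hQ₂ne j (by rw [← h']; exact h1)
    -- Step E : assemble the two circuits
    refine ⟨Q₁.toCircuit e rfl rfl hQ₁e, Q₂.toCircuit e rfl rfl hQ₂e, ?_, ?_, ?_⟩
    · rw [Q₁.toCircuit_S]; exact Set.mem_insert _ _
    · rw [Q₂.toCircuit_S]; exact Set.mem_insert _ _
    · rw [Q₁.toCircuit_S, Q₂.toCircuit_S]
      ext f
      constructor
      · rintro ⟨h1, h2⟩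
        rcases h1 with rfl | ⟨i, rfl⟩
        · rfl
        · rcases h2 with h2 | ⟨j, hj⟩
          · exact absurd h2 (hQ₁e i)
          · exact absurd hj.symm (hdisj i j)
      · rintro rfl
        exact ⟨Set.mem_insert _ _, Set.mem_insert _ _⟩

end Multigraph

/-- In a 3-edge connected graph, every edge is the exact
intersection of two cycles; consequently for any edge-length function `l` there are
homology classes `c₁, c₂` with `(c₁,c₂)_l = ±l(e)`. -/
theorem exists_two_cycles_inter_singleton (G : Multigraph) (h : G.EdgeConnected3)
    (e : G.E) :
    (∃ S₁ S₂ : Set G.E, G.IsCycleSet S₁ ∧ G.IsCycleSet S₂ ∧ S₁ ∩ S₂ = {e}) ∧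
    (∀ (o : G.E → Bool) (l : G.E → ℝ),
      ∃ c₁ ∈ G.cycleSpaceR o, ∃ c₂ ∈ G.cycleSpaceR o,
        ((∑ f : G.E, c₁ f * c₂ f * l f) = l e ∨
         (∑ f : G.E, c₁ f * c₂ f * l f) = -(l e))) := by
  obtain ⟨C₁, C₂, he₁, he₂, hinter⟩ := Multigraph.main_two_circuits G h e
  constructor
  · exact ⟨C₁.S, C₂.S, C₁.isCycleSet, C₂.isCycleSet, hinter⟩
  · intro o l
    refine ⟨C₁.flowR o, C₁.flowR_mem o, C₂.flowR o, C₂.flowR_mem o, ?_⟩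
    obtain ⟨i₁, hi₁⟩ := he₁
    obtain ⟨i₂, hi₂⟩ := he₂
    have h1 := C₁.flowR_apply o hi₁
    have h2 := C₂.flowR_apply o hi₂
    have hsum : (∑ f : G.E, C₁.flowR o f * C₂.flowR o f * l f)
        = C₁.flowR o e * C₂.flowR o e * l e := by
      rw [Finset.sum_eq_single e]
      · intro f _ hfe
        have hnotin : f ∉ C₁.S ∩ C₂.S := by rw [hinter]; simpa using hfe
        by_cases hf1 : f ∈ C₁.S
        · have hf2 : f ∉ C₂.S := fun hf2 => hnotin ⟨hf1, hf2⟩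
          rw [C₂.flowR_eq_zero o hf2]; ring
        · rw [C₁.flowR_eq_zero o hf1]; ring
      · intro h'; exact absurd (Finset.mem_univ e) h'
    rw [hsum]
    split_ifs at h1 h2 <;> rw [h1, h2] <;> [left; right; right; left] <;> ring
end
end
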